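/- arXiv:1404.7020 — 13 statements merged into one kernel-verified Lean document; each statement's English description precedes it below -/
import Mathlib

section
/- Let R be a Tate ring. Then completion commutes with taking power-bounded elements: the closure of the image of R° in the completion R̂ equals (R̂)°, the ring of power-bounded elements of R̂. -/
/-!
Since `R₀` is open, the closure `R̂₀` of its image is an open subring of `R̂`. By the binomial
theorem, the set of elements power-bounded with respect to `(R̂₀, ϖ)` is stable under translation
by `R̂₀`, so it is a union of cosets of an open subgroup and therefore clopen. Its preimage in `R`
is `R°`, because `R₀` is closed, and a clopen set is the closure of its trace on a dense subset.
-/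

open Pointwise

namespace Subring

variable {A : Type*} [CommRing A]

def powerBounded (C : Subring A) (ϖ : A) : Set A :=
  {a | ∃ N : ℕ, ∀ m : ℕ, ϖ ^ N * a ^ m ∈ C}

theorem add_mem_powerBounded {C : Subring A} {ϖ a b : A} (ha : a ∈ C.powerBounded ϖ)
    (hb : b ∈ C) : a + b ∈ C.powerBounded ϖ := by
  obtain ⟨N, hN⟩ := ha
  refine ⟨N, fun m => ?_⟩
  rw [add_pow, Finset.mul_sum]
  refine sum_mem fun k _ => ?_
  rw [← mul_assoc, ← mul_assoc]
  exact C.mul_mem (C.mul_mem (hN k) (C.pow_mem hb _)) (natCast_mem C _)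

theorem preimage_powerBounded {B : Type*} [CommRing B] (f : A →+* B) (D : Subring B) (ϖ : A) :
    f ⁻¹' D.powerBounded (f ϖ) = (D.comap f).powerBounded ϖ := by
  ext a
  simp [powerBounded]

end Subring

section

variable {G : Type*} [AddGroup G] [TopologicalSpace G] [ContinuousAdd G]

theorem isOpen_of_forall_add_mem {U : AddSubgroup G} (hU : IsOpen (U : Set G)) {T : Set G}
    (hT : ∀ t ∈ T, ∀ u ∈ U, t + u ∈ T) : IsOpen T := by
  have : T + U = T :=
    subset_antisymm (Set.add_subset_iff.2 hT) fun t ht => ⟨t, ht, 0, U.zero_mem, add_zero t⟩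
  exact this ▸ hU.add_left

theorem isClopen_of_forall_add_mem {U : AddSubgroup G} (hU : IsOpen (U : Set G)) {T : Set G}
    (hT : ∀ t ∈ T, ∀ u ∈ U, t + u ∈ T) : IsClopen T := by
  refine ⟨isOpen_compl_iff.1 <| isOpen_of_forall_add_mem hU fun s hs u hu hsu => hs ?_,
    isOpen_of_forall_add_mem hU hT⟩
  simpa using hT _ hsu _ (U.neg_mem hu)

end

theorem Subring.isClopen_powerBounded {A : Type*} [CommRing A] [TopologicalSpace A]
    [ContinuousAdd A] {C : Subring A} (hC : IsOpen (C : Set A)) (ϖ : A) :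
    IsClopen (C.powerBounded ϖ) :=
  isClopen_of_forall_add_mem (U := C.toAddSubgroup) hC fun _ ha _ hb =>
    add_mem_powerBounded ha hb

theorem DenseRange.closure_image_preimage_of_isClopen {X Y : Type*} [TopologicalSpace X]
    [TopologicalSpace Y] {f : X → Y} (hf : DenseRange f) {s : Set Y} (hs : IsClopen s) :
    closure (f '' (f ⁻¹' s)) = s :=
  subset_antisymm (closure_minimal (Set.image_preimage_subset f s) hs.isClosed)
    (hf.subset_closure_image_preimage_of_isOpen hs.isOpen)

namespace IsDenseInducing

variable {A B : Type*} [CommRing A] [TopologicalSpace A] [CommRing B] [TopologicalSpace B]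
  [IsTopologicalRing B] {f : A →+* B} {R₀ : Subring A}

theorem isOpen_topologicalClosure_map (hf : IsDenseInducing f) (hR₀ : IsOpen (R₀ : Set A)) :
    IsOpen ((R₀.map f).topologicalClosure : Set B) := by
  refine AddSubgroup.isOpen_of_mem_nhds (g := 0) (R₀.map f).topologicalClosure.toAddSubgroup ?_
  have h := hf.closure_image_mem_nhds (hR₀.mem_nhds R₀.zero_mem)
  rwa [map_zero] at h

theorem comap_topologicalClosure_map [ContinuousAdd A] (hf : IsDenseInducing f)
    (hR₀ : IsOpen (R₀ : Set A)) : (R₀.map f).topologicalClosure.comap f = R₀ := by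
  ext a
  change a ∈ f ⁻¹' closure (f '' R₀) ↔ a ∈ R₀
  have hclosed : IsClosed (R₀ : Set A) := AddSubgroup.isClosed_of_isOpen R₀.toAddSubgroup hR₀
  rw [← hf.isInducing.closure_eq_preimage_closure_image, hclosed.closure_eq, SetLike.mem_coe]

theorem closure_image_powerBounded [ContinuousAdd A] (hf : IsDenseInducing f)
    (hR₀ : IsOpen (R₀ : Set A)) (ϖ : A) :
    closure (f '' R₀.powerBounded ϖ) = (R₀.map f).topologicalClosure.powerBounded (f ϖ) := by
  have hpre := Subring.preimage_powerBounded f (R₀.map f).topologicalClosure ϖ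
  rw [hf.comap_topologicalClosure_map hR₀] at hpre
  rw [← hpre]
  exact hf.dense.closure_image_preimage_of_isClopen
    (Subring.isClopen_powerBounded (hf.isOpen_topologicalClosure_map hR₀) _)

end IsDenseInducing

theorem closure_image_powerBounded_eq_general
    (R : Type*) [CommRing R] [UniformSpace R] [IsUniformAddGroup R] [IsTopologicalRing R]
    (R₀ : Subring R) (ϖ : Rˣ)
    (hbasis : (nhds (0 : R)).HasBasis (fun _ : ℕ => True)
      (fun n => (ϖ : R) ^ n • (R₀ : Set R))) :
    closure ((fun r : R => (r : UniformSpace.Completion R)) ''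
        {r : R | ∃ N : ℕ, ∀ m : ℕ, (ϖ : R) ^ N * r ^ m ∈ R₀})
      = {x : UniformSpace.Completion R | ∃ N : ℕ, ∀ m : ℕ,
          ((ϖ : R) : UniformSpace.Completion R) ^ N * x ^ m ∈
            closure ((fun r : R => (r : UniformSpace.Completion R)) '' (R₀ : Set R))} := by
  have hR₀ : IsOpen (R₀ : Set R) := AddSubgroup.isOpen_of_mem_nhds R₀.toAddSubgroup
    (by simpa using hbasis.mem_of_mem (i := 0) trivial)
  exact UniformSpace.Completion.isDenseInducing_coe.closure_image_powerBounded
    (f := UniformSpace.Completion.coeRingHom) hR₀ ϖ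

/-- Completion commutes with taking power-bounded elements: the closure of
the image of `R°` in the completion `R̂` equals `(R̂)°`, where power-boundedness in `R̂`
is taken with respect to the ring of definition `R̂₀` (the closure of the image of `R₀`)
and the topologically nilpotent unit `ϖ`. -/
theorem closure_image_powerBounded_eq
    (R : Type*) [CommRing R] [UniformSpace R] [IsUniformAddGroup R] [IsTopologicalRing R]
    (R₀ : Subring R) (ϖ : Rˣ) (hϖ : (ϖ : R) ∈ R₀)
    (hbasis : (nhds (0 : R)).HasBasis (fun _ : ℕ => True)
      (fun n => (ϖ : R) ^ n • (R₀ : Set R)))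
    (hloc : ∀ r : R, ∃ n : ℕ, (ϖ : R) ^ n * r ∈ R₀) :
    closure ((fun r : R => (r : UniformSpace.Completion R)) ''
        {r : R | ∃ N : ℕ, ∀ m : ℕ, (ϖ : R) ^ N * r ^ m ∈ R₀})
      = {x : UniformSpace.Completion R | ∃ N : ℕ, ∀ m : ℕ,
          ((ϖ : R) : UniformSpace.Completion R) ^ N * x ^ m ∈
            closure ((fun r : R => (r : UniformSpace.Completion R)) '' (R₀ : Set R))} :=
  closure_image_powerBounded_eq_general R R₀ ϖ hbasis
end

section
/- Let R be a Tate ring with ring of definition R₀ and pseudo-uniformizer ϖ. Let t₁,…,tₙ ∈ R generate the unit ideal of R. For each i let φᵢ : R → R[1/tᵢ] be the localization map. Then every r ∈ R such that for all i, φᵢ(r) lies in the subring φᵢ(R₀)[t₁/tᵢ,…,tₙ/tᵢ] of R[1/tᵢ], is power-bounded in R. -/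
/-!
Let `M d` be the `R₀`-span of the monomials of degree `d` in the `tᵢ`. Clearing denominators in
`R[1/tᵢ]`, the hypothesis says `tᵢ ^ D * r ∈ M D` for some `D`. By pigeonhole, a monomial of
degree `K > n * D` contains some `tᵢ` more than `D` times, so `r * M K ⊆ M K`. Since the `tᵢ`
generate the unit ideal, `1` is an `R`-combination of degree-`K` monomials, whence
`ϖ ^ N₀ ∈ M K`; and `M K` is finitely generated, so `ϖ ^ N₁ * M K ⊆ R₀`. Together,
`ϖ ^ (N₁ + N₀) * r ^ m ∈ R₀` for all `m`.
-/

open Finset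

section MonomialSpan

variable (A : Type*) {R ι : Type*} [CommRing A] [CommRing R] [Algebra A R] (t : ι → R)

def monomialSpan (d : ℕ) : Submodule A R :=
  Submodule.span A (Set.range fun f : Fin d → ι => ∏ k, t (f k))

variable {A t}

theorem prod_mem_monomialSpan {d : ℕ} (f : Fin d → ι) : ∏ k, t (f k) ∈ monomialSpan A t d :=
  Submodule.subset_span ⟨f, rfl⟩

theorem pow_mem_monomialSpan (i : ι) (d : ℕ) : t i ^ d ∈ monomialSpan A t d := by
  simpa using prod_mem_monomialSpan (A := A) (t := t) fun _ : Fin d => i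

theorem one_mem_monomialSpan_zero : (1 : R) ∈ monomialSpan A t 0 := by
  simpa using prod_mem_monomialSpan (A := A) (t := t) finZeroElim

theorem algebraMap_mem_monomialSpan_zero (a : A) : algebraMap A R a ∈ monomialSpan A t 0 := by
  simpa [Algebra.algebraMap_eq_smul_one] using
    Submodule.smul_mem _ a (one_mem_monomialSpan_zero (A := A) (t := t))

theorem monomialSpan_mul_le (d e : ℕ) :
    monomialSpan A t d * monomialSpan A t e ≤ monomialSpan A t (d + e) := by
  rw [monomialSpan, monomialSpan, Submodule.span_mul_span, Submodule.span_le]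
  rintro _ ⟨_, ⟨f, rfl⟩, _, ⟨g, rfl⟩, rfl⟩
  simpa [Fin.prod_univ_add] using prod_mem_monomialSpan (A := A) (t := t) (Fin.append f g)

theorem mul_mem_monomialSpan {d e : ℕ} {x y : R} (hx : x ∈ monomialSpan A t d)
    (hy : y ∈ monomialSpan A t e) : x * y ∈ monomialSpan A t (d + e) :=
  monomialSpan_mul_le d e (Submodule.mul_mem_mul hx hy)

theorem prod_finset_mem_monomialSpan {κ : Type*} (s : Finset κ) (f : κ → ι) :
    ∏ k ∈ s, t (f k) ∈ monomialSpan A t #s := by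
  classical
  induction s using Finset.induction with
  | empty => simpa using one_mem_monomialSpan_zero
  | insert a s ha ih =>
    rw [prod_insert ha, card_insert_of_notMem ha, add_comm]
    exact mul_mem_monomialSpan (by simpa using pow_mem_monomialSpan (f a) 1) ih

theorem pow_mul_mem_monomialSpan_of_le {i : ι} {r : R} {D c : ℕ}
    (hr : t i ^ D * r ∈ monomialSpan A t D) (hDc : D ≤ c) :
    t i ^ c * r ∈ monomialSpan A t c := by
  have := mul_mem_monomialSpan (pow_mem_monomialSpan i (c - D)) hr
  rwa [← mul_assoc, pow_sub_mul_pow _ hDc, Nat.sub_add_cancel hDc] at this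

section Pigeonhole

variable [Fintype ι] {r : R} {D : ι → ℕ} {E K : ℕ}
  (hD : ∀ i, t i ^ D i * r ∈ monomialSpan A t (D i)) (hDE : ∀ i, D i ≤ E)
  (hK : Fintype.card ι * E < K)
include hD hDE hK

theorem mul_prod_mem_monomialSpan (f : Fin K → ι) :
    r * ∏ k, t (f k) ∈ monomialSpan A t K := by
  classical
  obtain ⟨i, hi⟩ := Fintype.exists_lt_card_fiber_of_mul_lt_card f (by simpa using hK)
  set s : Finset (Fin K) := {k | f k = i}
  have hs : ∏ k ∈ s, t (f k) = t i ^ #s := prod_eq_pow_card fun k hk => by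
    rw [(mem_filter.mp hk).2]
  have hfiber : t i ^ #s * r ∈ monomialSpan A t #s :=
    pow_mul_mem_monomialSpan_of_le (hD i) ((hDE i).trans hi.le)
  have hcard : #s + #sᶜ = K := by simp [card_add_card_compl]
  have := mul_mem_monomialSpan hfiber (prod_finset_mem_monomialSpan sᶜ f)
  rwa [hcard, mul_comm _ r, mul_assoc, ← hs, prod_mul_prod_compl] at this

theorem mul_mem_monomialSpan_of_mem {x : R} (hx : x ∈ monomialSpan A t K) :
    r * x ∈ monomialSpan A t K := by
  induction hx using Submodule.span_induction with
  | mem _ hg => obtain ⟨f, rfl⟩ := hg; exact mul_prod_mem_monomialSpan hD hDE hK f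
  | zero => simp
  | add x y _ _ hx hy => rw [mul_add]; exact add_mem hx hy
  | smul a x _ hx => rw [mul_smul_comm]; exact Submodule.smul_mem _ a hx

theorem pow_mul_mem_monomialSpan_of_mem {x : R} (hx : x ∈ monomialSpan A t K) (m : ℕ) :
    r ^ m * x ∈ monomialSpan A t K := by
  induction m with
  | zero => simpa using hx
  | succ m ih => rw [pow_succ', mul_assoc]; exact mul_mem_monomialSpan_of_mem hD hDE hK ih

end Pigeonhole

theorem monomialSpan_eq_top (hspan : Ideal.span (Set.range t) = ⊤) :
    ∀ K, monomialSpan R t K = ⊤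
  | 0 => (Ideal.eq_top_iff_one _).2 one_mem_monomialSpan_zero
  | K + 1 => by
    have h1 : monomialSpan R t 1 = ⊤ := by
      refine top_unique (hspan ▸ Ideal.span_le.2 ?_)
      rintro _ ⟨j, rfl⟩
      simpa using pow_mem_monomialSpan (A := R) (t := t) j 1
    refine top_unique ?_
    calc ⊤ = monomialSpan R t K * monomialSpan R t 1 := by
          rw [monomialSpan_eq_top hspan K, h1, Ideal.top_mul]
      _ ≤ monomialSpan R t (K + 1) := monomialSpan_mul_le K 1

end MonomialSpan

section Localization

variable {R ι : Type*} [CommRing R] {R₀ : Subring R} {t : ι → R}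

theorem exists_mul_pow_eq_algebraMap_of_mem_closure {S : Type*} [CommRing S] [Algebra R S]
    {i : ι} {u : S} (hu : algebraMap R S (t i) * u = 1) {z : S}
    (hz : z ∈ Subring.closure
      (algebraMap R S '' (R₀ : Set R) ∪ Set.range fun j => algebraMap R S (t j) * u)) :
    ∃ D, ∃ m ∈ monomialSpan R₀ t D, z * algebraMap R S (t i) ^ D = algebraMap R S m := by
  induction hz using Subring.closure_induction with
  | mem z hz =>
    rcases hz with ⟨a, ha, rfl⟩ | ⟨j, rfl⟩
    · exact ⟨0, a, algebraMap_mem_monomialSpan_zero (A := R₀) ⟨a, ha⟩, by simp⟩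
    · refine ⟨1, t j, by simpa using pow_mem_monomialSpan j 1, ?_⟩
      rw [pow_one, mul_assoc, mul_comm u, hu, mul_one]
  | zero => exact ⟨0, 0, zero_mem _, by simp⟩
  | one => exact ⟨0, 1, one_mem_monomialSpan_zero, by simp⟩
  | add x y _ _ hx hy =>
    obtain ⟨D₁, m₁, hm₁, he₁⟩ := hx
    obtain ⟨D₂, m₂, hm₂, he₂⟩ := hy
    refine ⟨D₂ + D₁, t i ^ D₂ * m₁ + t i ^ D₁ * m₂, add_mem ?_ ?_, ?_⟩
    · exact mul_mem_monomialSpan (pow_mem_monomialSpan i D₂) hm₁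
    · rw [add_comm]; exact mul_mem_monomialSpan (pow_mem_monomialSpan i D₁) hm₂
    · simp only [map_add, map_mul, map_pow, ← he₁, ← he₂]
      ring
  | neg x _ hx =>
    obtain ⟨D, m, hm, he⟩ := hx
    exact ⟨D, -m, neg_mem hm, by rw [map_neg, ← he, neg_mul]⟩
  | mul x y _ _ hx hy =>
    obtain ⟨D₁, m₁, hm₁, he₁⟩ := hx
    obtain ⟨D₂, m₂, hm₂, he₂⟩ := hy
    refine ⟨D₁ + D₂, m₁ * m₂, mul_mem_monomialSpan hm₁ hm₂, ?_⟩
    rw [map_mul, ← he₁, ← he₂]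
    ring

theorem exists_pow_mul_mem_monomialSpan {S : Type*} [CommRing S] [Algebra R S] {i : ι}
    [IsLocalization.Away (t i) S] {x : R}
    (hx : algebraMap R S x ∈ Subring.closure
      (algebraMap R S '' (R₀ : Set R) ∪
        Set.range fun j => algebraMap R S (t j) * IsLocalization.Away.invSelf (S := S) (t i))) :
    ∃ D, t i ^ D * x ∈ monomialSpan R₀ t D := by
  obtain ⟨D, m, hm, he⟩ :=
    exists_mul_pow_eq_algebraMap_of_mem_closure (IsLocalization.Away.mul_invSelf (t i)) hx
  have hzero : algebraMap R S (t i ^ D * x - m) = 0 := by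
    rw [map_sub, map_mul, map_pow, ← he, mul_comm, sub_self]
  obtain ⟨⟨_, e, rfl⟩, he⟩ :=
    (IsLocalization.map_eq_zero_iff (Submonoid.powers (t i)) S _).1 hzero
  refine ⟨e + D, ?_⟩
  have heq : t i ^ (e + D) * x = t i ^ e * m := by
    rw [pow_add]; linear_combination he
  rw [heq]
  exact mul_mem_monomialSpan (pow_mem_monomialSpan i e) hm

end Localization

section Bounded

variable {R : Type*} [CommRing R] {R₀ : Subring R} {ϖ : R}
  (hϖ : ϖ ∈ R₀) (hloc : ∀ r : R, ∃ n : ℕ, ϖ ^ n * r ∈ R₀)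
include hϖ hloc

theorem exists_pow_mul_mem_span_of_mem_span {s : Set R} {x : R}
    (hx : x ∈ Submodule.span R s) : ∃ N, ϖ ^ N * x ∈ Submodule.span R₀ s := by
  have raise : ∀ {N M : ℕ} {y : R}, N ≤ M → ϖ ^ N * y ∈ Submodule.span R₀ s →
      ϖ ^ M * y ∈ Submodule.span R₀ s := fun {N M y} hNM hy => by
    rw [← pow_sub_mul_pow ϖ hNM, mul_assoc]
    exact Submodule.smul_mem _ ⟨_, pow_mem hϖ (M - N)⟩ hy
  induction hx using Submodule.span_induction with
  | mem y hy => exact ⟨0, by simpa using Submodule.subset_span hy⟩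
  | zero => exact ⟨0, by simp⟩
  | add x y _ _ hx hy =>
    obtain ⟨N₁, h₁⟩ := hx
    obtain ⟨N₂, h₂⟩ := hy
    refine ⟨N₁ + N₂, ?_⟩
    rw [mul_add]
    exact add_mem (raise (by omega) h₁) (raise (by omega) h₂)
  | smul c x _ hx =>
    obtain ⟨N, h⟩ := hx
    obtain ⟨Nc, hNc⟩ := hloc c
    refine ⟨Nc + N, ?_⟩
    have := Submodule.smul_mem _ ⟨_, hNc⟩ h
    rwa [Subring.smul_def, smul_eq_mul, mul_mul_mul_comm, ← pow_add] at this

theorem exists_pow_mul_mem_of_mem_span {s : Set R} (hs : s.Finite) :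
    ∃ N, ∀ x ∈ Submodule.span R₀ s, ϖ ^ N * x ∈ R₀ := by
  choose N hN using hloc
  obtain ⟨N₀, hN₀⟩ := (hs.image N).bddAbove
  refine ⟨N₀, fun x hx => ?_⟩
  induction hx using Submodule.span_induction with
  | mem y hy =>
    have hle : N y ≤ N₀ := hN₀ ⟨y, hy, rfl⟩
    rw [← pow_sub_mul_pow ϖ hle, mul_assoc]
    exact mul_mem (pow_mem hϖ _) (hN y)
  | zero => simp
  | add x y _ _ hx hy => rw [mul_add]; exact add_mem hx hy
  | smul a x _ hx =>
    rw [Subring.smul_def, smul_eq_mul, mul_left_comm]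
    exact mul_mem a.2 hx

end Bounded

/-- Let `R` be a Tate ring with ring of definition `R₀` and pseudo-uniformizer
`ϖ`, and let `t₁, …, tₙ` generate the unit ideal of `R`. If `r ∈ R` is such that for each
`i`, the image `φᵢ(r)` lies in the subring `φᵢ(R₀)[t₁/tᵢ, …, tₙ/tᵢ]` of `R[1/tᵢ]`, then
`r` is power-bounded in `R`. -/
theorem locally_integral_implies_powerBounded
    (R : Type*) [CommRing R] (R₀ : Subring R) (ϖ : Rˣ) (hϖ : (ϖ : R) ∈ R₀)
    (hloc : ∀ r : R, ∃ n : ℕ, (ϖ : R) ^ n * r ∈ R₀)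
    (n : ℕ) (t : Fin n → R) (hspan : Ideal.span (Set.range t) = ⊤)
    (r : R)
    (hr : ∀ i : Fin n,
      algebraMap R (Localization.Away (t i)) r ∈
        Subring.closure
          ((algebraMap R (Localization.Away (t i))) '' (R₀ : Set R) ∪
            Set.range (fun j : Fin n =>
              algebraMap R (Localization.Away (t i)) (t j) *
                IsLocalization.Away.invSelf (S := Localization.Away (t i)) (t i)))) :
    ∃ N : ℕ, ∀ m : ℕ, (ϖ : R) ^ N * r ^ m ∈ R₀ := by
  choose D hD using fun i => exists_pow_mul_mem_monomialSpan (hr i)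
  set K := Fintype.card (Fin n) * univ.sup D + 1
  have hone : (1 : R) ∈ monomialSpan R t K := by
    rw [monomialSpan_eq_top hspan K]; exact Submodule.mem_top
  obtain ⟨N₀, hN₀⟩ := exists_pow_mul_mem_span_of_mem_span hϖ hloc hone
  obtain ⟨N₁, hN₁⟩ := exists_pow_mul_mem_of_mem_span hϖ hloc
    (Set.finite_range fun f : Fin K → Fin n => ∏ k, t (f k))
  refine ⟨N₁ + N₀, fun m => ?_⟩
  have hrm : r ^ m * (ϖ : R) ^ N₀ ∈ monomialSpan R₀ t K :=
    pow_mul_mem_monomialSpan_of_mem hD (fun i => le_sup (mem_univ i)) (Nat.lt_succ_self _)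
      (by rwa [mul_one] at hN₀) m
  convert hN₁ _ hrm using 1
  ring
end

section
/- Let R be a Tate ring with ring of definition R₀, and let t ∈ R. Let φ : R → R[1/t] be the localization map, A₀ = R₀[t] ⊆ R, and B₀ = φ(R₀)[1/t] ⊆ R[1/t]. Then A₀ ∩ φ⁻¹(B₀) ⊆ R°; in particular, if R is uniform (R° is bounded), then there exists n ≥ 0 with ϖⁿ(A₀ ∩ φ⁻¹(B₀)) ⊆ R₀. -/
open Polynomial

/-- Elements of `Subring.closure (R₀ ∪ {t})` are polynomials in `t` with coefficients in `R₀`. -/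
private lemma memA_poly {R : Type*} [CommRing R] {R₀ : Subring R} {t r : R}
    (h : r ∈ Subring.closure ((R₀ : Set R) ∪ {t})) :
    ∃ p : Polynomial R₀, (p.map R₀.subtype).eval t = r := by
  induction h using Subring.closure_induction with
  | mem x hx =>
    rcases hx with hx | hx
    · exact ⟨C ⟨x, hx⟩, by simp⟩
    · rw [Set.mem_singleton_iff] at hx; exact ⟨X, by simp [hx]⟩
  | zero => exact ⟨0, by simp⟩
  | one => exact ⟨1, by simp⟩
  | add x y hx hy ihx ihy =>
    obtain ⟨p, hp⟩ := ihx; obtain ⟨q, hq⟩ := ihy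
    exact ⟨p + q, by simp [hp, hq]⟩
  | neg x hx ihx => obtain ⟨p, hp⟩ := ihx; exact ⟨-p, by simp [hp]⟩
  | mul x y hx hy ihx ihy =>
    obtain ⟨p, hp⟩ := ihx; obtain ⟨q, hq⟩ := ihy
    exact ⟨p * q, by simp [hp, hq]⟩

/-- Elements of `φ(R₀)[1/t]` become, after clearing denominators, images of polynomials in `t`
with coefficients in `R₀` of degree at most the power of `t` cleared. -/
private lemma memB_poly {R : Type*} [CommRing R] {R₀ : Subring R} {t : R}
    {b : Localization.Away t}
    (h : b ∈ Subring.closure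
        ((algebraMap R (Localization.Away t)) '' (R₀ : Set R) ∪
          {IsLocalization.Away.invSelf (S := Localization.Away t) t})) :
    ∃ (k : ℕ) (q : Polynomial R₀), q.natDegree ≤ k ∧
      b * (algebraMap R (Localization.Away t) t) ^ k
        = algebraMap R (Localization.Away t) ((q.map R₀.subtype).eval t) := by
  induction h using Subring.closure_induction with
  | mem x hx =>
    rcases hx with ⟨s, hs, rfl⟩ | hx
    · exact ⟨0, C ⟨s, hs⟩, by simp, by simp⟩
    · refine ⟨1, 1, by simp, ?_⟩
      rw [Set.mem_singleton_iff] at hx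
      subst hx
      rw [mul_comm, pow_one, IsLocalization.Away.mul_invSelf]
      simp
  | zero => exact ⟨0, 0, by simp, by simp⟩
  | one => exact ⟨0, 1, by simp, by simp⟩
  | add x y hx hy ihx ihy =>
    obtain ⟨k₁, q₁, hd₁, he₁⟩ := ihx
    obtain ⟨k₂, q₂, hd₂, he₂⟩ := ihy
    set K := max k₁ k₂ with hKdef
    refine ⟨K, X ^ (K - k₁) * q₁ + X ^ (K - k₂) * q₂, ?_, ?_⟩
    · refine (natDegree_add_le _ _).trans (max_le ?_ ?_)
      · refine natDegree_mul_le.trans ?_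
        have := natDegree_X_pow_le (R := R₀) (K - k₁)
        omega
      · refine natDegree_mul_le.trans ?_
        have := natDegree_X_pow_le (R := R₀) (K - k₂)
        omega
    · have h1 : k₁ + (K - k₁) = K := by omega
      have h2 : k₂ + (K - k₂) = K := by omega
      calc (x + y) * algebraMap R (Localization.Away t) t ^ K
          = (x * algebraMap R (Localization.Away t) t ^ k₁) *
              algebraMap R (Localization.Away t) t ^ (K - k₁)
            + (y * algebraMap R (Localization.Away t) t ^ k₂) *
              algebraMap R (Localization.Away t) t ^ (K - k₂) := by
            rw [mul_assoc, mul_assoc, ← pow_add, ← pow_add, h1, h2, add_mul]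
        _ = _ := by
            rw [he₁, he₂]
            simp only [Polynomial.map_add, Polynomial.map_mul, Polynomial.map_pow, map_X,
              eval_add, eval_mul, eval_pow, eval_X, map_add, map_mul, map_pow]
            ring
  | neg x hx ihx =>
    obtain ⟨k, q, hd, he⟩ := ihx
    refine ⟨k, -q, by simpa using hd, ?_⟩
    rw [neg_mul, he]
    simp
  | mul x y hx hy ihx ihy =>
    obtain ⟨k₁, q₁, hd₁, he₁⟩ := ihx
    obtain ⟨k₂, q₂, hd₂, he₂⟩ := ihy
    refine ⟨k₁ + k₂, q₁ * q₂, natDegree_mul_le.trans (add_le_add hd₁ hd₂), ?_⟩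
    calc (x * y) * algebraMap R (Localization.Away t) t ^ (k₁ + k₂)
        = (x * algebraMap R (Localization.Away t) t ^ k₁) *
            (y * algebraMap R (Localization.Away t) t ^ k₂) := by
          rw [pow_add]; ring
      _ = _ := by rw [he₁, he₂]; simp

/-- The key stability result: if `r` is a polynomial of degree `d` in `t` over `R₀` and
`t^M * r` is a polynomial of degree `≤ M` in `t` over `R₀`, then every power `r^m` is a
polynomial of degree `≤ M + d` in `t` over `R₀`. -/
private lemma pow_poly {R : Type*} [CommRing R] {R₀ : Subring R} {t r : R} {M : ℕ}
    (P Q : Polynomial R₀) (hP : (P.map R₀.subtype).eval t = r)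
    (hQd : Q.natDegree ≤ M) (hQ : t ^ M * r = (Q.map R₀.subtype).eval t) :
    ∀ m : ℕ, ∃ S : Polynomial R₀, S.natDegree ≤ M + P.natDegree ∧
      r ^ m = (S.map R₀.subtype).eval t := by
  set K := M + P.natDegree with hKdef
  have key : ∀ i : ℕ, ∃ T : Polynomial R₀, T.natDegree ≤ max i K ∧
      r * t ^ i = (T.map R₀.subtype).eval t := by
    intro i
    by_cases hiM : M ≤ i
    · refine ⟨Q * X ^ (i - M), ?_, ?_⟩
      · refine natDegree_mul_le.trans ?_
        have := natDegree_X_pow_le (R := R₀) (i - M)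
        omega
      · have e : r * t ^ i = (t ^ M * r) * t ^ (i - M) := by
          rw [mul_comm (t ^ M) r, mul_assoc, ← pow_add]
          congr 2
          omega
        rw [e, hQ]
        simp
    · refine ⟨P * X ^ i, ?_, ?_⟩
      · refine natDegree_mul_le.trans ?_
        have := natDegree_X_pow_le (R := R₀) i
        omega
      · rw [Polynomial.map_mul, Polynomial.map_pow, map_X, eval_mul, eval_pow, eval_X, hP]
  choose T hTd hTe using key
  intro m
  induction m with
  | zero => exact ⟨1, by simp, by simp⟩
  | succ m ih =>
    obtain ⟨S, hSd, hSe⟩ := ih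
    refine ⟨∑ i ∈ Finset.range (K + 1), C (S.coeff i) * T i, ?_, ?_⟩
    · refine natDegree_sum_le_of_forall_le _ _ fun i hi => ?_
      refine natDegree_mul_le.trans ?_
      have hiK : i ≤ K := by
        have := Finset.mem_range.mp hi; omega
      have := hTd i
      simp only [natDegree_C, zero_add]
      omega
    · have hS' : ((∑ i ∈ Finset.range (K + 1), C (S.coeff i) * T i).map R₀.subtype).eval t
          = ∑ i ∈ Finset.range (K + 1), (S.coeff i : R) * ((T i).map R₀.subtype).eval t := by
        rw [Polynomial.map_sum, eval_finset_sum]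
        refine Finset.sum_congr rfl fun i _ => ?_
        simp
      have e1 : (S.map R₀.subtype).eval t = ∑ i ∈ Finset.range (K + 1),
          (S.coeff i : R) * t ^ i := by
        rw [eval_eq_sum_range' (lt_of_le_of_lt (natDegree_map_le.trans hSd)
          (Nat.lt_succ_self K))]
        exact Finset.sum_congr rfl fun i _ => by rw [coeff_map]; rfl
      rw [pow_succ, hSe, e1, hS', Finset.sum_mul]
      refine Finset.sum_congr rfl fun i _ => ?_
      rw [← hTe i]
      ring

/-- For a Tate ring `R` with ring of definition `R₀` and `t ∈ R`, with
`A₀ = R₀[t] ⊆ R` and `B₀ = φ(R₀)[1/t] ⊆ R[1/t]` (where `φ` is the localization map),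
one has `A₀ ∩ φ⁻¹(B₀) ⊆ R°`; in particular if `R` is uniform then there is `n ≥ 0` with
`ϖⁿ·(A₀ ∩ φ⁻¹(B₀)) ⊆ R₀`. -/
theorem inter_subset_powerBounded_and_uniform_strict
    (R : Type*) [CommRing R] (R₀ : Subring R) (ϖ : Rˣ) (hϖ : (ϖ : R) ∈ R₀)
    (hloc : ∀ r : R, ∃ n : ℕ, (ϖ : R) ^ n * r ∈ R₀)
    (t : R) :
    (∀ r : R,
        r ∈ Subring.closure ((R₀ : Set R) ∪ {t}) →
        algebraMap R (Localization.Away t) r ∈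
          Subring.closure
            ((algebraMap R (Localization.Away t)) '' (R₀ : Set R) ∪
              {IsLocalization.Away.invSelf (S := Localization.Away t) t}) →
        ∃ N : ℕ, ∀ m : ℕ, (ϖ : R) ^ N * r ^ m ∈ R₀) ∧
    ((∃ N : ℕ, ∀ r : R, (∃ N' : ℕ, ∀ m : ℕ, (ϖ : R) ^ N' * r ^ m ∈ R₀) →
        (ϖ : R) ^ N * r ∈ R₀) →
      ∃ n : ℕ, ∀ r : R,
        r ∈ Subring.closure ((R₀ : Set R) ∪ {t}) →
        algebraMap R (Localization.Away t) r ∈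
          Subring.closure
            ((algebraMap R (Localization.Away t)) '' (R₀ : Set R) ∪
              {IsLocalization.Away.invSelf (S := Localization.Away t) t}) →
        (ϖ : R) ^ n * r ∈ R₀) := by
  have main : ∀ r : R,
      r ∈ Subring.closure ((R₀ : Set R) ∪ {t}) →
      algebraMap R (Localization.Away t) r ∈
        Subring.closure
          ((algebraMap R (Localization.Away t)) '' (R₀ : Set R) ∪
            {IsLocalization.Away.invSelf (S := Localization.Away t) t}) →
      ∃ N : ℕ, ∀ m : ℕ, (ϖ : R) ^ N * r ^ m ∈ R₀ := by
    intro r hA hB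
    obtain ⟨P, hP⟩ := memA_poly hA
    obtain ⟨k, q, hqd, hqe⟩ := memB_poly hB
    -- clear denominators: get `j` with `t^(j+k) * r = eval of (X^j * q)`
    have hφ : algebraMap R (Localization.Away t) (r * t ^ k)
        = algebraMap R (Localization.Away t) ((q.map R₀.subtype).eval t) := by
      rw [map_mul, map_pow, hqe]
    obtain ⟨c, hc⟩ := (IsLocalization.eq_iff_exists (Submonoid.powers t)
      (Localization.Away t)).mp hφ
    obtain ⟨j, hj⟩ := c.2
    have hQe : t ^ (j + k) * r = (((X ^ j * q : Polynomial R₀)).map R₀.subtype).eval t := by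
      have : t ^ j * (r * t ^ k) = t ^ j * ((q.map R₀.subtype).eval t) := by
        rw [← hj] at hc; exact hc
      calc t ^ (j + k) * r = t ^ j * (r * t ^ k) := by rw [pow_add]; ring
        _ = t ^ j * ((q.map R₀.subtype).eval t) := this
        _ = _ := by simp [mul_comm]
    have hQd : (X ^ j * q : Polynomial R₀).natDegree ≤ j + k := by
      refine natDegree_mul_le.trans ?_
      have := natDegree_X_pow_le (R := R₀) j
      omega
    obtain ⟨N₀, hN₀⟩ := hloc t
    set K := (j + k) + P.natDegree with hKdef
    refine ⟨K * N₀, fun m => ?_⟩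
    obtain ⟨S, hSd, hSe⟩ := pow_poly P (X ^ j * q) hP hQd hQe m
    have tpow : ∀ i ≤ K, (ϖ : R) ^ (K * N₀) * t ^ i ∈ R₀ := by
      intro i hi
      have hexp : (K - i) * N₀ + N₀ * i = K * N₀ := by
        rw [Nat.mul_comm N₀ i, ← Nat.add_mul, Nat.sub_add_cancel hi]
      have e : (ϖ : R) ^ (K * N₀) * t ^ i
          = (ϖ : R) ^ ((K - i) * N₀) * (((ϖ : R) ^ N₀ * t) ^ i) := by
        rw [mul_pow, ← pow_mul, ← mul_assoc, ← pow_add, hexp]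
      rw [e]
      exact mul_mem (pow_mem hϖ _) (pow_mem hN₀ i)
    have e1 : (S.map R₀.subtype).eval t = ∑ i ∈ Finset.range (K + 1),
        (S.coeff i : R) * t ^ i := by
      rw [eval_eq_sum_range' (lt_of_le_of_lt (natDegree_map_le.trans hSd)
        (Nat.lt_succ_self K))]
      exact Finset.sum_congr rfl fun i _ => by rw [coeff_map]; rfl
    rw [hSe, e1, Finset.mul_sum]
    refine Subring.sum_mem _ fun i hi => ?_
    have hiK : i ≤ K := by have := Finset.mem_range.mp hi; omega
    have : (ϖ : R) ^ (K * N₀) * ((S.coeff i : R) * t ^ i)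
        = (S.coeff i : R) * ((ϖ : R) ^ (K * N₀) * t ^ i) := by ring
    rw [this]
    exact mul_mem (SetLike.coe_mem _) (tpow i hiK)
  refine ⟨main, ?_⟩
  rintro ⟨N, hN⟩
  exact ⟨N, fun r h1 h2 => hN r (main r h1 h2)⟩
end

section
/- Let R be a Tate ring with ring of definition R₀ and pseudo-uniformizer ϖ, and let t₁,…,tₙ ∈ R generate the unit ideal. Suppose r ∈ R satisfies: for each i there exists cᵢ ≥ 0 and a homogeneous polynomial gᵢ ∈ R₀[T₁,…,Tₙ] of degree dᵢ with tᵢ^{dᵢ}·r = gᵢ(t₁,…,tₙ). Then, with N = d₁+⋯+dₙ and A ≥ 0 such that ϖᴬtᵢ ∈ R₀ for all i, one has ϖ^{NA}·h(t₁,…,tₙ)·rᵐ ∈ R₀ for every homogeneous polynomial h ∈ R₀[T₁,…,Tₙ] of degree N and every m ≥ 0. -/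
/-!
The values `h(t)` of homogeneous polynomials `h` of degree `N = ∑ dᵢ` with coefficients in `R₀`
form an additive monoid `V`. It is stable under multiplication by `r`: every monomial of degree
`∑ dᵢ` is divisible by some `Tᵢ ^ dᵢ`, and `tᵢ ^ dᵢ * r = gᵢ(t)` is again such a value of degree
`dᵢ`. Hence `h(t) * r ^ m ∈ V`, and `ϖ ^ (N * A) * V ⊆ R₀` because `ϖ ^ (N * A) * h(t) = h(ϖ ^ A • t)`
with `ϖ ^ A • t` a point of `R₀ⁿ`.
-/

open MvPolynomial

namespace MvPolynomial

variable {R σ : Type*} [CommRing R]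

theorem IsHomogeneous.eval_smul {p : MvPolynomial σ R} {N : ℕ} (hp : p.IsHomogeneous N)
    (s : R) (t : σ → R) : eval (s • t) p = s ^ N * eval t p := by
  conv_lhs => rw [p.as_sum]
  conv_rhs => rw [p.as_sum]
  simp only [map_sum, Finset.mul_sum, eval_monomial]
  refine Finset.sum_congr rfl fun c hc => ?_
  have hdeg : ∑ i ∈ c.support, c i = N := (hp.degree_eq_sum_deg_support hc).symm
  simp only [Finsupp.prod, Pi.smul_apply, smul_eq_mul, mul_pow, Finset.prod_mul_distrib,
    Finset.prod_pow_eq_pow_sum, hdeg]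
  ring

theorem coeff_mul_mem_subring (R₀ : Subring R) {p q : MvPolynomial σ R}
    (hp : ∀ c, p.coeff c ∈ R₀) (hq : ∀ c, q.coeff c ∈ R₀) (c : σ →₀ ℕ) :
    (p * q).coeff c ∈ R₀ := by
  classical
  rw [coeff_mul]
  exact R₀.sum_mem fun x _ => R₀.mul_mem (hp _) (hq _)

end MvPolynomial

section HomogeneousValues

variable {R σ : Type*} [CommRing R] (R₀ : Subring R) (t : σ → R)

def homogeneousValues (N : ℕ) : AddSubmonoid R where
  carrier := {x | ∃ p : MvPolynomial σ R, (∀ c, p.coeff c ∈ R₀) ∧ p.IsHomogeneous N ∧ eval t p = x}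
  zero_mem' := ⟨0, fun _ => R₀.zero_mem, isHomogeneous_zero _ _ _, map_zero _⟩
  add_mem' := by
    rintro _ _ ⟨p, hp, hpN, rfl⟩ ⟨q, hq, hqN, rfl⟩
    exact ⟨p + q, fun c => R₀.add_mem (hp c) (hq c), hpN.add hqN, map_add _ _ _⟩

variable {R₀ t}

theorem eval_mem_homogeneousValues {p : MvPolynomial σ R} {N : ℕ} (hp : ∀ c, p.coeff c ∈ R₀)
    (hpN : p.IsHomogeneous N) : eval t p ∈ homogeneousValues R₀ t N :=
  ⟨p, hp, hpN, rfl⟩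

theorem mul_mem_homogeneousValues {x y : R} {a b : ℕ} (hx : x ∈ homogeneousValues R₀ t a)
    (hy : y ∈ homogeneousValues R₀ t b) : x * y ∈ homogeneousValues R₀ t (a + b) := by
  obtain ⟨p, hp, hpa, rfl⟩ := hx
  obtain ⟨q, hq, hqb, rfl⟩ := hy
  exact ⟨p * q, coeff_mul_mem_subring R₀ hp hq, hpa.mul hqb, map_mul _ _ _⟩

theorem pow_mul_mem_of_mem_homogeneousValues {s : R} (hs : ∀ i, s * t i ∈ R₀) {N : ℕ} {x : R}
    (hx : x ∈ homogeneousValues R₀ t N) : s ^ N * x ∈ R₀ := by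
  obtain ⟨p, hp, hpN, rfl⟩ := hx
  rw [← hpN.eval_smul]
  exact eval_mem (fun c _ => hp c) hs

variable [Fintype σ] [Nonempty σ] {r : R} {d : σ → ℕ} {g : σ → MvPolynomial σ R}

theorem eval_monomial_mul_mem_homogeneousValues (hgcoeff : ∀ i c, (g i).coeff c ∈ R₀)
    (hghom : ∀ i, (g i).IsHomogeneous (d i)) (hgr : ∀ i, t i ^ d i * r = eval t (g i))
    {c : σ →₀ ℕ} {a : R} (ha : a ∈ R₀) (hc : c.degree = ∑ i, d i) :
    eval t (monomial c a) * r ∈ homogeneousValues R₀ t (∑ i, d i) := by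
  classical
  obtain ⟨i, -, hi⟩ := Finset.exists_le_of_sum_le Finset.univ_nonempty
    (hc.symm.trans c.degree_eq_sum).le
  set c' := c - Finsupp.single i (d i)
  have hc' : c' + Finsupp.single i (d i) = c :=
    tsub_add_cancel_of_le (Finsupp.single_le_iff.mpr hi)
  have hdeg : c'.degree + d i = ∑ i, d i := by
    rw [← hc, ← hc', map_add, Finsupp.degree_single]
  have hsplit : eval t (monomial c a) * r = eval t (monomial c' a) * eval t (g i) := by
    rw [← hgr, ← mul_assoc, ← hc', ← mul_one a, ← monomial_mul, ← X_pow_eq_monomial]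
    simp
  have hcoeff' : ∀ e, (monomial c' a).coeff e ∈ R₀ := fun e => by
    rw [coeff_monomial]
    split_ifs
    exacts [ha, R₀.zero_mem]
  rw [hsplit, ← hdeg]
  exact mul_mem_homogeneousValues
    (eval_mem_homogeneousValues hcoeff' (isHomogeneous_monomial _ rfl))
    (eval_mem_homogeneousValues (hgcoeff i) (hghom i))

theorem mul_right_mem_homogeneousValues (hgcoeff : ∀ i c, (g i).coeff c ∈ R₀)
    (hghom : ∀ i, (g i).IsHomogeneous (d i)) (hgr : ∀ i, t i ^ d i * r = eval t (g i))
    {x : R} (hx : x ∈ homogeneousValues R₀ t (∑ i, d i)) :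
    x * r ∈ homogeneousValues R₀ t (∑ i, d i) := by
  obtain ⟨p, hp, hpN, rfl⟩ := hx
  rw [p.as_sum, map_sum, Finset.sum_mul]
  exact AddSubmonoid.sum_mem _ fun c hc => eval_monomial_mul_mem_homogeneousValues hgcoeff hghom
    hgr (hp c) (hpN.degree_eq_sum_deg_support hc).symm

end HomogeneousValues

theorem powerBounded_induction_step_general
    (R : Type*) [CommRing R] (R₀ : Subring R) (ϖ : Rˣ)
    (n : ℕ) (t : Fin n → R) (hspan : Ideal.span (Set.range t) = ⊤)
    (r : R) (d : Fin n → ℕ) (g : Fin n → MvPolynomial (Fin n) R)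
    (hgcoeff : ∀ i c, (g i).coeff c ∈ R₀)
    (hghom : ∀ i, (g i).IsHomogeneous (d i))
    (hgr : ∀ i, t i ^ d i * r = MvPolynomial.eval t (g i))
    (N : ℕ) (hN : N = ∑ i, d i)
    (A : ℕ) (hA : ∀ i, (ϖ : R) ^ A * t i ∈ R₀) :
    ∀ (h : MvPolynomial (Fin n) R), (∀ c, h.coeff c ∈ R₀) → h.IsHomogeneous N →
      ∀ m : ℕ, (ϖ : R) ^ (N * A) * MvPolynomial.eval t h * r ^ m ∈ R₀ := by
  intro h hcoeff hhom m
  cases isEmpty_or_nonempty (Fin n)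
  · rw [Set.range_eq_empty, Ideal.span_empty] at hspan
    have : Subsingleton R :=
      subsingleton_of_zero_eq_one (Ideal.mem_bot.mp ((Ideal.eq_top_iff_one _).mp hspan)).symm
    convert R₀.zero_mem
  subst hN
  have hpow : eval t h * r ^ m ∈ homogeneousValues R₀ t (∑ i, d i) := by
    induction m with
    | zero => simpa using eval_mem_homogeneousValues hcoeff hhom
    | succ m ih =>
      rw [pow_succ, ← mul_assoc]
      exact mul_right_mem_homogeneousValues hgcoeff hghom hgr ih
  rw [pow_mul', mul_assoc]
  exact pow_mul_mem_of_mem_homogeneousValues hA hpow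

/-- The key induction in Lemma alain: if `tᵢ^{dᵢ}·r = gᵢ(t₁,…,tₙ)` with `gᵢ`
homogeneous of degree `dᵢ` with coefficients in `R₀`, then with `N = d₁ + ⋯ + dₙ` and
`A` such that `ϖᴬ·tᵢ ∈ R₀` for all `i`, one has `ϖ^{NA}·h(t₁,…,tₙ)·rᵐ ∈ R₀` for every
homogeneous `h` of degree `N` with coefficients in `R₀` and every `m ≥ 0`. -/
theorem powerBounded_induction_step
    (R : Type*) [CommRing R] (R₀ : Subring R) (ϖ : Rˣ) (hϖ : (ϖ : R) ∈ R₀)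
    (hloc : ∀ r : R, ∃ n : ℕ, (ϖ : R) ^ n * r ∈ R₀)
    (n : ℕ) (t : Fin n → R) (hspan : Ideal.span (Set.range t) = ⊤)
    (r : R) (d : Fin n → ℕ) (g : Fin n → MvPolynomial (Fin n) R)
    (hgcoeff : ∀ i c, (g i).coeff c ∈ R₀)
    (hghom : ∀ i, (g i).IsHomogeneous (d i))
    (hgr : ∀ i, t i ^ d i * r = MvPolynomial.eval t (g i))
    (N : ℕ) (hN : N = ∑ i, d i)
    (A : ℕ) (hA : ∀ i, (ϖ : R) ^ A * t i ∈ R₀) :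
    ∀ (h : MvPolynomial (Fin n) R), (∀ c, h.coeff c ∈ R₀) → h.IsHomogeneous N →
      ∀ m : ℕ, (ϖ : R) ^ (N * A) * MvPolynomial.eval t h * r ^ m ∈ R₀ :=
  powerBounded_induction_step_general R R₀ ϖ n t hspan r d g hgcoeff hghom hgr N hN A hA
end

section
/- Let R be a Tate ring with ring of definition R₀ topologized by ϖ ∈ R₀. Let G be a torsion-free abelian group and suppose R = ⊕_{g∈G} R^(g) is a G-grading by additive subgroups with R^(g)·R^(h) ⊆ R^(g+h), and suppose R₀ = ⊕_{g∈G} (R₀ ∩ R^(g)). Then R° is also graded: for every power-bounded r = Σ r_g with r_g ∈ R^(g), each homogeneous component r_g is power-bounded. -/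
/-!
Write `r = ∑ r_g`. The degrees occurring in `r` span a finitely generated torsion-free, hence free,
subgroup of `G`, which can be ordered lexicographically. A maximal degree `g₀` is then extreme:
`m • g₀` is a sum of `m` degrees of `r` only in the trivial way, so the `m • g₀`-component of `r ^ m`
is `r_{g₀} ^ m`. Writing `ϖ⁻ᴺ` as a finite sum of homogeneous elements shows that the components of
elements of `ϖ⁻ᴺ R₀` lie in `ϖ⁻ᴹ R₀` for some `M` depending only on `N`; hence `r_{g₀}` is
power-bounded. Then `r - r_{g₀}` is power-bounded with fewer components, and we conclude by
induction on the number of components.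
-/

open Finset DirectSum

/-- A discrete substitute for `g₀` being a vertex of the convex hull of `T`. -/
def IsSumExtreme {G : Type*} [AddCommMonoid G] (T : Set G) (g₀ : G) : Prop :=
  ∀ (m : ℕ) (p : Fin m → G), (∀ i, p i ∈ T) → ∑ i, p i = m • g₀ → ∀ i, p i = g₀

theorem Set.Finite.exists_isSumExtreme_of_injOn {G Γ : Type*} [AddCommMonoid G]
    [AddCommMonoid Γ] [LinearOrder Γ] [IsOrderedCancelAddMonoid Γ] (f : G →+ Γ) {T : Set G}
    (hfin : T.Finite) (hne : T.Nonempty) (hinj : Set.InjOn f T) :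
    ∃ g₀ ∈ T, IsSumExtreme T g₀ := by
  obtain ⟨g₀, hg₀, hmax⟩ := Set.exists_max_image T f hfin hne
  refine ⟨g₀, hg₀, fun m p hp hsum i => hinj (hp i) hg₀ ?_⟩
  have hsum' : ∑ i, f (p i) = ∑ _i : Fin m, f g₀ := by
    rw [← map_sum, hsum, map_nsmul, sum_const, card_univ, Fintype.card_fin]
  exact (sum_eq_sum_iff_of_le fun i _ => hmax _ (hp i)).1 hsum' i (Finset.mem_univ i)

theorem IsSumExtreme.image {H G : Type*} [AddCommMonoid H] [AddCommMonoid G] {T : Set H}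
    {g₀ : H} (h : IsSumExtreme T g₀) {φ : H →+ G} (hφ : Function.Injective φ) :
    IsSumExtreme (φ '' T) (φ g₀) := by
  intro m p hp hsum i
  choose q hq hqp using hp
  have hq_sum : ∑ i, q i = m • g₀ := hφ (by simp only [map_sum, hqp, hsum, map_nsmul])
  rw [← hqp i, h m q hq hq_sum i]

theorem AddCommGroup.exists_injective_addMonoidHom_lex (H : Type*) [AddCommGroup H]
    [Module.Finite ℤ H] [IsAddTorsionFree H] :
    ∃ (n : ℕ) (f : H →+ Lex (Fin n → ℤ)), Function.Injective f :=
  ⟨_, (Module.finBasis ℤ H).equivFun.toLinearMap.toAddMonoidHom,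
    (Module.finBasis ℤ H).equivFun.injective⟩

theorem Set.Finite.exists_isSumExtreme {G : Type*} [AddCommGroup G] [IsAddTorsionFree G]
    {T : Set G} (hfin : T.Finite) (hne : T.Nonempty) : ∃ g₀ ∈ T, IsSumExtreme T g₀ := by
  let H := Submodule.span ℤ T
  let ι : H →+ G := H.subtype.toAddMonoidHom
  have hι : Function.Injective ι := H.injective_subtype
  have : Module.Finite ℤ H := Module.Finite.span_of_finite ℤ hfin
  have : IsAddTorsionFree H := hι.isAddTorsionFree ι
  obtain ⟨n, f, hf⟩ := AddCommGroup.exists_injective_addMonoidHom_lex H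
  have hT : T ⊆ Set.range ι := fun g hg => ⟨⟨g, Submodule.subset_span hg⟩, rfl⟩
  obtain ⟨g₀, hg₀, hext⟩ := (hfin.preimage hι.injOn).exists_isSumExtreme_of_injOn f
    (hne.preimage' hT) hf.injOn
  exact ⟨g₀, hg₀, Set.image_preimage_eq_of_subset hT ▸ hext.image hι⟩

section OneMem

variable {ι R σ : Type*} [DecidableEq ι] [AddLeftCancelMonoid ι] [Semiring R] [SetLike σ R]
  [AddSubmonoidClass σ R] (𝒜 : ι → σ) [SetLike.GradedMul 𝒜] [Decomposition 𝒜]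

theorem DirectSum.Decomposition.mul_coe_decompose_one_zero_of_mem {i : ι} {y : R}
    (hy : y ∈ 𝒜 i) : y * decompose 𝒜 (1 : R) 0 = y := by
  classical
  have hy_mul (g : ι) : y * decompose 𝒜 (1 : R) g ∈ 𝒜 (i + g) :=
    SetLike.GradedMul.mul_mem hy (decompose 𝒜 1 g).2
  calc y * decompose 𝒜 (1 : R) 0
      = ∑ g ∈ (decompose 𝒜 (1 : R)).support, (decompose 𝒜 (y * decompose 𝒜 1 g) i : R) := by
        have hy_mul_zero : y * decompose 𝒜 (1 : R) 0 ∈ 𝒜 i := by simpa using hy_mul 0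
        rw [Finset.sum_eq_single 0, decompose_of_mem_same 𝒜 hy_mul_zero]
        · intro g _ hg
          exact decompose_of_mem_ne 𝒜 (hy_mul g) (by simpa using hg)
        · intro h0
          rw [DFinsupp.notMem_support_iff.1 h0]
          simp
    _ = decompose 𝒜 y i := by
        rw [← AddSubmonoidClass.coe_finsetSum, ← DFinsupp.finsetSum_apply, ← decompose_sum,
          ← mul_sum, sum_support_decompose, mul_one]
    _ = y := decompose_of_mem_same 𝒜 hy

theorem DirectSum.Decomposition.one_mem_zero : (1 : R) ∈ 𝒜 0 := by
  classical
  have h : (1 : R) = decompose 𝒜 (1 : R) 0 :=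
    calc (1 : R) = ∑ g ∈ (decompose 𝒜 (1 : R)).support, (decompose 𝒜 (1 : R) g : R) :=
          (sum_support_decompose 𝒜 1).symm
      _ = ∑ g ∈ (decompose 𝒜 (1 : R)).support,
            (decompose 𝒜 (1 : R) g : R) * decompose 𝒜 (1 : R) 0 :=
          sum_congr rfl fun g _ =>
            (mul_coe_decompose_one_zero_of_mem 𝒜 (decompose 𝒜 (1 : R) g).2).symm
      _ = decompose 𝒜 (1 : R) 0 := by rw [← sum_mul, sum_support_decompose, one_mul]
  exact h ▸ (decompose 𝒜 1 0).2

end OneMem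

noncomputable abbrev DirectSum.IsInternal.toGradedRing {ι R σ : Type*} [DecidableEq ι]
    [AddLeftCancelMonoid ι] [Semiring R] [SetLike σ R] [AddSubmonoidClass σ R] {𝒜 : ι → σ}
    [SetLike.GradedMul 𝒜] (h : IsInternal 𝒜) : GradedRing 𝒜 :=
  letI := h.chooseDecomposition
  { h.chooseDecomposition with
    one_mem := Decomposition.one_mem_zero 𝒜
    mul_mem := fun _ _ _ _ ha hb => SetLike.GradedMul.mul_mem ha hb }

section Decomposition

variable {ι M σ : Type*} [DecidableEq ι] [AddCommMonoid M] [SetLike σ M]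
  [AddSubmonoidClass σ M] (ℳ : ι → σ) [Decomposition ℳ]

theorem DirectSum.coe_decompose_finsuppSum (s : ι →₀ M) (hs : ∀ i, s i ∈ ℳ i) (i : ι) :
    (decompose ℳ (s.sum fun _ x => x) i : M) = s i := by
  rw [Finsupp.sum, decompose_sum, DFinsupp.finsetSum_apply, AddSubmonoidClass.coe_finsetSum,
    sum_eq_single i]
  · exact decompose_of_mem_same ℳ (hs i)
  · exact fun j _ hji => decompose_of_mem_ne ℳ (hs j) hji
  · intro hi
    rw [Finsupp.notMem_support_iff.1 hi, decompose_zero]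
    rfl

theorem DirectSum.exists_finsupp_sum_eq (x : M) :
    ∃ s : ι →₀ M, (∀ i, s i ∈ ℳ i) ∧ (s.sum fun _ y => y) = x := by
  classical
  refine ⟨Finsupp.onFinset (decompose ℳ x).support (fun i => decompose ℳ x i) fun i hi => ?_,
    fun i => by simp, ?_⟩
  · exact DFinsupp.mem_support_iff.2 fun h => hi (by rw [h]; rfl)
  · rw [Finsupp.onFinset_sum _ fun _ => rfl, sum_support_decompose]

end Decomposition

section PowerBounded

variable {R : Type*} [CommRing R] (R₀ : Subring R) (ϖ : R)

def IsPowerBounded (r : R) : Prop :=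
  ∃ N : ℕ, ∀ m : ℕ, ϖ ^ N * r ^ m ∈ R₀

variable {R₀ ϖ}

theorem isPowerBounded_of_mem {r : R} (hr : r ∈ R₀) : IsPowerBounded R₀ ϖ r :=
  ⟨0, fun m => by simpa using pow_mem hr m⟩

theorem IsPowerBounded.neg {r : R} (hr : IsPowerBounded R₀ ϖ r) :
    IsPowerBounded R₀ ϖ (-r) := by
  obtain ⟨N, hN⟩ := hr
  exact ⟨N, fun m => by
    rw [neg_pow, mul_left_comm]
    exact mul_mem (pow_mem (neg_mem (one_mem _)) _) (hN m)⟩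

theorem IsPowerBounded.add {a b : R} (ha : IsPowerBounded R₀ ϖ a)
    (hb : IsPowerBounded R₀ ϖ b) : IsPowerBounded R₀ ϖ (a + b) := by
  obtain ⟨N, hN⟩ := ha
  obtain ⟨M, hM⟩ := hb
  refine ⟨N + M, fun m => ?_⟩
  rw [add_pow, mul_sum]
  refine sum_mem fun j _ => ?_
  have : ϖ ^ (N + M) * (a ^ j * b ^ (m - j) * m.choose j) =
      ϖ ^ N * a ^ j * (ϖ ^ M * b ^ (m - j)) * m.choose j := by ring
  rw [this]
  exact mul_mem (mul_mem (hN j) (hM _)) (natCast_mem _ _)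

theorem IsPowerBounded.sub {a b : R} (ha : IsPowerBounded R₀ ϖ a)
    (hb : IsPowerBounded R₀ ϖ b) : IsPowerBounded R₀ ϖ (a - b) :=
  sub_eq_add_neg a b ▸ ha.add hb.neg

theorem pow_mul_mem_of_le (hϖ : ϖ ∈ R₀) {r : R} {N M : ℕ} (hr : ϖ ^ N * r ∈ R₀)
    (hNM : N ≤ M) : ϖ ^ M * r ∈ R₀ := by
  rw [← Nat.sub_add_cancel hNM, pow_add, mul_assoc]
  exact mul_mem (pow_mem hϖ _) hr

theorem exists_pow_mul_mem_of_finset (hϖ : ϖ ∈ R₀) (hloc : ∀ r : R, ∃ n : ℕ, ϖ ^ n * r ∈ R₀)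
    {α : Type*} (s : Finset α) (f : α → R) : ∃ M : ℕ, ∀ a ∈ s, ϖ ^ M * f a ∈ R₀ := by
  choose n hn using hloc
  exact ⟨s.sup (n ∘ f), fun a ha => pow_mul_mem_of_le hϖ (hn (f a)) (le_sup (f := n ∘ f) ha)⟩

end PowerBounded

section GradedRing

variable {ι R σ : Type*} [DecidableEq ι] [AddCommMonoid ι] [CommRing R] [SetLike σ R]
  [AddSubgroupClass σ R] (𝒜 : ι → σ) [GradedRing 𝒜]

theorem DirectSum.coe_decompose_pow_nsmul_of_isSumExtreme
    [∀ (i : ι) (x : 𝒜 i), Decidable (x ≠ 0)] {x : R} {g₀ : ι}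
    (hg₀ : g₀ ∈ (decompose 𝒜 x).support)
    (hext : IsSumExtreme ((decompose 𝒜 x).support : Set ι) g₀) (m : ℕ) :
    (decompose 𝒜 (x ^ m) (m • g₀) : R) = (decompose 𝒜 x g₀ : R) ^ m := by
  set T := (decompose 𝒜 x).support
  have hexpand : x ^ m =
      ∑ p ∈ Fintype.piFinset fun _ : Fin m => T, ∏ i, (decompose 𝒜 x (p i) : R) := by
    rw [← prod_univ_sum (fun _ => T) fun _ g => (decompose 𝒜 x g : R), Fin.prod_const,
      sum_support_decompose]
  have hmem (p : Fin m → ι) : ∏ i, (decompose 𝒜 x (p i) : R) ∈ 𝒜 (∑ i, p i) :=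
    SetLike.prod_mem_graded 𝒜 _ _ fun i _ => (decompose 𝒜 x (p i)).2
  rw [hexpand, decompose_sum, DFinsupp.finsetSum_apply, AddSubmonoidClass.coe_finsetSum,
    sum_eq_single fun _ => g₀]
  · rw [decompose_of_mem_same 𝒜 (by simpa using hmem fun _ => g₀), Fin.prod_const]
  · intro p hp hne
    refine decompose_of_mem_ne 𝒜 (hmem p) fun hsum => hne (funext ?_)
    exact hext m p (fun i => Fintype.mem_piFinset.1 hp i) hsum
  · exact fun h => absurd (Fintype.mem_piFinset.2 fun _ => hg₀) h

variable (R₀ : Subring R) {ϖ : R} (hϖ : ϖ ∈ R₀) (hloc : ∀ r : R, ∃ n : ℕ, ϖ ^ n * r ∈ R₀)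
  (hR₀ : SetLike.IsHomogeneous 𝒜 R₀)
include hϖ hloc hR₀

theorem exists_pow_mul_coe_decompose_mul_mem (c : R) :
    ∃ M : ℕ, ∀ z ∈ R₀, ∀ i, ϖ ^ M * (decompose 𝒜 (c * z) i : R) ∈ R₀ := by
  classical
  obtain ⟨M, hM⟩ := exists_pow_mul_mem_of_finset hϖ hloc (decompose 𝒜 c).support
    fun i => (decompose 𝒜 c i : R)
  refine ⟨M, fun z hz i => ?_⟩
  rw [decompose_mul, coe_mul_apply, mul_sum]
  refine sum_mem fun ij hij => ?_
  rw [← mul_assoc]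
  exact mul_mem (hM _ (mem_product.1 (mem_filter.1 hij).1).1) (hR₀ _ hz)

theorem exists_pow_mul_coe_decompose_mem_of_pow_mul_mem (hunit : IsUnit ϖ) (N : ℕ) :
    ∃ M : ℕ, ∀ y, ϖ ^ N * y ∈ R₀ → ∀ i, ϖ ^ M * (decompose 𝒜 y i : R) ∈ R₀ := by
  obtain ⟨u, rfl⟩ := hunit
  obtain ⟨M, hM⟩ := exists_pow_mul_coe_decompose_mul_mem 𝒜 R₀ hϖ hloc hR₀ (↑u⁻¹ ^ N)
  refine ⟨M, fun y hy i => ?_⟩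
  simpa [← mul_assoc, ← mul_pow] using hM _ hy i

theorem IsPowerBounded.coe_decompose_of_isSumExtreme (hunit : IsUnit ϖ)
    [∀ (i : ι) (x : 𝒜 i), Decidable (x ≠ 0)] {x : R} (hx : IsPowerBounded R₀ ϖ x) {g₀ : ι}
    (hg₀ : g₀ ∈ (decompose 𝒜 x).support)
    (hext : IsSumExtreme ((decompose 𝒜 x).support : Set ι) g₀) :
    IsPowerBounded R₀ ϖ (decompose 𝒜 x g₀ : R) := by
  obtain ⟨N, hN⟩ := hx
  obtain ⟨M, hM⟩ :=
    exists_pow_mul_coe_decompose_mem_of_pow_mul_mem 𝒜 R₀ hϖ hloc hR₀ hunit N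
  refine ⟨M, fun m => ?_⟩
  rw [← coe_decompose_pow_nsmul_of_isSumExtreme 𝒜 hg₀ hext]
  exact hM _ (hN m) _

end GradedRing

section TorsionFree

variable {ι R σ : Type*} [DecidableEq ι] [AddCommGroup ι] [IsAddTorsionFree ι] [CommRing R]
  [SetLike σ R] [AddSubgroupClass σ R] (𝒜 : ι → σ) [GradedRing 𝒜]
  (R₀ : Subring R) {ϖ : R} (hϖ : ϖ ∈ R₀) (hunit : IsUnit ϖ)
  (hloc : ∀ r : R, ∃ n : ℕ, ϖ ^ n * r ∈ R₀) (hR₀ : SetLike.IsHomogeneous 𝒜 R₀)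
include hϖ hunit hloc hR₀

theorem IsPowerBounded.coe_decompose {x : R} (hx : IsPowerBounded R₀ ϖ x) (g : ι) :
    IsPowerBounded R₀ ϖ (decompose 𝒜 x g : R) := by
  classical
  induction hn : (decompose 𝒜 x).support.card using Nat.strong_induction_on generalizing x with
  | _ n ih =>
  by_cases hg : g ∈ (decompose 𝒜 x).support
  swap
  · rw [DFinsupp.notMem_support_iff.1 hg]
    exact isPowerBounded_of_mem (zero_mem R₀)
  obtain ⟨g₀, hg₀, hext⟩ := (decompose 𝒜 x).support.finite_toSet.exists_isSumExtreme ⟨g, hg⟩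
  have hx₀ := hx.coe_decompose_of_isSumExtreme 𝒜 R₀ hϖ hloc hR₀ hunit hg₀ hext
  obtain rfl | hne := eq_or_ne g g₀
  · exact hx₀
  have herase : decompose 𝒜 (x - decompose 𝒜 x g₀) = (decompose 𝒜 x).erase g₀ := by
    rw [decompose_sub, decompose_coe, DFinsupp.erase_eq_sub_single]
    rfl
  have hcard : ((decompose 𝒜 x).erase g₀).support.card < n := by
    rw [DFinsupp.support_erase, card_erase_of_mem hg₀, ← hn]
    exact Nat.pred_lt (card_ne_zero_of_mem hg₀)
  have := ih _ (herase ▸ hcard) (hx.sub hx₀) rfl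
  rwa [herase, DFinsupp.erase_ne hne] at this

end TorsionFree

/-- If a Tate ring `R` is graded by a torsion-free abelian group `G` (an
internal direct sum decomposition `R = ⊕_g R^{(g)}` with `R^{(g)}·R^{(h)} ⊆ R^{(g+h)}`),
and the ring of definition `R₀` is graded by this grading, then the power-bounded
subring `R°` is also graded: every homogeneous component of a power-bounded element is
power-bounded. -/
theorem powerBounded_graded
    (R : Type*) [CommRing R] (R₀ : Subring R) (ϖ : Rˣ) (hϖ : (ϖ : R) ∈ R₀)
    (hloc : ∀ r : R, ∃ n : ℕ, (ϖ : R) ^ n * r ∈ R₀)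
    (G : Type*) [AddCommGroup G] [DecidableEq G]
    (htf : ∀ (g : G) (n : ℕ), n ≠ 0 → n • g = 0 → g = 0)
    (ℛ : G → AddSubgroup R)
    (hinternal : DirectSum.IsInternal ℛ)
    (hmul : ∀ (g h : G), ∀ x ∈ ℛ g, ∀ y ∈ ℛ h, x * y ∈ ℛ (g + h))
    (hR₀graded : ∀ s : G →₀ R, (∀ g, s g ∈ ℛ g) →
      (s.sum fun _ x => x) ∈ R₀ → ∀ g, s g ∈ R₀) :
    ∀ s : G →₀ R, (∀ g, s g ∈ ℛ g) →
      (∃ N : ℕ, ∀ m : ℕ, (ϖ : R) ^ N * (s.sum fun _ x => x) ^ m ∈ R₀) →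
      ∀ g, ∃ N : ℕ, ∀ m : ℕ, (ϖ : R) ^ N * (s g) ^ m ∈ R₀ := by
  have : IsAddTorsionFree G :=
    ⟨fun n hn a b hab => sub_eq_zero.1 (htf _ n hn (by rw [nsmul_sub]; exact sub_eq_zero.2 hab))⟩
  have : SetLike.GradedMul ℛ := ⟨fun _ _ _ _ hx hy => hmul _ _ _ hx _ hy⟩
  let : GradedRing ℛ := hinternal.toGradedRing
  have hR₀ : SetLike.IsHomogeneous ℛ R₀ := fun g x hx => by
    obtain ⟨s, hs, rfl⟩ := exists_finsupp_sum_eq ℛ x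
    rw [coe_decompose_finsuppSum ℛ s hs]
    exact hR₀graded s hs hx g
  intro s hs hbounded g
  rw [← coe_decompose_finsuppSum ℛ s hs g]
  exact IsPowerBounded.coe_decompose ℛ R₀ hϖ ϖ.isUnit hloc hR₀ hbounded g
end

section
/- Let k be a field complete with respect to a non-trivial non-archimedean norm with valuation ring 𝒪_k, and fix ϖ ∈ k with 0 < |ϖ| < 1. Let R = k[T,T⁻¹,Z]/(Z²) and let R₀ be the 𝒪_k-submodule of R with basis {ϖ^{|n|}Tⁿ : n ∈ ℤ} ∪ {ϖ^{-|n|}TⁿZ : n ∈ ℤ}. Then R₀ is an 𝒪_k-subalgebra of R with k·R₀ = R. -/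
/-!
Write the generators of `R₀` as `ϖ^a Tⁿ` with `a ≥ |n|` and `ϖ^a TⁿZ` with `a ≥ -|n|`. Raising
`a` keeps an element in `R₀`, since `ϖ^e ∈ 𝒪_k` for `e ≥ 0`. A product of two generators is `0`
(as `Z² = 0`) or again of this shape, because `|m + n| ≤ |m| + |n|` and `|n| ≤ |m| + |m + n|`;
so `R₀` is closed under multiplication. The generators are nonzero multiples of the `k`-basis
`{Tⁿ, TⁿZ}` of `R`, hence span it over `k`.
-/

/-- The valuation ring `𝒪_k = {c : k | ‖c‖ ≤ 1}` of a non-archimedean normed field. -/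
def valuationSubring (k : Type*) [NormedField k] [IsUltrametricDist k] : Subring k where
  carrier := {c | ‖c‖ ≤ 1}
  one_mem' := by simp
  zero_mem' := by simp
  neg_mem' := by simp
  mul_mem' := by
    intro a b ha hb
    simp only [Set.mem_setOf_eq] at *
    calc ‖a * b‖ = ‖a‖ * ‖b‖ := norm_mul a b
      _ ≤ 1 * 1 := mul_le_mul ha hb (norm_nonneg b) zero_le_one
      _ = 1 := one_mul 1
  add_mem' := by
    intro a b ha hb
    simp only [Set.mem_setOf_eq] at *
    exact le_trans (IsUltrametricDist.norm_add_le_max a b) (max_le ha hb)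

open LaurentPolynomial TrivSqZeroExt

theorem LaurentPolynomial.span_range_T (R : Type*) [Semiring R] :
    Submodule.span R (Set.range (T : ℤ → R[T;T⁻¹])) = ⊤ := by
  refine eq_top_iff.2 fun p _ => p.induction_on' (fun _ _ => add_mem) fun n a => ?_
  rw [← smul_eq_C_mul]
  exact Submodule.smul_mem _ a (Submodule.subset_span ⟨n, rfl⟩)

theorem DualNumber.span_inl_union_inr_eq_top {S A : Type*} [CommSemiring S] [CommSemiring A]
    [Algebra S A] {s : Set A} (hs : Submodule.span S s = ⊤) :
    Submodule.span S (inl '' s ∪ inr '' s : Set (DualNumber A)) = ⊤ := by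
  have span_inl : Submodule.span S (inl '' s : Set (DualNumber A)) =
      LinearMap.range (inlAlgHom S A A).toLinearMap := by
    rw [LinearMap.range_eq_map, ← hs, Submodule.map_span]; rfl
  have span_inr : Submodule.span S (inr '' s : Set (DualNumber A)) =
      LinearMap.range ((inrHom A A).restrictScalars S) := by
    rw [LinearMap.range_eq_map, ← hs, Submodule.map_span]; rfl
  refine eq_top_iff.2 fun x _ => ?_
  rw [Submodule.span_union, span_inl, span_inr, ← inl_fst_add_inr_snd_eq x]
  exact Submodule.add_mem_sup ⟨x.fst, rfl⟩ ⟨x.snd, rfl⟩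

section ValuationSubring

variable {k : Type*} [NormedField k] [IsUltrametricDist k]

theorem smul_mem_of_norm_le_one {M : Type*} [AddCommMonoid M] [Module k M]
    (P : Submodule (valuationSubring k) M) {c : k} (hc : ‖c‖ ≤ 1) {x : M} (hx : x ∈ P) :
    c • x ∈ P :=
  P.smul_mem ⟨c, hc⟩ hx

theorem zpow_smul_mem_of_le {M : Type*} [AddCommMonoid M] [Module k M]
    (P : Submodule (valuationSubring k) M) {ϖ : k} (hϖ : ϖ ≠ 0) (hϖ1 : ‖ϖ‖ ≤ 1)
    {s t : ℤ} (hst : s ≤ t) {x : M} (hx : ϖ ^ s • x ∈ P) : ϖ ^ t • x ∈ P := by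
  obtain ⟨e, rfl⟩ := Int.le.dest hst
  rw [zpow_add₀ hϖ, mul_comm, mul_smul, zpow_natCast]
  exact smul_mem_of_norm_le_one P ((norm_pow ϖ e).trans_le (pow_le_one₀ (norm_nonneg _) hϖ1)) hx

end ValuationSubring

def rostGenerators {k : Type*} [Field k] (ϖ : k) : Set (DualNumber k[T;T⁻¹]) :=
  Set.range (fun n : ℤ => ϖ ^ n.natAbs • inl (T n)) ∪
    Set.range (fun n : ℤ => ϖ⁻¹ ^ n.natAbs • inr (T n))

theorem span_rostGenerators {k : Type*} [Field k] {ϖ : k} (hϖ : ϖ ≠ 0) :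
    Submodule.span k (rostGenerators ϖ) = ⊤ := by
  refine eq_top_iff.2 ((DualNumber.span_inl_union_inr_eq_top (span_range_T k)).ge.trans ?_)
  rw [Submodule.span_le]
  rintro _ (⟨_, ⟨n, rfl⟩, rfl⟩ | ⟨_, ⟨n, rfl⟩, rfl⟩)
  · exact (Submodule.smul_mem_iff _ (pow_ne_zero _ hϖ)).1
      (Submodule.subset_span (Or.inl ⟨n, rfl⟩))
  · exact (Submodule.smul_mem_iff _ (pow_ne_zero _ (inv_ne_zero hϖ))).1
      (Submodule.subset_span (Or.inr ⟨n, rfl⟩))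

section RostLattice

variable {k : Type*} [NormedField k] [IsUltrametricDist k] {ϖ : k}

variable (ϖ) in
noncomputable def rostLattice : Submodule (valuationSubring k) (DualNumber k[T;T⁻¹]) :=
  Submodule.span (valuationSubring k) (rostGenerators ϖ)

variable (ϖ) in
theorem one_mem_rostLattice : 1 ∈ rostLattice ϖ := by
  have : ϖ ^ (0 : ℤ).natAbs • inl (T 0) ∈ rostLattice ϖ :=
    Submodule.subset_span (Or.inl ⟨0, rfl⟩)
  simpa using this

theorem zpow_smul_inl_T_mem_rostLattice (hϖ : ϖ ≠ 0) (hϖ1 : ‖ϖ‖ ≤ 1) {t n : ℤ}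
    (h : n.natAbs ≤ t) : ϖ ^ t • inl (T n) ∈ rostLattice ϖ := by
  refine zpow_smul_mem_of_le _ hϖ hϖ1 h ?_
  rw [zpow_natCast]
  exact Submodule.subset_span (Or.inl ⟨n, rfl⟩)

theorem zpow_smul_inr_T_mem_rostLattice (hϖ : ϖ ≠ 0) (hϖ1 : ‖ϖ‖ ≤ 1) {t n : ℤ}
    (h : -n.natAbs ≤ t) : ϖ ^ t • inr (T n) ∈ rostLattice ϖ := by
  refine zpow_smul_mem_of_le _ hϖ hϖ1 h ?_
  rw [zpow_neg, zpow_natCast, ← inv_pow]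
  exact Submodule.subset_span (Or.inr ⟨n, rfl⟩)

theorem mul_mem_rostLattice_of_mem_rostGenerators (hϖ : ϖ ≠ 0) (hϖ1 : ‖ϖ‖ ≤ 1)
    {a b : DualNumber k[T;T⁻¹]} (ha : a ∈ rostGenerators ϖ) (hb : b ∈ rostGenerators ϖ) :
    a * b ∈ rostLattice ϖ := by
  have inl_mul_inr_mem (m n : ℤ) :
      (ϖ ^ m.natAbs • inl (T m)) * (ϖ⁻¹ ^ n.natAbs • inr (T n)) ∈ rostLattice ϖ := by
    rw [smul_mul_smul_comm, inl_mul_inr, smul_eq_mul, ← T_add, inv_pow, ← div_eq_mul_inv,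
      ← zpow_natCast, ← zpow_natCast, ← zpow_sub₀ hϖ]
    refine zpow_smul_inr_T_mem_rostLattice hϖ hϖ1 ?_
    have := Int.natAbs_add_le (m + n) (-m)
    simp only [add_neg_cancel_comm, Int.natAbs_neg] at this
    omega
  rcases ha with ⟨m, rfl⟩ | ⟨m, rfl⟩ <;> rcases hb with ⟨n, rfl⟩ | ⟨n, rfl⟩
  · rw [smul_mul_smul_comm, inl_mul_inl, ← T_add, ← pow_add, ← zpow_natCast]
    refine zpow_smul_inl_T_mem_rostLattice hϖ hϖ1 ?_
    have := Int.natAbs_add_le m n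
    omega
  · exact inl_mul_inr_mem m n
  · rw [mul_comm]
    exact inl_mul_inr_mem n m
  · rw [smul_mul_smul_comm, inr_mul_inr, smul_zero]
    exact zero_mem _

theorem mul_mem_rostLattice (hϖ : ϖ ≠ 0) (hϖ1 : ‖ϖ‖ ≤ 1) {x y : DualNumber k[T;T⁻¹]}
    (hx : x ∈ rostLattice ϖ) (hy : y ∈ rostLattice ϖ) : x * y ∈ rostLattice ϖ := by
  have : rostLattice ϖ * rostLattice ϖ ≤ rostLattice ϖ := by
    rw [rostLattice, Submodule.span_mul_span, Submodule.span_le]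
    rintro _ ⟨a, ha, b, hb, rfl⟩
    exact mul_mem_rostLattice_of_mem_rostGenerators hϖ hϖ1 ha hb
  exact this (Submodule.mul_mem_mul hx hy)

theorem span_rostLattice (hϖ : ϖ ≠ 0) :
    Submodule.span k (rostLattice ϖ : Set (DualNumber k[T;T⁻¹])) = ⊤ :=
  eq_top_iff.2 ((span_rostGenerators hϖ).ge.trans (Submodule.span_mono Submodule.subset_span))

end RostLattice

theorem rost_ring_of_definition_is_subalgebra_general
    (k : Type*) [NontriviallyNormedField k] [IsUltrametricDist k]
    (ϖ : k) (hϖ0 : 0 < ‖ϖ‖) (hϖ1 : ‖ϖ‖ < 1)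
    (R₀ : Submodule (valuationSubring k) (DualNumber (LaurentPolynomial k)))
    (hR₀ : R₀ = Submodule.span (valuationSubring k)
      ((Set.range fun n : ℤ =>
          (ϖ ^ n.natAbs) • TrivSqZeroExt.inl (LaurentPolynomial.T n)) ∪
       (Set.range fun n : ℤ =>
          ((ϖ⁻¹) ^ n.natAbs) •
            TrivSqZeroExt.inr (M := LaurentPolynomial k) (LaurentPolynomial.T n)))) :
    (1 : DualNumber (LaurentPolynomial k)) ∈ R₀ ∧
    (∀ x ∈ R₀, ∀ y ∈ R₀, x * y ∈ R₀) ∧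
    Submodule.span k (R₀ : Set (DualNumber (LaurentPolynomial k))) = ⊤ := by
  have hϖ : ϖ ≠ 0 := norm_pos_iff.1 hϖ0
  change R₀ = rostLattice ϖ at hR₀
  subst hR₀
  exact ⟨one_mem_rostLattice ϖ, fun x hx y hy => mul_mem_rostLattice hϖ hϖ1.le hx hy,
    span_rostLattice hϖ⟩

/-- Let `R = k[T,T⁻¹,Z]/(Z²)` (modelled as dual numbers over Laurent
polynomials) and `R₀` the `𝒪_k`-submodule with basis `ϖ^{|n|}Tⁿ` and `ϖ^{-|n|}TⁿZ`
(`n ∈ ℤ`). Then `R₀` is an `𝒪_k`-subalgebra of `R` with `k·R₀ = R`. -/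
theorem rost_ring_of_definition_is_subalgebra
    (k : Type*) [NontriviallyNormedField k] [IsUltrametricDist k] [CompleteSpace k]
    (ϖ : k) (hϖ0 : 0 < ‖ϖ‖) (hϖ1 : ‖ϖ‖ < 1)
    (R₀ : Submodule (valuationSubring k) (DualNumber (LaurentPolynomial k)))
    (hR₀ : R₀ = Submodule.span (valuationSubring k)
      ((Set.range fun n : ℤ =>
          (ϖ ^ n.natAbs) • TrivSqZeroExt.inl (LaurentPolynomial.T n)) ∪
       (Set.range fun n : ℤ =>
          ((ϖ⁻¹) ^ n.natAbs) •
            TrivSqZeroExt.inr (M := LaurentPolynomial k) (LaurentPolynomial.T n)))) :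
    (1 : DualNumber (LaurentPolynomial k)) ∈ R₀ ∧
    (∀ x ∈ R₀, ∀ y ∈ R₀, x * y ∈ R₀) ∧
    Submodule.span k (R₀ : Set (DualNumber (LaurentPolynomial k))) = ⊤ :=
  rost_ring_of_definition_is_subalgebra_general k ϖ hϖ0 hϖ1 R₀ hR₀
end

section
/- Let k be a complete non-archimedean field with 0 < |ϖ| < 1. Define sequences of positive integers a(n), b(n) recursively with a(1)=1, b(J) > J² + J·max{b(j): j<J; a(i): i≤J}, and a(I) > I² + I·max{b(j): j<I; a(i): i<I}. Let R = k[T,T⁻¹,Z] and R₀ the 𝒪_k-subalgebra generated by ϖT, ϖT⁻¹, and ϖ⁻ⁿT^{a(n)}Z, ϖ⁻ⁿT^{-b(n)}Z for n ≥ 1. Then for every e ≥ 1 there exists M(e) ≥ 0 such that ϖ^{-M(e)}Zᵉ ∉ R₀. -/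
/-!
Give the monomial `T ^ m * Z ^ e` the least `ϖ`-adic order of a product of generators of `R₀`
that is a multiple of it: `e` generators `ϖ⁻ⁿ T^{±c} Z` of total level `L` and total `T`-exponent
`S`, completed by `|m - S|` factors `ϖT^{±1}`, have order `|m - S| - L`. This least order is
subadditive in `(m, e)`, so, the absolute value being non-archimedean, the polynomials whose
coefficients have at least that order form a subring; it contains the generators, hence `R₀`.
The growth conditions make the largest generator in a product dominate all the others, which
gives `L ≤ |S| + e²`. So every element of `R₀` has coefficient of order at least `-e²` at `Zᵉ`,
and `ϖ^{-(e² + 1)} Zᵉ ∉ R₀`.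
-/

namespace AddMonoidAlgebra

variable {k M : Type*} [SeminormedRing k] [NormOneClass k] [IsUltrametricDist k] [AddMonoid M]

def coeffBoundSubring (β : M → ℝ) (hβ0 : ∀ p, 0 ≤ β p) (hβ1 : 1 ≤ β 0)
    (hβmul : ∀ p q, β p * β q ≤ β (p + q)) : Subring (AddMonoidAlgebra k M) where
  carrier := {x | ∀ p, ‖x.coeff p‖ ≤ β p}
  zero_mem' p := by simpa using hβ0 p
  one_mem' p := by
    classical
    rw [one_def, coeff_single, Finsupp.single_apply]
    split_ifs with h
    · simpa [← h] using hβ1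
    · simpa using hβ0 p
  add_mem' {x y} hx hy p :=
    (IsUltrametricDist.norm_add_le_max _ _).trans (max_le (hx p) (hy p))
  neg_mem' {x} hx p := by simpa [coeff_neg] using hx p
  mul_mem' {x y} hx hy p := by
    classical
    rw [coeff_mul]
    refine IsUltrametricDist.norm_sum_le_of_forall_le_of_nonneg (hβ0 p) fun p₁ _ ↦ ?_
    refine IsUltrametricDist.norm_sum_le_of_forall_le_of_nonneg (hβ0 p) fun p₂ _ ↦ ?_
    dsimp only
    split_ifs with h
    · calc ‖x.coeff p₁ * y.coeff p₂‖ ≤ ‖x.coeff p₁‖ * ‖y.coeff p₂‖ := norm_mul_le _ _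
        _ ≤ β p₁ * β p₂ := mul_le_mul (hx p₁) (hy p₂) (norm_nonneg _) (hβ0 p₁)
        _ ≤ β p := h ▸ hβmul p₁ p₂
    · simpa using hβ0 p

variable {β : M → ℝ} {hβ0 : ∀ p, 0 ≤ β p} {hβ1 : 1 ≤ β 0}
  {hβmul : ∀ p q, β p * β q ≤ β (p + q)}

theorem single_mem_coeffBoundSubring {p : M} {c : k} (hc : ‖c‖ ≤ β p) :
    single p c ∈ coeffBoundSubring β hβ0 hβ1 hβmul := by
  classical
  intro q
  rw [coeff_single, Finsupp.single_apply]
  split_ifs with h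
  · exact h ▸ hc
  · simpa using hβ0 q

end AddMonoidAlgebra

theorem Multiset.le_abs_sum_map_of_dominant {α : Type*} [DecidableEq α] {s : Multiset α}
    {f : α → ℤ} {t : α} (ht : t ∈ s) {D : ℤ} (hD : D ≤ |f t|)
    (hdom : ∀ u ∈ s, u ≠ t → card s * |f u| ≤ |f t| - D) : D ≤ |(s.map f).sum| := by
  set s' := s.filter (· ≠ t)
  have hsplit : s = replicate (s.count t) t + s' := by
    rw [← filter_eq' s t]; exact (filter_add_not _ s).symm
  have hcount : 1 ≤ s.count t := one_le_count_iff_mem.mpr ht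
  have hcard : card s' < card s := by
    conv_rhs => rw [hsplit]
    simp only [card_add, card_replicate]; omega
  have hrest_mul : card s * (s'.map fun u ↦ |f u|).sum ≤ card s * (|f t| - D) := by
    rw [← sum_map_mul_left]
    calc (s'.map fun u ↦ (card s : ℤ) * |f u|).sum
          ≤ card (s'.map fun u ↦ (card s : ℤ) * |f u|) • (|f t| - D) := by
          refine sum_le_card_nsmul (s'.map fun u ↦ (card s : ℤ) * |f u|) _ fun x hx ↦ ?_
          obtain ⟨u, hu, rfl⟩ := mem_map.mp hx
          obtain ⟨hus, hut⟩ := mem_filter.mp hu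
          exact hdom u hus hut
      _ ≤ card s * (|f t| - D) := by
          rw [nsmul_eq_mul, card_map]; gcongr
  have hrest : (s'.map fun u ↦ |f u|).sum ≤ |f t| - D :=
    le_of_mul_le_mul_left hrest_mul (by exact_mod_cast hcard.trans_le' (Nat.zero_le _))
  have hsum : (s.map f).sum = s.count t * f t + (s'.map f).sum := by
    conv_lhs => rw [hsplit]
    simp
  calc D ≤ s.count t * |f t| - (s'.map fun u ↦ |f u|).sum := by nlinarith [abs_nonneg (f t)]
    _ ≤ |s.count t * f t| - |(s'.map f).sum| := by
        have := abs_sum_le_sum_abs (s := s'.map f)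
        rw [map_map] at this
        rw [abs_mul, Nat.abs_cast]
        exact sub_le_sub_left this _
    _ ≤ |(s.map f).sum| := by rw [hsum]; exact abs_sub_abs_le_abs_add _ _

namespace ZNilpotent

/-- The generators `ϖ⁻ⁿT^{a(n)}Z`, `ϖ⁻ⁿT^{-b(n)}Z` are numbered `0, 1, 2, …` in the order
`a(1), b(1), a(2), b(2), …`, in which each one dominates all earlier ones; generator `i` has
`T`-exponent `genExp a b i` and `ϖ⁻¹`-exponent `genLevel i`. -/
def genExp (a b : ℕ → ℕ) (i : ℕ) : ℤ := if i % 2 = 0 then a (i / 2 + 1) else -(b (i / 2 + 1) : ℤ)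

def genLevel (i : ℕ) : ℕ := i / 2 + 1

def genSum (a b : ℕ → ℕ) (s : Multiset ℕ) : ℤ := (s.map (genExp a b)).sum

def levelSum (s : Multiset ℕ) : ℕ := (s.map genLevel).sum

/-- The `ϖ`-adic order of the product of the generators indexed by `s` with `|p.1 - genSum a b s|`
factors `ϖT` or `ϖT⁻¹`, a multiple of the monomial `T ^ p.1 * Z ^ p.2` when `card s = p.2`. -/
def prodOrder (a b : ℕ → ℕ) (p : ℤ × ℕ) (s : Multiset ℕ) : ℤ := |p.1 - genSum a b s| - levelSum s

noncomputable def minOrder (a b : ℕ → ℕ) (p : ℤ × ℕ) : ℤ :=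
  sInf (prodOrder a b p '' {s | Multiset.card s = p.2})

theorem genSum_add (a b : ℕ → ℕ) (s t : Multiset ℕ) :
    genSum a b (s + t) = genSum a b s + genSum a b t := by
  simp [genSum]

theorem levelSum_add (s t : Multiset ℕ) : levelSum (s + t) = levelSum s + levelSum t := by
  simp [levelSum]

structure RapidGrowth (a b : ℕ → ℕ) : Prop where
  a_one : a 1 = 1
  b_growth : ∀ J : ℕ, 1 ≤ J →
    (∀ j : ℕ, 1 ≤ j → j < J → J ^ 2 + J * b j < b J) ∧
    (∀ i : ℕ, 1 ≤ i → i ≤ J → J ^ 2 + J * a i < b J)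
  a_growth : ∀ I : ℕ, 2 ≤ I →
    (∀ j : ℕ, 1 ≤ j → j < I → I ^ 2 + I * b j < a I) ∧
    (∀ i : ℕ, 1 ≤ i → i < I → I ^ 2 + I * a i < a I)

namespace RapidGrowth

variable {a b : ℕ → ℕ} (hg : RapidGrowth a b)
include hg

theorem sq_add_mul_abs_genExp_lt {i j : ℕ} (hji : j < i) :
    (genLevel i : ℤ) ^ 2 + genLevel i * |genExp a b j| < |genExp a b i| := by
  unfold genLevel genExp
  split_ifs <;> simp only [abs_neg, Nat.abs_cast] <;> norm_cast
  · exact (hg.a_growth _ (by omega)).2 _ (by omega) (by omega)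
  · exact (hg.b_growth _ (by omega)).2 _ (by omega) (by omega)
  · exact (hg.a_growth _ (by omega)).1 _ (by omega) (by omega)
  · exact (hg.b_growth _ (by omega)).1 _ (by omega) (by omega)

theorem sq_genLevel_le_abs_genExp (i : ℕ) : (genLevel i : ℤ) ^ 2 ≤ |genExp a b i| := by
  rcases Nat.eq_zero_or_pos i with rfl | hi
  · simp [genLevel, genExp, hg.a_one]
  · have := hg.sq_add_mul_abs_genExp_lt hi
    nlinarith [abs_nonneg (genExp a b 0)]

/-- The largest generator `t` in a product dominates all the others; either the product has at
least `genLevel t` factors, or its T-exponent is at least `genLevel t ^ 2` in absolute value. -/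
theorem levelSum_le_abs_genSum_add_sq (s : Multiset ℕ) :
    (levelSum s : ℤ) ≤ |genSum a b s| + (Multiset.card s : ℤ) ^ 2 := by
  rcases eq_or_ne s 0 with rfl | hs
  · simp [levelSum, genSum]
  obtain ⟨t, ht, hmax⟩ := Multiset.exists_max_image (fun i ↦ i) hs
  set n := genLevel t
  have hlevel : levelSum s ≤ Multiset.card s * n := by
    simpa [levelSum] using Multiset.sum_le_card_nsmul (s.map genLevel) n fun x hx ↦ by
      obtain ⟨u, hu, rfl⟩ := Multiset.mem_map.mp hx
      have := hmax u hu
      unfold n genLevel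
      omega
  zify at hlevel
  rcases le_or_gt n (Multiset.card s) with hn | hn
  · nlinarith [abs_nonneg (genSum a b s)]
  · have hsq : (n : ℤ) ^ 2 ≤ |genSum a b s| := by
      classical
      refine Multiset.le_abs_sum_map_of_dominant ht (hg.sq_genLevel_le_abs_genExp t)
        fun u hu hut ↦ ?_
      have := hg.sq_add_mul_abs_genExp_lt (lt_of_le_of_ne (hmax u hu) hut)
      have : (Multiset.card s : ℤ) * |genExp a b u| ≤ n * |genExp a b u| := by
        gcongr
      linarith
    nlinarith

theorem neg_le_prodOrder (p : ℤ × ℕ) {s : Multiset ℕ} (hs : Multiset.card s = p.2) :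
    -(|p.1| + (p.2 : ℤ) ^ 2) ≤ prodOrder a b p s := by
  have := hg.levelSum_le_abs_genSum_add_sq s
  have := abs_sub_abs_le_abs_sub (genSum a b s) p.1
  rw [hs, abs_sub_comm] at *
  unfold prodOrder
  linarith

theorem bddBelow_prodOrder_image (p : ℤ × ℕ) :
    BddBelow (prodOrder a b p '' {s | Multiset.card s = p.2}) :=
  ⟨_, Set.forall_mem_image.mpr fun _ ↦ hg.neg_le_prodOrder p⟩

theorem exists_prodOrder_eq_minOrder (p : ℤ × ℕ) :
    ∃ s, Multiset.card s = p.2 ∧ prodOrder a b p s = minOrder a b p :=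
  Int.csInf_mem (Set.Nonempty.image _ ⟨Multiset.replicate p.2 0, Multiset.card_replicate _ _⟩)
    (hg.bddBelow_prodOrder_image p)

theorem minOrder_le_prodOrder (p : ℤ × ℕ) {s : Multiset ℕ} (hs : Multiset.card s = p.2) :
    minOrder a b p ≤ prodOrder a b p s :=
  csInf_le (hg.bddBelow_prodOrder_image p) ⟨s, hs, rfl⟩

theorem neg_le_minOrder (p : ℤ × ℕ) : -(|p.1| + (p.2 : ℤ) ^ 2) ≤ minOrder a b p := by
  obtain ⟨s, hs, heq⟩ := hg.exists_prodOrder_eq_minOrder p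
  exact heq ▸ hg.neg_le_prodOrder p hs

theorem minOrder_add_le (p q : ℤ × ℕ) :
    minOrder a b (p + q) ≤ minOrder a b p + minOrder a b q := by
  obtain ⟨s, hs, hps⟩ := hg.exists_prodOrder_eq_minOrder p
  obtain ⟨t, ht, hqt⟩ := hg.exists_prodOrder_eq_minOrder q
  rw [← hps, ← hqt]
  refine (hg.minOrder_le_prodOrder (p + q) (s := s + t) (by simp [hs, ht])).trans ?_
  have := abs_add_le (p.1 - genSum a b s) (q.1 - genSum a b t)
  rw [← add_sub_add_comm] at this
  simp only [prodOrder, genSum_add, levelSum_add, Prod.fst_add, Nat.cast_add]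
  linarith

theorem minOrder_le_abs (m : ℤ) : minOrder a b (m, 0) ≤ |m| :=
  (hg.minOrder_le_prodOrder (m, 0) (s := 0) rfl).trans_eq
    (by simp [prodOrder, genSum, levelSum])

theorem minOrder_genExp_le (i : ℕ) : minOrder a b (genExp a b i, 1) ≤ -genLevel i :=
  (hg.minOrder_le_prodOrder _ (s := {i}) rfl).trans_eq
    (by simp [prodOrder, genSum, levelSum])

theorem minOrder_a_le (n : ℕ) : minOrder a b (a (n + 1), 1) ≤ -(n + 1 : ℕ) := by
  simpa [genExp, genLevel] using hg.minOrder_genExp_le (2 * n)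

theorem minOrder_b_le (n : ℕ) : minOrder a b (-(b (n + 1) : ℤ), 1) ≤ -(n + 1 : ℕ) := by
  simpa [genExp, genLevel, Nat.mul_add_div] using hg.minOrder_genExp_le (2 * n + 1)

variable {k : Type*} [NormedField k] [IsUltrametricDist k] {ϖ : k} (hϖ0 : 0 < ‖ϖ‖)
  (hϖ1 : ‖ϖ‖ ≤ 1)

noncomputable def orderSubring : Subring (AddMonoidAlgebra k (ℤ × ℕ)) :=
  AddMonoidAlgebra.coeffBoundSubring (fun p ↦ ‖ϖ‖ ^ minOrder a b p) (fun _ ↦ (zpow_pos hϖ0 _).le)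
    (one_le_zpow_of_nonpos₀ hϖ0 hϖ1 ((hg.minOrder_le_abs 0).trans_eq abs_zero))
    fun p q ↦ by
      rw [← zpow_add₀ hϖ0.ne']
      exact zpow_le_zpow_right_of_le_one₀ hϖ0 hϖ1 (hg.minOrder_add_le p q)

theorem single_mem_orderSubring {p : ℤ × ℕ} {c : k} {m : ℤ} (hp : minOrder a b p ≤ m)
    (hc : ‖c‖ ≤ ‖ϖ‖ ^ m) : AddMonoidAlgebra.single p c ∈ hg.orderSubring hϖ0 hϖ1 :=
  AddMonoidAlgebra.single_mem_coeffBoundSubring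
    (hc.trans (zpow_le_zpow_right_of_le_one₀ hϖ0 hϖ1 hp))

end RapidGrowth

end ZNilpotent

open AddMonoidAlgebra ZNilpotent in
theorem Z_not_nilpotent_in_completion_general
    (k : Type*) [NontriviallyNormedField k] [IsUltrametricDist k]
    (ϖ : k) (hϖ0 : 0 < ‖ϖ‖) (hϖ1 : ‖ϖ‖ < 1)
    (a b : ℕ → ℕ)
    (ha1 : a 1 = 1)
    (hb : ∀ J : ℕ, 1 ≤ J →
      (∀ j : ℕ, 1 ≤ j → j < J → J ^ 2 + J * b j < b J) ∧
      (∀ i : ℕ, 1 ≤ i → i ≤ J → J ^ 2 + J * a i < b J))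
    (ha : ∀ I : ℕ, 2 ≤ I →
      (∀ j : ℕ, 1 ≤ j → j < I → I ^ 2 + I * b j < a I) ∧
      (∀ i : ℕ, 1 ≤ i → i < I → I ^ 2 + I * a i < a I))
    (Z : AddMonoidAlgebra k (ℤ × ℕ))
    (hZ : Z = AddMonoidAlgebra.single ((0 : ℤ), (1 : ℕ)) (1 : k))
    (R₀ : Subring (AddMonoidAlgebra k (ℤ × ℕ)))
    (hR₀ : R₀ = Subring.closure
      ((algebraMap k (AddMonoidAlgebra k (ℤ × ℕ))) '' {c : k | ‖c‖ ≤ 1} ∪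
        {ϖ • AddMonoidAlgebra.single ((1 : ℤ), (0 : ℕ)) (1 : k),
         ϖ • AddMonoidAlgebra.single ((-1 : ℤ), (0 : ℕ)) (1 : k)} ∪
        (Set.range fun n : ℕ =>
          (ϖ⁻¹) ^ (n + 1) •
            AddMonoidAlgebra.single (((a (n + 1) : ℤ)), (1 : ℕ)) (1 : k)) ∪
        (Set.range fun n : ℕ =>
          (ϖ⁻¹) ^ (n + 1) •
            AddMonoidAlgebra.single ((-(b (n + 1) : ℤ)), (1 : ℕ)) (1 : k)))) :
    ∀ e : ℕ, 1 ≤ e → ∃ M : ℕ, (ϖ⁻¹) ^ M • Z ^ e ∉ R₀ := by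
  have hg : RapidGrowth a b := ⟨ha1, hb, ha⟩
  have hnorm (N : ℕ) : ‖ϖ⁻¹ ^ N‖ = ‖ϖ‖ ^ (-(N : ℤ)) := by simp [zpow_neg]
  have hR₀S : R₀ ≤ hg.orderSubring hϖ0 hϖ1.le := by
    rw [hR₀, Subring.closure_le]
    rintro x (((⟨c, hc, rfl⟩ | rfl | rfl) | ⟨n, rfl⟩) | ⟨n, rfl⟩) <;>
      simp only [coe_algebraMap, Function.comp_apply, smul_single', mul_one]
    · exact hg.single_mem_orderSubring hϖ0 hϖ1.le (hg.minOrder_le_abs 0) (by simpa using hc)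
    · exact hg.single_mem_orderSubring hϖ0 hϖ1.le (hg.minOrder_le_abs 1) (by simp)
    · exact hg.single_mem_orderSubring hϖ0 hϖ1.le (hg.minOrder_le_abs (-1)) (by simp)
    · exact hg.single_mem_orderSubring hϖ0 hϖ1.le (hg.minOrder_a_le n) (hnorm _).le
    · exact hg.single_mem_orderSubring hϖ0 hϖ1.le (hg.minOrder_b_le n) (hnorm _).le
  intro e _
  refine ⟨e ^ 2 + 1, fun hmem ↦ ?_⟩
  have hcoeff := hR₀S hmem (0, e)
  simp only [hZ, single_pow, one_pow, smul_single', mul_one, coeff_single, Prod.smul_mk,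
    smul_zero, nsmul_one, Nat.cast_id, Finsupp.single_eq_same, hnorm] at hcoeff
  have hupper := (zpow_le_zpow_iff_right_of_lt_one₀ hϖ0 hϖ1).mp hcoeff
  have hlower := hg.neg_le_minOrder (0, e)
  simp only [abs_zero, zero_add] at hlower
  push_cast at hupper
  linarith

/-- With rapidly growing sequences `a(n), b(n)` and `R₀ ⊆ k[T,T⁻¹,Z]` the
`𝒪_k`-subalgebra generated by `ϖT`, `ϖT⁻¹`, `ϖ⁻ⁿT^{a(n)}Z`, `ϖ⁻ⁿT^{-b(n)}Z` (`n ≥ 1`),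
for every `e ≥ 1` there exists `M ≥ 0` such that `ϖ^{-M}Zᵉ ∉ R₀`; that is, `Z` is not
nilpotent in the completion. Here `k[T,T⁻¹,Z]` is modelled as the monoid algebra on
`ℤ × ℕ`, with `T = X^{(1,0)}` and `Z = X^{(0,1)}`. -/
theorem Z_not_nilpotent_in_completion
    (k : Type*) [NontriviallyNormedField k] [IsUltrametricDist k] [CompleteSpace k]
    (ϖ : k) (hϖ0 : 0 < ‖ϖ‖) (hϖ1 : ‖ϖ‖ < 1)
    (a b : ℕ → ℕ)
    (ha1 : a 1 = 1)
    (hpos : ∀ n : ℕ, 1 ≤ n → 0 < a n ∧ 0 < b n)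
    (hb : ∀ J : ℕ, 1 ≤ J →
      (∀ j : ℕ, 1 ≤ j → j < J → J ^ 2 + J * b j < b J) ∧
      (∀ i : ℕ, 1 ≤ i → i ≤ J → J ^ 2 + J * a i < b J))
    (ha : ∀ I : ℕ, 2 ≤ I →
      (∀ j : ℕ, 1 ≤ j → j < I → I ^ 2 + I * b j < a I) ∧
      (∀ i : ℕ, 1 ≤ i → i < I → I ^ 2 + I * a i < a I))
    (Z : AddMonoidAlgebra k (ℤ × ℕ))
    (hZ : Z = AddMonoidAlgebra.single ((0 : ℤ), (1 : ℕ)) (1 : k))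
    (R₀ : Subring (AddMonoidAlgebra k (ℤ × ℕ)))
    (hR₀ : R₀ = Subring.closure
      ((algebraMap k (AddMonoidAlgebra k (ℤ × ℕ))) '' {c : k | ‖c‖ ≤ 1} ∪
        {ϖ • AddMonoidAlgebra.single ((1 : ℤ), (0 : ℕ)) (1 : k),
         ϖ • AddMonoidAlgebra.single ((-1 : ℤ), (0 : ℕ)) (1 : k)} ∪
        (Set.range fun n : ℕ =>
          (ϖ⁻¹) ^ (n + 1) •
            AddMonoidAlgebra.single (((a (n + 1) : ℤ)), (1 : ℕ)) (1 : k)) ∪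
        (Set.range fun n : ℕ =>
          (ϖ⁻¹) ^ (n + 1) •
            AddMonoidAlgebra.single ((-(b (n + 1) : ℤ)), (1 : ℕ)) (1 : k)))) :
    ∀ e : ℕ, 1 ≤ e → ∃ M : ℕ, (ϖ⁻¹) ^ M • Z ^ e ∉ R₀ :=
  Z_not_nilpotent_in_completion_general k ϖ hϖ0 hϖ1 a b ha1 hb ha Z hZ R₀ hR₀
end

section
/- Let k be a complete non-archimedean field another with a(n), b(n) as in the rapid-growth construction, R = k[T,T⁻¹,Z] and R₀ the 𝒪_k-subalgebra generated by ϖT, ϖT⁻¹, ϖ⁻ⁿT^{a(n)}Z and ϖ⁻ⁿT^{-b(n)}Z (n ≥ 1). Then ϖ⁻ⁿZ ∈ R₀[T] and ϖ⁻ⁿZ ∈ R₀[T⁻¹] for all n ≥ 1. -/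
open AddMonoidAlgebra

theorem AddMonoidAlgebra.smul_single_one_mul_single_one_pow {k G : Type*} [Semiring k]
    [AddMonoid G] (r : k) (g h : G) (n : ℕ) :
    r • single g (1 : k) * single h 1 ^ n = r • single (g + n • h) 1 := by
  rw [single_pow, smul_mul_assoc, single_mul_single, one_pow, mul_one]

theorem Subring.mul_pow_mem_closure_union_singleton {R : Type*} [Ring R] {s : Set R} {x : R}
    (hx : x ∈ s) (t : R) (n : ℕ) : x * t ^ n ∈ Subring.closure (s ∪ {t}) := by
  refine mul_mem (subset_closure (Set.mem_union_left _ hx)) (pow_mem (subset_closure ?_) n)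
  exact Set.mem_union_right s rfl

/-- `k[T,T⁻¹,Z]` is modelled as the monoid algebra on `ℤ × ℕ`, with `T = X^{(1,0)}` and
`Z = X^{(0,1)}`. -/
theorem Z_locally_zero_general
    (k : Type*) [NontriviallyNormedField k]
    (ϖ : k)
    (a b : ℕ → ℕ)
    (Z : AddMonoidAlgebra k (ℤ × ℕ))
    (hZ : Z = AddMonoidAlgebra.single ((0 : ℤ), (1 : ℕ)) (1 : k))
    (R₀ : Subring (AddMonoidAlgebra k (ℤ × ℕ)))
    (hR₀ : R₀ = Subring.closure
      ((algebraMap k (AddMonoidAlgebra k (ℤ × ℕ))) '' {c : k | ‖c‖ ≤ 1} ∪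
        {ϖ • AddMonoidAlgebra.single ((1 : ℤ), (0 : ℕ)) (1 : k),
         ϖ • AddMonoidAlgebra.single ((-1 : ℤ), (0 : ℕ)) (1 : k)} ∪
        (Set.range fun n : ℕ =>
          (ϖ⁻¹) ^ (n + 1) •
            AddMonoidAlgebra.single (((a (n + 1) : ℤ)), (1 : ℕ)) (1 : k)) ∪
        (Set.range fun n : ℕ =>
          (ϖ⁻¹) ^ (n + 1) •
            AddMonoidAlgebra.single ((-(b (n + 1) : ℤ)), (1 : ℕ)) (1 : k)))) :
    ∀ n : ℕ, 1 ≤ n →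
      (ϖ⁻¹) ^ n • Z ∈ Subring.closure
        ((R₀ : Set (AddMonoidAlgebra k (ℤ × ℕ))) ∪
          {AddMonoidAlgebra.single ((1 : ℤ), (0 : ℕ)) (1 : k)}) ∧
      (ϖ⁻¹) ^ n • Z ∈ Subring.closure
        ((R₀ : Set (AddMonoidAlgebra k (ℤ × ℕ))) ∪
          {AddMonoidAlgebra.single ((-1 : ℤ), (0 : ℕ)) (1 : k)}) := by
  intro n hn
  obtain ⟨m, rfl⟩ := Nat.exists_eq_add_of_le' hn
  have hTa : (ϖ⁻¹) ^ (m + 1) • single ((a (m + 1) : ℤ), 1) (1 : k) ∈ R₀ :=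
    hR₀ ▸ Subring.subset_closure (Or.inl (Or.inr ⟨m, rfl⟩))
  have hTb : (ϖ⁻¹) ^ (m + 1) • single (-(b (m + 1) : ℤ), 1) (1 : k) ∈ R₀ :=
    hR₀ ▸ Subring.subset_closure (Or.inr ⟨m, rfl⟩)
  -- `ϖ⁻ⁿ T^{-b(n)} Z · T^{b(n)} = ϖ⁻ⁿ Z = ϖ⁻ⁿ T^{a(n)} Z · T^{-a(n)}`
  have hb_cancel : (-(b (m + 1) : ℤ), 1) + b (m + 1) • ((1 : ℤ), 0) = ((0 : ℤ), 1) := by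
    ext <;> simp
  have ha_cancel : ((a (m + 1) : ℤ), 1) + a (m + 1) • ((-1 : ℤ), 0) = ((0 : ℤ), 1) := by
    ext <;> simp
  constructor
  · simpa only [smul_single_one_mul_single_one_pow, hb_cancel, hZ] using
      Subring.mul_pow_mem_closure_union_singleton hTb (single (1, 0) 1) (b (m + 1))
  · simpa only [smul_single_one_mul_single_one_pow, ha_cancel, hZ] using
      Subring.mul_pow_mem_closure_union_singleton hTa (single (-1, 0) 1) (a (m + 1))

/-- With rapidly growing sequences `a(n), b(n)` and `R₀ ⊆ k[T,T⁻¹,Z]` the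
`𝒪_k`-subalgebra generated by `ϖT`, `ϖT⁻¹`, `ϖ⁻ⁿT^{a(n)}Z`, `ϖ⁻ⁿT^{-b(n)}Z` (`n ≥ 1`),
for every `n ≥ 1` we have `ϖ⁻ⁿZ ∈ R₀[T]` and `ϖ⁻ⁿZ ∈ R₀[T⁻¹]`. Here `k[T,T⁻¹,Z]` is modelled as the monoid algebra on
`ℤ × ℕ`, with `T = X^{(1,0)}` and `Z = X^{(0,1)}`. -/
theorem Z_locally_zero
    (k : Type*) [NontriviallyNormedField k] [IsUltrametricDist k] [CompleteSpace k]
    (ϖ : k) (hϖ0 : 0 < ‖ϖ‖) (hϖ1 : ‖ϖ‖ < 1)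
    (a b : ℕ → ℕ)
    (ha1 : a 1 = 1)
    (hpos : ∀ n : ℕ, 1 ≤ n → 0 < a n ∧ 0 < b n)
    (hb : ∀ J : ℕ, 1 ≤ J →
      (∀ j : ℕ, 1 ≤ j → j < J → J ^ 2 + J * b j < b J) ∧
      (∀ i : ℕ, 1 ≤ i → i ≤ J → J ^ 2 + J * a i < b J))
    (ha : ∀ I : ℕ, 2 ≤ I →
      (∀ j : ℕ, 1 ≤ j → j < I → I ^ 2 + I * b j < a I) ∧
      (∀ i : ℕ, 1 ≤ i → i < I → I ^ 2 + I * a i < a I))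
    (Z : AddMonoidAlgebra k (ℤ × ℕ))
    (hZ : Z = AddMonoidAlgebra.single ((0 : ℤ), (1 : ℕ)) (1 : k))
    (R₀ : Subring (AddMonoidAlgebra k (ℤ × ℕ)))
    (hR₀ : R₀ = Subring.closure
      ((algebraMap k (AddMonoidAlgebra k (ℤ × ℕ))) '' {c : k | ‖c‖ ≤ 1} ∪
        {ϖ • AddMonoidAlgebra.single ((1 : ℤ), (0 : ℕ)) (1 : k),
         ϖ • AddMonoidAlgebra.single ((-1 : ℤ), (0 : ℕ)) (1 : k)} ∪
        (Set.range fun n : ℕ =>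
          (ϖ⁻¹) ^ (n + 1) •
            AddMonoidAlgebra.single (((a (n + 1) : ℤ)), (1 : ℕ)) (1 : k)) ∪
        (Set.range fun n : ℕ =>
          (ϖ⁻¹) ^ (n + 1) •
            AddMonoidAlgebra.single ((-(b (n + 1) : ℤ)), (1 : ℕ)) (1 : k)))) :
    ∀ n : ℕ, 1 ≤ n →
      (ϖ⁻¹) ^ n • Z ∈ Subring.closure
        ((R₀ : Set (AddMonoidAlgebra k (ℤ × ℕ))) ∪
          {AddMonoidAlgebra.single ((1 : ℤ), (0 : ℕ)) (1 : k)}) ∧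
      (ϖ⁻¹) ^ n • Z ∈ Subring.closure
        ((R₀ : Set (AddMonoidAlgebra k (ℤ × ℕ))) ∪
          {AddMonoidAlgebra.single ((-1 : ℤ), (0 : ℕ)) (1 : k)}) :=
  Z_locally_zero_general k ϖ a b Z hZ R₀ hR₀
end

section
/- Let R₀ be the free 𝒪_k-submodule of k[T,T⁻¹,Z] spanned by (ϖT)ᵃ(ϖZ)ᵇ with b ≥ 0, a ≥ -b², let R = kR₀, and let A₀ = R₀[T]. Then Z ∈ A₀ and for every n ≥ 1, (ϖ⁻ⁿZ)^{n+1} ∈ A₀; hence ϖ⁻ⁿZ is power-bounded in the Tate ring A = R with ring of definition A₀, so A° contains the line kZ and A is not uniform. -/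
/-!
Write `T = single (1, 0) 1` and `Z = single (0, 1) 1`. The bound
`‖coeff_{T^a Z^b} x‖ ≤ ‖ϖ‖ ^ (b - b²)` holds on the generators of `A₀` and is multiplicative because
`b ↦ b - b²` is subadditive, so it holds on all of `A₀`; conversely `d Z^b = T^(b²) · d T^(-b²) Z^b`
lies in `A₀` as soon as `‖d‖ ≤ ‖ϖ‖ ^ (b - b²)`. Since `b²` outgrows every linear function of `b`,
each `c Z` is power-bounded, whereas `ϖ⁻¹ Z ∉ A₀`: scaling `ϖ^(-N-1) Z` by a fixed `ϖ^N` never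
lands in `A₀`.
-/
open AddMonoidAlgebra

section CoeffBound

variable {k M : Type*} [NormedField k] {B : M → ℝ}

lemma norm_coeff_single_le (hB : ∀ p, 0 ≤ B p) {m : M} {r : k} (hr : ‖r‖ ≤ B m) (p : M) :
    ‖(single m r : k[M]).coeff p‖ ≤ B p := by
  classical
  rw [coeff_single, Finsupp.single_apply]
  split_ifs with h
  · exact h ▸ hr
  · simpa using hB p

variable [IsUltrametricDist k] [AddMonoid M]

lemma norm_coeff_mul_le (hB : ∀ p, 0 ≤ B p) (hBmul : ∀ p q, B p * B q ≤ B (p + q))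
    {x y : k[M]} (hx : ∀ p, ‖x.coeff p‖ ≤ B p) (hy : ∀ p, ‖y.coeff p‖ ≤ B p) (p : M) :
    ‖(x * y).coeff p‖ ≤ B p := by
  classical
  rw [coeff_mul]
  refine IsUltrametricDist.norm_sum_le_of_forall_le_of_nonneg (hB p) fun p₁ _ => ?_
  refine IsUltrametricDist.norm_sum_le_of_forall_le_of_nonneg (hB p) fun p₂ _ => ?_
  dsimp only
  split_ifs with h
  · rw [norm_mul, ← h]
    exact (mul_le_mul (hx p₁) (hy p₂) (norm_nonneg _) (hB p₁)).trans (hBmul p₁ p₂)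
  · simpa using hB p

lemma norm_coeff_le_of_mem_closure (hB : ∀ p, 0 ≤ B p) (hB0 : 1 ≤ B 0)
    (hBmul : ∀ p q, B p * B q ≤ B (p + q)) {s : Set k[M]}
    (hs : ∀ x ∈ s, ∀ p, ‖x.coeff p‖ ≤ B p) {x : k[M]} (hx : x ∈ Subring.closure s) :
    ∀ p, ‖x.coeff p‖ ≤ B p := by
  induction hx using Subring.closure_induction with
  | mem x hx => exact hs x hx
  | zero => simpa using hB
  | one => simpa [one_def] using norm_coeff_single_le hB (by simpa using hB0)
  | add x y _ _ hx hy =>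
    exact fun p => (IsUltrametricDist.norm_add_le_max _ _).trans (max_le (hx p) (hy p))
  | neg x _ hx => simpa using hx
  | mul x y _ _ hx hy => exact norm_coeff_mul_le hB hBmul hx hy

end CoeffBound

lemma zpow_sub_sq_mul_zpow_sub_sq_le {r : ℝ} (hr0 : 0 < r) (hr1 : r ≤ 1) (b c : ℕ) :
    r ^ ((b : ℤ) - b ^ 2) * r ^ ((c : ℤ) - c ^ 2) ≤ r ^ (((b + c : ℕ) : ℤ) - (b + c : ℕ) ^ 2) := by
  rw [← zpow_add₀ hr0.ne']
  refine zpow_le_zpow_right_of_le_one₀ hr0 hr1 ?_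
  push_cast
  nlinarith [b.cast_nonneg (α := ℤ), c.cast_nonneg (α := ℤ)]

lemma exists_pow_mul_pow_le_zpow {r s : ℝ} (hr0 : 0 < r) (hr1 : r < 1) (hs : 0 ≤ s) :
    ∃ N : ℕ, ∀ m : ℕ, r ^ N * s ^ m ≤ r ^ ((m : ℤ) - m ^ 2) := by
  obtain ⟨m₀, hm₀⟩ := pow_unbounded_of_one_lt s ((one_lt_inv₀ hr0).2 hr1)
  refine ⟨(m₀ + 1) ^ 2, fun m => ?_⟩
  calc r ^ (m₀ + 1) ^ 2 * s ^ m ≤ r ^ (m₀ + 1) ^ 2 * (r⁻¹ ^ m₀) ^ m := by gcongr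
    _ = r ^ ((((m₀ + 1) ^ 2 : ℕ) : ℤ) - m₀ * m) := by
      rw [zpow_sub₀ hr0.ne', zpow_natCast, ← pow_mul, inv_pow, div_eq_mul_inv]
      norm_cast
    _ ≤ r ^ ((m : ℤ) - m ^ 2) := by
      refine zpow_le_zpow_right_of_le_one₀ hr0 hr1.le ?_
      push_cast
      nlinarith [sq_nonneg ((m : ℤ) - m₀ - 1)]

lemma smul_single_zero_one_pow {k : Type*} [Semiring k] (c : k) (m : ℕ) :
    (c • single ((0 : ℤ), (1 : ℕ)) (1 : k)) ^ m = single (0, m) (c ^ m) := by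
  rw [smul_single', mul_one, single_pow]
  congr 1
  ext <;> simp

namespace NonUniformExample

variable {k : Type*} [NontriviallyNormedField k] [IsUltrametricDist k] {ϖ : k}

noncomputable def R₀ (ϖ : k) : Submodule (valuationSubring k) k[ℤ × ℕ] :=
  Submodule.span (valuationSubring k)
    {x | ∃ (a : ℤ) (b : ℕ), -(b : ℤ) ^ 2 ≤ a ∧ x = ϖ ^ (a + b) • single (a, b) (1 : k)}

noncomputable def A₀ (ϖ : k) : Subring k[ℤ × ℕ] :=
  Subring.closure ((R₀ ϖ : Set k[ℤ × ℕ]) ∪ {single (1, 0) 1})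

lemma norm_coeff_le_of_mem_R₀ (hϖ0 : 0 < ‖ϖ‖) (hϖ1 : ‖ϖ‖ ≤ 1) {x : k[ℤ × ℕ]}
    (hx : x ∈ R₀ ϖ) (p : ℤ × ℕ) : ‖x.coeff p‖ ≤ ‖ϖ‖ ^ ((p.2 : ℤ) - p.2 ^ 2) := by
  have hB : ∀ p : ℤ × ℕ, 0 ≤ ‖ϖ‖ ^ ((p.2 : ℤ) - p.2 ^ 2) := fun p => by positivity
  induction hx using Submodule.span_induction generalizing p with
  | mem x hx =>
    obtain ⟨a, b, hab, rfl⟩ := hx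
    rw [smul_single', mul_one]
    refine norm_coeff_single_le hB ?_ p
    rw [norm_zpow]
    exact zpow_le_zpow_right_of_le_one₀ hϖ0 hϖ1 (by simp only; omega)
  | zero => simpa using hB p
  | add x y _ _ hx hy => exact (IsUltrametricDist.norm_add_le_max _ _).trans (max_le (hx p) (hy p))
  | smul c x _ hx =>
    rw [Subring.smul_def, coeff_smul_apply, smul_eq_mul, norm_mul]
    exact (mul_le_of_le_one_left (norm_nonneg _) c.2).trans (hx p)

lemma norm_coeff_le_of_mem_A₀ (hϖ0 : 0 < ‖ϖ‖) (hϖ1 : ‖ϖ‖ ≤ 1) {x : k[ℤ × ℕ]}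
    (hx : x ∈ A₀ ϖ) (p : ℤ × ℕ) : ‖x.coeff p‖ ≤ ‖ϖ‖ ^ ((p.2 : ℤ) - p.2 ^ 2) := by
  have hB : ∀ p : ℤ × ℕ, 0 ≤ ‖ϖ‖ ^ ((p.2 : ℤ) - p.2 ^ 2) := fun p => by positivity
  refine norm_coeff_le_of_mem_closure hB (by simp)
    (fun p q => zpow_sub_sq_mul_zpow_sub_sq_le hϖ0 hϖ1 p.2 q.2) ?_ hx p
  rintro x (hx | rfl)
  · exact norm_coeff_le_of_mem_R₀ hϖ0 hϖ1 hx
  · exact norm_coeff_single_le hB (by simp)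

lemma single_mem_R₀ (hϖ : ϖ ≠ 0) {a : ℤ} {b : ℕ} (hab : -(b : ℤ) ^ 2 ≤ a) {d : k}
    (hd : ‖d‖ ≤ ‖ϖ‖ ^ (a + b)) : single (a, b) d ∈ R₀ ϖ := by
  have hgen : ϖ ^ (a + b) • single (a, b) (1 : k) ∈ R₀ ϖ :=
    Submodule.subset_span ⟨a, b, hab, rfl⟩
  have hu : ‖d * ϖ ^ (-(a + b))‖ ≤ 1 := by
    rw [norm_mul, norm_zpow, zpow_neg]
    exact mul_inv_le_one_of_le₀ hd (by positivity)
  convert (R₀ ϖ).smul_mem ⟨_, hu⟩ hgen using 1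
  rw [Subring.smul_def, smul_smul, smul_single', mul_one, mul_assoc, ← zpow_add₀ hϖ,
    neg_add_cancel, zpow_zero, mul_one]

lemma single_zero_mem_A₀_iff (hϖ0 : 0 < ‖ϖ‖) (hϖ1 : ‖ϖ‖ ≤ 1) {m : ℕ} {d : k} :
    single (0, m) d ∈ A₀ ϖ ↔ ‖d‖ ≤ ‖ϖ‖ ^ ((m : ℤ) - m ^ 2) := by
  refine ⟨fun h => by simpa using norm_coeff_le_of_mem_A₀ hϖ0 hϖ1 h (0, m), fun hd => ?_⟩
  have hT : single (1, 0) 1 ∈ A₀ ϖ := Subring.subset_closure (Or.inr rfl)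
  have hmem : single (-(m : ℤ) ^ 2, m) d ∈ A₀ ϖ :=
    Subring.subset_closure <| Or.inl <| single_mem_R₀ (norm_pos_iff.mp hϖ0) le_rfl <| by
      rwa [neg_add_eq_sub]
  -- `d Z^m = T^(m²) · d T^(-m²) Z^m`, with `a = -m²` the extreme exponent allowed in `R₀`
  convert (A₀ ϖ).mul_mem ((A₀ ϖ).pow_mem hT (m ^ 2)) hmem using 1
  rw [single_pow, single_mul_single, one_pow, one_mul]
  congr 1
  ext <;> simp

lemma single_mem_span_R₀ (hϖ : ϖ ≠ 0) {a : ℤ} {b : ℕ} (hab : -(b : ℤ) ^ 2 ≤ a) (d : k) :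
    single (a, b) d ∈ Submodule.span k (R₀ ϖ : Set k[ℤ × ℕ]) := by
  have hgen : ϖ ^ (a + b) • single (a, b) (1 : k) ∈ R₀ ϖ :=
    Submodule.subset_span ⟨a, b, hab, rfl⟩
  convert Submodule.smul_mem _ (d * ϖ ^ (-(a + b))) (Submodule.subset_span hgen) using 1
  rw [smul_smul, smul_single', mul_one, mul_assoc, ← zpow_add₀ hϖ, neg_add_cancel, zpow_zero,
    mul_one]

lemma exists_pow_smul_pow_mem_A₀ (hϖ0 : 0 < ‖ϖ‖) (hϖ1 : ‖ϖ‖ < 1) (c : k) :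
    ∃ N : ℕ, ∀ m : ℕ, ϖ ^ N • (c • single ((0 : ℤ), (1 : ℕ)) (1 : k)) ^ m ∈ A₀ ϖ := by
  obtain ⟨N, hN⟩ := exists_pow_mul_pow_le_zpow hϖ0 hϖ1 (norm_nonneg c)
  refine ⟨N, fun m => ?_⟩
  rw [smul_single_zero_one_pow, smul_single', single_zero_mem_A₀_iff hϖ0 hϖ1.le, norm_mul,
    norm_pow, norm_pow]
  exact hN m

end NonUniformExample

open NonUniformExample

theorem rational_subset_not_uniform_general
    (k : Type*) [NontriviallyNormedField k] [IsUltrametricDist k]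
    (ϖ : k) (hϖ0 : 0 < ‖ϖ‖) (hϖ1 : ‖ϖ‖ < 1)
    (R₀ : Submodule (valuationSubring k) (AddMonoidAlgebra k (ℤ × ℕ)))
    (hR₀ : R₀ = Submodule.span (valuationSubring k)
      {x : AddMonoidAlgebra k (ℤ × ℕ) | ∃ (a : ℤ) (b : ℕ),
        -(b : ℤ) ^ 2 ≤ a ∧
        x = ϖ ^ (a + b) • AddMonoidAlgebra.single (a, b) (1 : k)})
    (Z : AddMonoidAlgebra k (ℤ × ℕ))
    (hZ : Z = AddMonoidAlgebra.single ((0 : ℤ), (1 : ℕ)) (1 : k))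
    (A₀ : Subring (AddMonoidAlgebra k (ℤ × ℕ)))
    (hA₀ : A₀ = Subring.closure
      ((R₀ : Set (AddMonoidAlgebra k (ℤ × ℕ))) ∪
        {AddMonoidAlgebra.single ((1 : ℤ), (0 : ℕ)) (1 : k)})) :
    Z ∈ A₀ ∧
    (∀ n : ℕ, 1 ≤ n → ((ϖ⁻¹) ^ n • Z) ^ (n + 1) ∈ A₀) ∧
    (∀ c : k, ∃ N : ℕ, ∀ m : ℕ, ϖ ^ N • (c • Z) ^ m ∈ A₀) ∧
    ¬ ∃ N : ℕ, ∀ x ∈ Submodule.span k (R₀ : Set (AddMonoidAlgebra k (ℤ × ℕ))),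
        (∃ N' : ℕ, ∀ m : ℕ, ϖ ^ N' • x ^ m ∈ A₀) → ϖ ^ N • x ∈ A₀ := by
  have hϖ : ϖ ≠ 0 := norm_pos_iff.mp hϖ0
  subst hZ
  obtain rfl : R₀ = NonUniformExample.R₀ ϖ := hR₀
  obtain rfl : A₀ = NonUniformExample.A₀ ϖ := hA₀
  have hmem {m : ℕ} {d : k} := single_zero_mem_A₀_iff (m := m) (d := d) hϖ0 hϖ1.le
  refine ⟨hmem.2 (by simp), fun n _ => ?_, exists_pow_smul_pow_mem_A₀ hϖ0 hϖ1, ?_⟩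
  · rw [smul_single_zero_one_pow, hmem, norm_pow, norm_pow, norm_inv, ← pow_mul, inv_pow,
      ← zpow_natCast, ← zpow_neg]
    exact (congrArg _ (by push_cast; ring)).le
  · rintro ⟨N, hN⟩
    have h := hN _ (Submodule.smul_mem _ (ϖ⁻¹ ^ (N + 1)) (single_mem_span_R₀ hϖ (by simp) 1))
      (exists_pow_smul_pow_mem_A₀ hϖ0 hϖ1 _)
    rw [smul_smul, pow_succ, ← mul_assoc, ← mul_pow, mul_inv_cancel₀ hϖ, one_pow, one_mul,
      smul_single', mul_one, hmem] at h
    exact absurd h (by simpa using (one_lt_inv₀ hϖ0).2 hϖ1)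

/-- With `R₀ ⊆ k[T,T⁻¹,Z]` spanned over `𝒪_k` by `(ϖT)ᵃ(ϖZ)ᵇ`
(`b ≥ 0`, `a ≥ -b²`), `R = kR₀` and `A₀ = R₀[T]`: we have `Z ∈ A₀`, and
`(ϖ⁻ⁿZ)^{n+1} ∈ A₀` for every `n ≥ 1`; hence every element of the line `kZ` is
power-bounded in `A = R` with ring of definition `A₀`, and `A` is not uniform. -/
theorem rational_subset_not_uniform
    (k : Type*) [NontriviallyNormedField k] [IsUltrametricDist k] [CompleteSpace k]
    (ϖ : k) (hϖ0 : 0 < ‖ϖ‖) (hϖ1 : ‖ϖ‖ < 1)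
    (R₀ : Submodule (valuationSubring k) (AddMonoidAlgebra k (ℤ × ℕ)))
    (hR₀ : R₀ = Submodule.span (valuationSubring k)
      {x : AddMonoidAlgebra k (ℤ × ℕ) | ∃ (a : ℤ) (b : ℕ),
        -(b : ℤ) ^ 2 ≤ a ∧
        x = ϖ ^ (a + b) • AddMonoidAlgebra.single (a, b) (1 : k)})
    (Z : AddMonoidAlgebra k (ℤ × ℕ))
    (hZ : Z = AddMonoidAlgebra.single ((0 : ℤ), (1 : ℕ)) (1 : k))
    (A₀ : Subring (AddMonoidAlgebra k (ℤ × ℕ)))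
    (hA₀ : A₀ = Subring.closure
      ((R₀ : Set (AddMonoidAlgebra k (ℤ × ℕ))) ∪
        {AddMonoidAlgebra.single ((1 : ℤ), (0 : ℕ)) (1 : k)})) :
    Z ∈ A₀ ∧
    (∀ n : ℕ, 1 ≤ n → ((ϖ⁻¹) ^ n • Z) ^ (n + 1) ∈ A₀) ∧
    (∀ c : k, ∃ N : ℕ, ∀ m : ℕ, ϖ ^ N • (c • Z) ^ m ∈ A₀) ∧
    ¬ ∃ N : ℕ, ∀ x ∈ Submodule.span k (R₀ : Set (AddMonoidAlgebra k (ℤ × ℕ))),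
        (∃ N' : ℕ, ∀ m : ℕ, ϖ ^ N' • x ^ m ∈ A₀) → ϖ ^ N • x ∈ A₀ :=
  rational_subset_not_uniform_general k ϖ hϖ0 hϖ1 R₀ hR₀ Z hZ A₀ hA₀
end

section
/- Let R₀ be the free 𝒪_k-submodule of k[T,T⁻¹,Z] spanned by (ϖT)ᵃ(ϖZ)ᵇ with b ≥ 0 and a ≥ -b², and R = kR₀. Then R° = R₀; in particular the Tate ring R (with ring of definition R₀) is uniform. -/
/-!
Write `k[T,T⁻¹,Z]` as `k[ℤ × ℕ]`, the point `(a, b)` standing for `TᵃZᵇ`. Then `R₀` is described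
coefficientwise: the coefficient of `TᵃZᵇ` vanishes unless `a ≥ -b²`, and otherwise has norm at
most `‖ϖ‖^(a+b)`. The exponents with `a ≥ -b²` form an additive monoid, so `R₀` is a ring.

Suppose `ϖᴺ rᵐ ∈ R₀` for all `m`, and let `u` be the lexicographically largest monomial of `r`.
The coefficient of `rᵐ` at `m • u` is exactly `r_uᵐ`, so `m = 1` puts `u` in the cone, and then
`‖ϖ‖ᴺ ‖r_u‖ᵐ ≤ (‖ϖ‖^(a+b))ᵐ` for all `m` forces `‖r_u‖ ≤ ‖ϖ‖^(a+b)`. Hence the leading term of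
`r` lies in `R₀`, so `r` minus it is again power-bounded with the same `N`, and we conclude by
induction on the size of the support.
-/

open AddMonoidAlgebra Submodule
open scoped Pointwise

theorem le_of_forall_mul_pow_le {𝕜 : Type*} [Field 𝕜] [LinearOrder 𝕜] [IsStrictOrderedRing 𝕜]
    [Archimedean 𝕜] {C x y : 𝕜} (hC : 0 < C) (hy : 0 < y) (h : ∀ m : ℕ, C * x ^ m ≤ y ^ m) :
    x ≤ y := by
  by_contra! hxy
  obtain ⟨m, hm⟩ := pow_unbounded_of_one_lt C⁻¹ ((one_lt_div hy).2 hxy)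
  rw [div_pow, inv_lt_iff_one_lt_mul₀ hC, div_mul_eq_mul_div, one_lt_div (pow_pos hy m),
    mul_comm] at hm
  exact (h m).not_gt hm

section LeadingTerm

variable {R A B : Type*} [Semiring R] [AddCommMonoid A] [AddCommMonoid B] [LinearOrder B]
  [IsOrderedAddMonoid B] {D : A → B}

theorem AddMonoidAlgebra.coeff_mul_add_of_forall_le [IsCancelAdd B] (hD : D.Injective)
    (hadd : ∀ a b, D (a + b) = D a + D b) {f g : R[A]} {u v : A}
    (hf : ∀ a ∈ f.coeff.support, D a ≤ D u) (hg : ∀ b ∈ g.coeff.support, D b ≤ D v) :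
    (f * g).coeff (u + v) = f.coeff u * g.coeff v := by
  refine coeff_mul_add_of_uniqueAdd fun a b ha hb hab => ?_
  have hsum : D a + D b = D u + D v := by rw [← hadd, ← hadd, hab]
  have hDa : D a = D u := (hf a ha).antisymm <| not_lt.1 fun hlt =>
    (add_lt_add_of_lt_of_le hlt (hg b hb)).ne hsum
  have hDb : D b = D v := (hg b hb).antisymm <| not_lt.1 fun hlt =>
    (add_lt_add_of_le_of_lt (hf a ha) hlt).ne hsum
  exact ⟨hD hDa, hD hDb⟩

theorem AddMonoidAlgebra.forall_le_of_mem_support_pow (hadd : ∀ a b, D (a + b) = D a + D b)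
    {f : R[A]} {u : A} (hf : ∀ a ∈ f.coeff.support, D a ≤ D u) (m : ℕ) :
    ∀ a ∈ (f ^ m).coeff.support, D a ≤ D (m • u) := by
  classical
  induction m with
  | zero =>
    intro a ha
    rw [pow_zero] at ha
    rw [Finset.mem_singleton.1 (support_coeff_one_subset ha), zero_nsmul]
  | succ m ih =>
    intro a ha
    rw [pow_succ] at ha
    obtain ⟨x, hx, y, hy, rfl⟩ := Finset.mem_add.1 (support_coeff_mul_subset _ _ ha)
    rw [hadd, succ_nsmul, hadd]
    exact add_le_add (ih x hx) (hf y hy)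

theorem AddMonoidAlgebra.coeff_pow_nsmul_of_forall_le [IsCancelAdd B] (hD : D.Injective)
    (hadd : ∀ a b, D (a + b) = D a + D b) {f : R[A]} {u : A}
    (hf : ∀ a ∈ f.coeff.support, D a ≤ D u) (m : ℕ) :
    (f ^ m).coeff (m • u) = f.coeff u ^ m := by
  induction m with
  | zero => simp [one_def]
  | succ m ih =>
    rw [pow_succ, succ_nsmul, coeff_mul_add_of_forall_le hD hadd
      (forall_le_of_mem_support_pow hadd hf m) hf, ih, pow_succ]

end LeadingTerm

theorem Subring.pow_smul_sub_pow_mem {K A : Type*} [CommSemiring K] [CommRing A] [Algebra K A]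
    (S : Subring A) {ϖ : K} {N : ℕ} {r t : A} (hr : ∀ m : ℕ, ϖ ^ N • r ^ m ∈ S) (ht : t ∈ S)
    (m : ℕ) : ϖ ^ N • (r - t) ^ m ∈ S := by
  rw [sub_eq_add_neg, add_pow, Finset.smul_sum]
  refine S.sum_mem fun j _ => ?_
  rw [← smul_mul_assoc, ← smul_mul_assoc]
  exact S.mul_mem (S.mul_mem (hr j) (S.pow_mem (S.neg_mem ht) _)) (natCast_mem S _)

def coeffBall {k G : Type*} [NormedField k] [IsUltrametricDist k] (w : G → ℝ) (hw : 0 ≤ w) :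
    Submodule (valuationSubring k) k[G] where
  carrier := {r | ∀ p, ‖r.coeff p‖ ≤ w p}
  zero_mem' p := by simpa using hw p
  add_mem' {x y} hx hy p :=
    (IsUltrametricDist.norm_add_le_max _ _).trans (max_le (hx p) (hy p))
  smul_mem' c r hr p := by
    change ‖(c : k) * r.coeff p‖ ≤ w p
    rw [norm_mul]
    exact (mul_le_of_le_one_left (norm_nonneg _) c.2).trans (hr p)

namespace ConeAlgebra

def cone : AddSubmonoid (ℤ × ℕ) where
  carrier := {p | -(p.2 : ℤ) ^ 2 ≤ p.1}
  zero_mem' := by simp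
  add_mem' {p q} hp hq := by
    simp only [Set.mem_ofPred_eq, Prod.fst_add, Prod.snd_add, Nat.cast_add] at *
    nlinarith [mul_nonneg (Int.natCast_nonneg p.2) (Int.natCast_nonneg q.2)]

variable {k : Type*} [NormedField k]

open Classical in
/-- The norm bound on the coefficient of `TᵃZᵇ` in `R₀`, since `(ϖT)ᵃ(ϖZ)ᵇ = ϖ^(a+b) TᵃZᵇ`. -/
noncomputable def weight (ϖ : k) (p : ℤ × ℕ) : ℝ := if p ∈ cone then ‖ϖ‖ ^ (p.1 + p.2) else 0

theorem weight_nonneg (ϖ : k) : 0 ≤ weight ϖ := fun p => by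
  unfold weight
  split_ifs <;> positivity

theorem weight_nsmul (ϖ : k) {u : ℤ × ℕ} (hu : u ∈ cone) (m : ℕ) :
    weight ϖ (m • u) = weight ϖ u ^ m := by
  rw [weight, weight, if_pos (cone.nsmul_mem hu m), if_pos hu, ← zpow_natCast, ← zpow_mul,
    Prod.smul_fst, Prod.smul_snd, nsmul_eq_mul, nsmul_eq_mul]
  push_cast
  ring_nf

noncomputable def generators (ϖ : k) : Set k[ℤ × ℕ] :=
  {x | ∃ (a : ℤ) (b : ℕ), -(b : ℤ) ^ 2 ≤ a ∧ x = ϖ ^ (a + b) • single (a, b) (1 : k)}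

variable {ϖ : k}

theorem generators_mul_subset (hϖ : ϖ ≠ 0) : generators ϖ * generators ϖ ⊆ generators ϖ := by
  rintro _ ⟨_, ⟨a, b, hab, rfl⟩, _, ⟨a', b', hab', rfl⟩, rfl⟩
  refine ⟨a + a', b + b', cone.add_mem (x := (a, b)) (y := (a', b')) hab hab', ?_⟩
  dsimp only
  rw [smul_mul_smul_comm, single_mul_single, one_mul, ← zpow_add₀ hϖ, Prod.mk_add_mk]
  push_cast
  ring_nf

variable [IsUltrametricDist k]

noncomputable def ringOfDefinition (ϖ : k) : Submodule (valuationSubring k) k[ℤ × ℕ] :=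
  span (valuationSubring k) (generators ϖ)

theorem ringOfDefinition_le_coeffBall :
    ringOfDefinition ϖ ≤ coeffBall (weight ϖ) (weight_nonneg ϖ) := by
  refine span_le.2 ?_
  rintro _ ⟨a, b, hab, rfl⟩ p
  classical
  rw [smul_single, smul_eq_mul, mul_one, coeff_single, Finsupp.single_apply]
  split_ifs with hp
  · rw [← hp, weight, if_pos (show (a, b) ∈ cone from hab), norm_zpow]
  · simpa using weight_nonneg ϖ p

theorem single_mem_ringOfDefinition (hϖ : ϖ ≠ 0) {p : ℤ × ℕ} {c : k} (hc : ‖c‖ ≤ weight ϖ p) :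
    single p c ∈ ringOfDefinition ϖ := by
  obtain ⟨a, b⟩ := p
  unfold weight at hc
  split_ifs at hc with hab
  · set π := ϖ ^ (a + b : ℤ)
    have hquot : ‖c / π‖ ≤ 1 := by
      rw [norm_div, norm_zpow]
      exact div_le_one_of_le₀ hc (by positivity)
    have hsingle : single (a, b) c
        = (⟨c / π, hquot⟩ : valuationSubring k) • (π • single (a, b) 1) := by
      change _ = (c / π) • (π • single (a, b) (1 : k) : k[ℤ × ℕ])
      rw [smul_smul, div_mul_cancel₀ _ (zpow_ne_zero _ hϖ), smul_single, smul_eq_mul, mul_one]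
    rw [hsingle]
    exact smul_mem _ _ (subset_span ⟨a, b, hab, rfl⟩)
  · rw [norm_le_zero_iff.1 hc, single_zero]
    exact zero_mem _

theorem one_mem_ringOfDefinition : (1 : k[ℤ × ℕ]) ∈ ringOfDefinition ϖ :=
  subset_span ⟨0, 0, le_rfl, by simp [one_def]; rfl⟩

theorem mul_mem_ringOfDefinition (hϖ : ϖ ≠ 0) {x y : k[ℤ × ℕ]} (hx : x ∈ ringOfDefinition ϖ)
    (hy : y ∈ ringOfDefinition ϖ) : x * y ∈ ringOfDefinition ϖ := by
  have hle : ringOfDefinition ϖ * ringOfDefinition ϖ ≤ ringOfDefinition ϖ := by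
    rw [ringOfDefinition, span_mul_span]
    exact span_mono (generators_mul_subset hϖ)
  exact hle (mul_mem_mul hx hy)

noncomputable def ringOfDefinitionSubring (hϖ : ϖ ≠ 0) : Subring k[ℤ × ℕ] :=
  ((ringOfDefinition ϖ).toSubalgebra one_mem_ringOfDefinition
    fun _ _ => mul_mem_ringOfDefinition hϖ).toSubring

theorem norm_coeff_le_weight_of_pow_smul_mem (hϖ : ϖ ≠ 0) {N : ℕ} {r : k[ℤ × ℕ]}
    (hr : ∀ m : ℕ, ϖ ^ N • r ^ m ∈ ringOfDefinition ϖ) {u : ℤ × ℕ}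
    (hu : ∀ p ∈ r.coeff.support, toLex p ≤ toLex u) : ‖r.coeff u‖ ≤ weight ϖ u := by
  have hbound (m : ℕ) : ‖ϖ‖ ^ N * ‖r.coeff u‖ ^ m ≤ weight ϖ (m • u) := by
    have := ringOfDefinition_le_coeffBall (hr m) (m • u)
    rwa [coeff_smul_apply,
      coeff_pow_nsmul_of_forall_le (B := Lex (ℤ × ℕ)) toLex.injective (fun _ _ => rfl) hu,
      smul_eq_mul, norm_mul, norm_pow, norm_pow] at this
  by_cases hcone : u ∈ cone
  · have hpos : 0 < weight ϖ u := by
      rw [weight, if_pos hcone]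
      exact zpow_pos (norm_pos_iff.2 hϖ) _
    exact le_of_forall_mul_pow_le (by positivity) hpos fun m => weight_nsmul ϖ hcone m ▸ hbound m
  · have h1 := hbound 1
    rw [one_nsmul, pow_one, weight, if_neg hcone] at h1
    exact (nonpos_of_mul_nonpos_right h1 (by positivity)).trans (weight_nonneg ϖ u)

theorem mem_ringOfDefinition_of_pow_smul_mem (hϖ : ϖ ≠ 0) {N : ℕ} {r : k[ℤ × ℕ]}
    (hr : ∀ m : ℕ, ϖ ^ N • r ^ m ∈ ringOfDefinition ϖ) : r ∈ ringOfDefinition ϖ := by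
  classical
  induction hcard : r.coeff.support.card using Nat.strong_induction_on generalizing r with
  | _ n ih =>
    obtain rfl | hne := eq_or_ne r 0
    · exact zero_mem _
    have hsupp : r.coeff.support.Nonempty :=
      Finsupp.support_nonempty_iff.2 (coeff_eq_zero.not.2 hne)
    obtain ⟨u, hu, hmax⟩ := r.coeff.support.exists_max_image toLex hsupp
    have hlead : single u (r.coeff u) ∈ ringOfDefinition ϖ :=
      single_mem_ringOfDefinition hϖ (norm_coeff_le_weight_of_pow_smul_mem hϖ hr hmax)
    have htail : r.erase u ∈ ringOfDefinition ϖ := by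
      refine ih _ ?_ (r := r.erase u) ?_ rfl
      · rw [← hcard, coeff_erase, Finsupp.support_erase]
        exact Finset.card_erase_lt_of_mem hu
      · rw [eq_sub_of_add_eq' (single_add_erase u r)]
        exact (ringOfDefinitionSubring hϖ).pow_smul_sub_pow_mem hr hlead
    rw [← single_add_erase u r]
    exact add_mem hlead htail

theorem exists_pow_smul_mem_iff (hϖ : ϖ ≠ 0) {r : k[ℤ × ℕ]} :
    (∃ N : ℕ, ∀ m : ℕ, ϖ ^ N • r ^ m ∈ ringOfDefinition ϖ) ↔ r ∈ ringOfDefinition ϖ :=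
  ⟨fun ⟨_, h⟩ => mem_ringOfDefinition_of_pow_smul_mem hϖ h, fun hr => ⟨0, fun m => by
    rw [pow_zero, one_smul]
    exact (ringOfDefinitionSubring hϖ).pow_mem hr m⟩⟩

end ConeAlgebra

theorem uniform_example_powerBounded_eq_general
    (k : Type*) [NontriviallyNormedField k] [IsUltrametricDist k]
    (ϖ : k) (hϖ0 : 0 < ‖ϖ‖)
    (R₀ : Submodule (valuationSubring k) (AddMonoidAlgebra k (ℤ × ℕ)))
    (hR₀ : R₀ = Submodule.span (valuationSubring k)
      {x : AddMonoidAlgebra k (ℤ × ℕ) | ∃ (a : ℤ) (b : ℕ),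
        -(b : ℤ) ^ 2 ≤ a ∧
        x = ϖ ^ (a + b) • AddMonoidAlgebra.single (a, b) (1 : k)}) :
    (∀ r ∈ Submodule.span k (R₀ : Set (AddMonoidAlgebra k (ℤ × ℕ))),
      ((∃ N : ℕ, ∀ m : ℕ, ϖ ^ N • r ^ m ∈ R₀) ↔ r ∈ R₀)) ∧
    ∃ N : ℕ, ∀ r ∈ Submodule.span k (R₀ : Set (AddMonoidAlgebra k (ℤ × ℕ))),
      (∃ N' : ℕ, ∀ m : ℕ, ϖ ^ N' • r ^ m ∈ R₀) → ϖ ^ N • r ∈ R₀ := by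
  have hϖ : ϖ ≠ 0 := norm_pos_iff.1 hϖ0
  obtain rfl : R₀ = ConeAlgebra.ringOfDefinition ϖ := hR₀
  exact ⟨fun r _ => ConeAlgebra.exists_pow_smul_mem_iff hϖ,
    0, fun r _ h => by simpa using (ConeAlgebra.exists_pow_smul_mem_iff hϖ).1 h⟩

/-- With `R₀ ⊆ k[T,T⁻¹,Z]` spanned over `𝒪_k` by `(ϖT)ᵃ(ϖZ)ᵇ`
(`b ≥ 0`, `a ≥ -b²`) and `R = kR₀`, the power-bounded subring of the Tate ring `R`
(with ring of definition `R₀`) equals `R₀`; in particular `R` is uniform. -/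
theorem uniform_example_powerBounded_eq
    (k : Type*) [NontriviallyNormedField k] [IsUltrametricDist k] [CompleteSpace k]
    (ϖ : k) (hϖ0 : 0 < ‖ϖ‖) (hϖ1 : ‖ϖ‖ < 1)
    (R₀ : Submodule (valuationSubring k) (AddMonoidAlgebra k (ℤ × ℕ)))
    (hR₀ : R₀ = Submodule.span (valuationSubring k)
      {x : AddMonoidAlgebra k (ℤ × ℕ) | ∃ (a : ℤ) (b : ℕ),
        -(b : ℤ) ^ 2 ≤ a ∧
        x = ϖ ^ (a + b) • AddMonoidAlgebra.single (a, b) (1 : k)}) :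
    (∀ r ∈ Submodule.span k (R₀ : Set (AddMonoidAlgebra k (ℤ × ℕ))),
      ((∃ N : ℕ, ∀ m : ℕ, ϖ ^ N • r ^ m ∈ R₀) ↔ r ∈ R₀)) ∧
    ∃ N : ℕ, ∀ r ∈ Submodule.span k (R₀ : Set (AddMonoidAlgebra k (ℤ × ℕ))),
      (∃ N' : ℕ, ∀ m : ℕ, ϖ ^ N' • r ^ m ∈ R₀) → ϖ ^ N • r ∈ R₀ :=
  uniform_example_powerBounded_eq_general k ϖ hϖ0 R₀ hR₀
end

section
/- Let R₀ be the free 𝒪_k-submodule of k[P,P⁻¹,Q,Q⁻¹,T,T⁻¹,Z] generated by the monomials ϖᵈPᵖQ^qTᵃZᵉ with d,p,q,a ∈ ℤ, e ∈ ℤ_{≥0}, satisfying d = max{p+q+a, p+q-a, p+a, q-a}, and (if e=0) p ≥ 0 and q ≥ 0, and (if e=1) p ≥ 0 or q ≥ 0. Then R₀ is a subring: 1 ∈ R₀ and the product of any two such generators lies in R₀. -/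
/-!
The exponent `d(p, q, a) = max {p+q+a, p+q-a, p+a, q-a}` is a maximum of linear forms, hence
subadditive, and the conditions on `(p, q, e)` are preserved by addition. So the product of two
generators is `ϖ ^ (d₁ + d₂ - d)` times the generator of the summed exponents, and
`d₁ + d₂ - d ≥ 0` makes that coefficient an element of `𝒪_k`.
-/

open AddMonoidAlgebra
open scoped Pointwise

theorem Submodule.mul_mem_span_of_mul_subset {R A : Type*} [CommSemiring R] [Semiring A]
    [Algebra R A] {S : Set A} (hS : S * S ⊆ (span R S : Set A)) {x y : A} (hx : x ∈ span R S)
    (hy : y ∈ span R S) : x * y ∈ span R S := by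
  have hxy : x * y ∈ span R (S * S) := span_mul_span R S S ▸ mul_mem_mul hx hy
  exact span_le.2 hS hxy

def monomialExponent (p q a : ℤ) : ℤ :=
  max (max (p + q + a) (p + q - a)) (max (p + a) (q - a))

theorem monomialExponent_add_le (p₁ q₁ a₁ p₂ q₂ a₂ : ℤ) :
    monomialExponent (p₁ + p₂) (q₁ + q₂) (a₁ + a₂) ≤
      monomialExponent p₁ q₁ a₁ + monomialExponent p₂ q₂ a₂ := by
  unfold monomialExponent
  omega

noncomputable section Monomials

variable {k : Type*} [Field k] (ϖ : k)

def monomial (p q a : ℤ) (e : ℕ) : AddMonoidAlgebra k (ℤ × ℤ × ℤ × ℕ) :=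
  ϖ ^ monomialExponent p q a • single (p, q, a, e) 1

def admissibleMonomials : Set (AddMonoidAlgebra k (ℤ × ℤ × ℤ × ℕ)) :=
  {x | ∃ (p q a : ℤ) (e : ℕ), (e = 0 → 0 ≤ p ∧ 0 ≤ q) ∧ (e = 1 → 0 ≤ p ∨ 0 ≤ q) ∧
    x = monomial ϖ p q a e}

theorem monomial_zero : monomial ϖ 0 0 0 0 = 1 := by
  simp [monomial, monomialExponent, one_def, Prod.mk_zero_zero]

theorem one_mem_admissibleMonomials : 1 ∈ admissibleMonomials ϖ :=
  ⟨0, 0, 0, 0, fun _ => ⟨le_rfl, le_rfl⟩, fun h => absurd h zero_ne_one, (monomial_zero ϖ).symm⟩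

theorem monomial_mul_monomial {ϖ : k} (hϖ : ϖ ≠ 0) (p₁ q₁ a₁ p₂ q₂ a₂ : ℤ) (e₁ e₂ : ℕ) :
    monomial ϖ p₁ q₁ a₁ e₁ * monomial ϖ p₂ q₂ a₂ e₂ =
      ϖ ^ (monomialExponent p₁ q₁ a₁ + monomialExponent p₂ q₂ a₂ -
          monomialExponent (p₁ + p₂) (q₁ + q₂) (a₁ + a₂)) •
        monomial ϖ (p₁ + p₂) (q₁ + q₂) (a₁ + a₂) (e₁ + e₂) := by
  simp only [monomial, smul_mul_smul_comm, single_mul_single, mul_one, smul_smul,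
    ← zpow_add₀ hϖ, sub_add_cancel]
  rfl

end Monomials

theorem admissibleMonomials_mul_subset {k : Type*} [NormedField k] [IsUltrametricDist k]
    {ϖ : k} (hϖ0 : 0 < ‖ϖ‖) (hϖ1 : ‖ϖ‖ ≤ 1) :
    admissibleMonomials ϖ * admissibleMonomials ϖ ⊆
      (Submodule.span (valuationSubring k) (admissibleMonomials ϖ) : Set k[ℤ × ℤ × ℤ × ℕ]) := by
  rw [Set.mul_subset_iff]
  rintro _ ⟨p₁, q₁, a₁, e₁, h₁0, h₁1, rfl⟩ _ ⟨p₂, q₂, a₂, e₂, h₂0, h₂1, rfl⟩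
  have hsum : monomial ϖ (p₁ + p₂) (q₁ + q₂) (a₁ + a₂) (e₁ + e₂) ∈ admissibleMonomials ϖ :=
    ⟨_, _, _, _, by omega, by omega, rfl⟩
  have hcoeff : ‖ϖ ^ (monomialExponent p₁ q₁ a₁ + monomialExponent p₂ q₂ a₂ -
      monomialExponent (p₁ + p₂) (q₁ + q₂) (a₁ + a₂))‖ ≤ 1 := by
    rw [norm_zpow]
    exact zpow_le_one₀ hϖ0 hϖ1 (sub_nonneg.2 (monomialExponent_add_le ..))
  rw [monomial_mul_monomial (norm_pos_iff.1 hϖ0)]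
  exact Submodule.smul_mem _ (⟨_, hcoeff⟩ : valuationSubring k) (Submodule.subset_span hsum)

theorem non_sheafy_uniform_ring_of_definition_is_subring_general
    (k : Type*) [NontriviallyNormedField k] [IsUltrametricDist k]
    (ϖ : k) (hϖ0 : 0 < ‖ϖ‖) (hϖ1 : ‖ϖ‖ < 1)
    (R₀ : Submodule (valuationSubring k) (AddMonoidAlgebra k (ℤ × ℤ × ℤ × ℕ)))
    (hR₀ : R₀ = Submodule.span (valuationSubring k)
      {x : AddMonoidAlgebra k (ℤ × ℤ × ℤ × ℕ) | ∃ (p q a : ℤ) (e : ℕ),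
        (e = 0 → 0 ≤ p ∧ 0 ≤ q) ∧ (e = 1 → 0 ≤ p ∨ 0 ≤ q) ∧
        x = ϖ ^ (max (max (p + q + a) (p + q - a)) (max (p + a) (q - a))) •
          AddMonoidAlgebra.single (p, q, a, e) (1 : k)}) :
    (1 : AddMonoidAlgebra k (ℤ × ℤ × ℤ × ℕ)) ∈ R₀ ∧
    ∀ x ∈ R₀, ∀ y ∈ R₀, x * y ∈ R₀ := by
  change R₀ = Submodule.span (valuationSubring k) (admissibleMonomials ϖ) at hR₀
  subst hR₀
  exact ⟨Submodule.subset_span (one_mem_admissibleMonomials ϖ), fun _ hx _ hy =>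
    Submodule.mul_mem_span_of_mul_subset (admissibleMonomials_mul_subset hϖ0 hϖ1.le) hx hy⟩

/-- The free `𝒪_k`-submodule `R₀` of `k[P,P⁻¹,Q,Q⁻¹,T,T⁻¹,Z]` generated
by the monomials `ϖᵈPᵖQ^qTᵃZᵉ` with `d = max{p+q+a, p+q-a, p+a, q-a}`, with `p,q ≥ 0`
if `e = 0` and (`p ≥ 0` or `q ≥ 0`) if `e = 1`, is a subring: it contains `1` and is
closed under multiplication. Here the ring is modelled as the monoid algebra on
`ℤ × ℤ × ℤ × ℕ`. -/
theorem non_sheafy_uniform_ring_of_definition_is_subring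
    (k : Type*) [NontriviallyNormedField k] [IsUltrametricDist k] [CompleteSpace k]
    (ϖ : k) (hϖ0 : 0 < ‖ϖ‖) (hϖ1 : ‖ϖ‖ < 1)
    (R₀ : Submodule (valuationSubring k) (AddMonoidAlgebra k (ℤ × ℤ × ℤ × ℕ)))
    (hR₀ : R₀ = Submodule.span (valuationSubring k)
      {x : AddMonoidAlgebra k (ℤ × ℤ × ℤ × ℕ) | ∃ (p q a : ℤ) (e : ℕ),
        (e = 0 → 0 ≤ p ∧ 0 ≤ q) ∧ (e = 1 → 0 ≤ p ∨ 0 ≤ q) ∧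
        x = ϖ ^ (max (max (p + q + a) (p + q - a)) (max (p + a) (q - a))) •
          AddMonoidAlgebra.single (p, q, a, e) (1 : k)}) :
    (1 : AddMonoidAlgebra k (ℤ × ℤ × ℤ × ℕ)) ∈ R₀ ∧
    ∀ x ∈ R₀, ∀ y ∈ R₀, x * y ∈ R₀ :=
  non_sheafy_uniform_ring_of_definition_is_subring_general k ϖ hϖ0 hϖ1 R₀ hR₀
end

section
/- Let R₀ ⊆ k[P,P⁻¹,Q,Q⁻¹,T,T⁻¹,Z] be the free 𝒪_k-submodule spanned by ϖᵈPᵖQ^qTᵃZᵉ with d = max{p+q+a, p+q-a, p+a, q-a}, e ≥ 0, p,q ≥ 0 if e = 0, and (p ≥ 0 or q ≥ 0) if e = 1. Let A₀ = R₀[P,Q]. Then for all n ≥ 0, ϖ⁻ⁿZ ∈ A₀[T] and ϖ⁻ⁿZ ∈ A₀[T⁻¹], but ϖ⁻¹Z ∉ A₀. -/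
namespace AddMonoidAlgebra

section BoundedCoeff

variable {k M : Type*} [NormedField k] [IsUltrametricDist k] [AddMonoid M]

def boundedCoeffSubring (D : Set M) (b : M → ℝ)
    (hD : ∀ m₁ m₂, m₁ + m₂ ∈ D → m₁ ∈ D ∧ m₂ ∈ D) (hb : ∀ m, 0 ≤ b m) (hb₀ : 1 ≤ b 0)
    (hmul : ∀ m₁ m₂, m₁ + m₂ ∈ D → b m₁ * b m₂ ≤ b (m₁ + m₂)) : Subring k[M] where
  carrier := {x | ∀ m ∈ D, ‖x.coeff m‖ ≤ b m}
  zero_mem' m _ := by simpa using hb m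
  one_mem' m _ := by
    classical
    rw [one_def, coeff_single, Finsupp.single_apply]
    split_ifs with h
    · simpa [← h] using hb₀
    · simpa using hb m
  neg_mem' {x} hx m hm := by simpa using hx m hm
  add_mem' {x y} hx hy m hm :=
    (IsUltrametricDist.norm_add_le_max _ _).trans (max_le (hx m hm) (hy m hm))
  mul_mem' {x y} hx hy m hm := by
    classical
    rw [coeff_mul]
    refine IsUltrametricDist.norm_sum_le_of_forall_le_of_nonneg (hb m) fun m₁ _ ↦ ?_
    refine IsUltrametricDist.norm_sum_le_of_forall_le_of_nonneg (hb m) fun m₂ _ ↦ ?_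
    dsimp only
    split_ifs with h
    · subst h
      obtain ⟨hm₁, hm₂⟩ := hD m₁ m₂ hm
      rw [norm_mul]
      exact (mul_le_mul (hx m₁ hm₁) (hy m₂ hm₂) (norm_nonneg _) (hb m₁)).trans (hmul m₁ m₂ hm)
    · simpa using hb m

variable {D : Set M} {b : M → ℝ} {hD : ∀ m₁ m₂, m₁ + m₂ ∈ D → m₁ ∈ D ∧ m₂ ∈ D}
  {hb : ∀ m, 0 ≤ b m} {hb₀ : 1 ≤ b 0} {hmul : ∀ m₁ m₂, m₁ + m₂ ∈ D → b m₁ * b m₂ ≤ b (m₁ + m₂)}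

theorem mem_boundedCoeffSubring {x : k[M]} :
    x ∈ boundedCoeffSubring D b hD hb hb₀ hmul ↔ ∀ m ∈ D, ‖x.coeff m‖ ≤ b m :=
  Iff.rfl

theorem single_mem_boundedCoeffSubring_iff {m : M} {c : k} :
    single m c ∈ boundedCoeffSubring D b hD hb hb₀ hmul ↔ (m ∈ D → ‖c‖ ≤ b m) := by
  classical
  simp only [mem_boundedCoeffSubring, coeff_single, Finsupp.single_apply]
  refine ⟨fun h hm ↦ by simpa using h m hm, fun h m' _ ↦ ?_⟩
  split_ifs with hm
  · subst hm
    exact h ‹_›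
  · simpa using hb m'

theorem smul_mem_boundedCoeffSubring {c : k} (hc : ‖c‖ ≤ 1) {x : k[M]}
    (hx : x ∈ boundedCoeffSubring D b hD hb hb₀ hmul) :
    c • x ∈ boundedCoeffSubring D b hD hb hb₀ hmul := fun m hm ↦ by
  rw [coeff_smul_apply, norm_smul]
  exact (mul_le_of_le_one_left (norm_nonneg _) hc).trans (hx m hm)

end BoundedCoeff

theorem smul_single_eq_smul_single_mul_pow_mul_pow {R M : Type*} [CommSemiring R] [AddMonoid M]
    (c : R) {m m' u v : M} {i j : ℕ} (h : m' + i • u + j • v = m) :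
    c • single m (1 : R) = c • single m' 1 * single u 1 ^ i * single v 1 ^ j := by
  simp only [single_pow, one_pow, smul_single', single_mul_single, mul_one, h]

end AddMonoidAlgebra

theorem zpow_mul_zpow_le_of_le {w : ℝ} (hw₀ : 0 < w) (hw₁ : w ≤ 1) {x y z : ℤ}
    (h : z ≤ x + y) : w ^ x * w ^ y ≤ w ^ z := by
  rw [← zpow_add₀ hw₀.ne']
  exact zpow_right_anti₀ hw₀ hw₁ h

noncomputable def nonSheafyBound (w : ℝ) : ℤ × ℤ × ℤ × ℕ → ℝ
  | (p, q, a, 0) => if 0 ≤ p ∧ 0 ≤ q then w ^ |a| else 0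
  | (p, q, a, 1) => max (if 0 ≤ p then w ^ a else 0) (if 0 ≤ q then w ^ (-a) else 0)
  | _ => 1

section NonSheafyBound

variable {w : ℝ}

theorem nonSheafyBound_nonneg (hw : 0 ≤ w) (m : ℤ × ℤ × ℤ × ℕ) : 0 ≤ nonSheafyBound w m := by
  unfold nonSheafyBound
  split <;> positivity

variable (hw₀ : 0 < w) (hw₁ : w ≤ 1)
include hw₀ hw₁

theorem nonSheafyBound_zero_mul_le (p₁ q₁ a₁ p₂ q₂ a₂ : ℤ) {e : ℕ} (he : e ≤ 1) :
    nonSheafyBound w (p₁, q₁, a₁, 0) * nonSheafyBound w (p₂, q₂, a₂, e) ≤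
      nonSheafyBound w (p₁ + p₂, q₁ + q₂, a₁ + a₂, e) := by
  by_cases h₁ : 0 ≤ p₁ ∧ 0 ≤ q₁
  swap
  · simpa [nonSheafyBound, h₁] using nonSheafyBound_nonneg hw₀.le _
  have step {P P' : Prop} [Decidable P] [Decidable P'] {x y : ℤ} (hP : P → P')
      (hxy : y ≤ |a₁| + x) : w ^ |a₁| * (if P then w ^ x else 0) ≤ if P' then w ^ y else 0 := by
    by_cases hp : P
    · simp only [hp, hP hp, if_true]
      exact zpow_mul_zpow_le_of_le hw₀ hw₁ hxy
    · simp only [hp, if_false, mul_zero]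
      split_ifs <;> positivity
  interval_cases e
  · simp only [nonSheafyBound, if_pos h₁]
    exact step (by omega) (abs_add_le a₁ a₂)
  · simp only [nonSheafyBound, if_pos h₁]
    rw [mul_max_of_nonneg _ _ (by positivity)]
    exact max_le_max (step (by omega) (by linarith [le_abs_self a₁]))
      (step (by omega) (by linarith [neg_le_abs a₁]))

theorem nonSheafyBound_mul_le {m₁ m₂ : ℤ × ℤ × ℤ × ℕ} (h : (m₁ + m₂).2.2.2 ≤ 1) :
    nonSheafyBound w m₁ * nonSheafyBound w m₂ ≤ nonSheafyBound w (m₁ + m₂) := by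
  obtain ⟨p₁, q₁, a₁, e₁⟩ := m₁
  obtain ⟨p₂, q₂, a₂, e₂⟩ := m₂
  change e₁ + e₂ ≤ 1 at h
  obtain rfl | rfl : e₁ = 0 ∨ e₁ = 1 := by omega
  · simpa using nonSheafyBound_zero_mul_le hw₀ hw₁ p₁ q₁ a₁ p₂ q₂ a₂ (e := e₂) (by omega)
  · obtain rfl : e₂ = 0 := by omega
    rw [mul_comm, add_comm]
    exact nonSheafyBound_zero_mul_le hw₀ hw₁ p₂ q₂ a₂ p₁ q₁ a₁ le_rfl

end NonSheafyBound

open AddMonoidAlgebra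

noncomputable def nonSheafySubring (k : Type*) [NormedField k] [IsUltrametricDist k] {w : ℝ}
    (hw₀ : 0 < w) (hw₁ : w ≤ 1) : Subring (AddMonoidAlgebra k (ℤ × ℤ × ℤ × ℕ)) :=
  boundedCoeffSubring {m | m.2.2.2 ≤ 1} (nonSheafyBound w)
    (fun m₁ m₂ h ↦ ⟨(Nat.le_add_right _ _).trans h, (Nat.le_add_left _ _).trans h⟩)
    (nonSheafyBound_nonneg hw₀.le)
    (show 1 ≤ nonSheafyBound w (0, 0, 0, 0) by simp [nonSheafyBound])
    (fun _ _ h ↦ nonSheafyBound_mul_le hw₀ hw₁ h)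

def nonSheafyGenerators (k : Type*) [NormedField k] (ϖ : k) :
    Set (AddMonoidAlgebra k (ℤ × ℤ × ℤ × ℕ)) :=
  {x | ∃ (p q a : ℤ) (e : ℕ), (e = 0 → 0 ≤ p ∧ 0 ≤ q) ∧ (e = 1 → 0 ≤ p ∨ 0 ≤ q) ∧
    x = ϖ ^ (max (max (p + q + a) (p + q - a)) (max (p + a) (q - a))) • single (p, q, a, e) (1 : k)}

section NonSheafySubring

variable {k : Type*} [NormedField k] [IsUltrametricDist k]

theorem single_mem_nonSheafySubring_iff {w : ℝ} (hw₀ : 0 < w) (hw₁ : w ≤ 1)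
    {m : ℤ × ℤ × ℤ × ℕ} {c : k} :
    single m c ∈ nonSheafySubring k hw₀ hw₁ ↔ (m.2.2.2 ≤ 1 → ‖c‖ ≤ nonSheafyBound w m) :=
  single_mem_boundedCoeffSubring_iff

theorem single_Z_mem_nonSheafySubring_iff {w : ℝ} (hw₀ : 0 < w) (hw₁ : w ≤ 1) {c : k} :
    single (0, 0, 0, 1) c ∈ nonSheafySubring k hw₀ hw₁ ↔ ‖c‖ ≤ 1 := by
  simp [single_mem_nonSheafySubring_iff, nonSheafyBound]

variable {ϖ : k} (hϖ₀ : 0 < ‖ϖ‖) (hϖ₁ : ‖ϖ‖ ≤ 1)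

theorem nonSheafyGenerators_subset :
    nonSheafyGenerators k ϖ ⊆ (nonSheafySubring k hϖ₀ hϖ₁ : Set _) := by
  rintro _ ⟨p, q, a, e, h₀, h₁, rfl⟩
  set d := max (max (p + q + a) (p + q - a)) (max (p + a) (q - a))
  have hϖd {x : ℤ} (hx : x ≤ d) : ‖ϖ ^ d‖ ≤ ‖ϖ‖ ^ x := by
    rw [norm_zpow]
    exact zpow_right_anti₀ hϖ₀ hϖ₁ hx
  rw [smul_single', mul_one, SetLike.mem_coe, single_mem_nonSheafySubring_iff]
  intro (he : e ≤ 1)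
  obtain rfl | rfl : e = 0 ∨ e = 1 := by omega
  · obtain ⟨hp, hq⟩ := h₀ rfl
    simpa [nonSheafyBound, hp, hq] using hϖd (abs_le'.2 ⟨by omega, by omega⟩)
  · rcases h₁ rfl with hp | hq
    · exact (hϖd (by omega : a ≤ d)).trans (le_max_of_le_left (by simp [hp]))
    · exact (hϖd (by omega : -a ≤ d)).trans (le_max_of_le_right (by simp [hq]))

theorem span_nonSheafyGenerators_subset :
    (Submodule.span (valuationSubring k) (nonSheafyGenerators k ϖ) :
      Set (AddMonoidAlgebra k (ℤ × ℤ × ℤ × ℕ))) ⊆ nonSheafySubring k hϖ₀ hϖ₁ := by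
  intro x hx
  induction hx using Submodule.span_induction with
  | mem x hx => exact nonSheafyGenerators_subset hϖ₀ hϖ₁ hx
  | zero => exact zero_mem _
  | add x y _ _ hx hy => exact add_mem hx hy
  | smul c x _ hx => exact smul_mem_boundedCoeffSubring c.2 hx

theorem closure_span_nonSheafyGenerators_le :
    Subring.closure ((Submodule.span (valuationSubring k) (nonSheafyGenerators k ϖ) :
      Set (AddMonoidAlgebra k (ℤ × ℤ × ℤ × ℕ))) ∪
        {single (1, 0, 0, 0) 1, single (0, 1, 0, 0) 1}) ≤ nonSheafySubring k hϖ₀ hϖ₁ := by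
  rw [Subring.closure_le]
  refine Set.union_subset (span_nonSheafyGenerators_subset hϖ₀ hϖ₁) ?_
  rintro _ (rfl | rfl) <;> simp [single_mem_nonSheafySubring_iff, nonSheafyBound]

end NonSheafySubring

theorem Subring.mul_pow_mul_pow_mem_closure_union_singleton {R : Type*} [Ring R] {A : Subring R}
    {g y : R} (hg : g ∈ A) (hy : y ∈ A) (u : R) (i j : ℕ) :
    g * y ^ i * u ^ j ∈ Subring.closure ((A : Set R) ∪ {u}) := by
  have hA {x : R} (hx : x ∈ A) : x ∈ Subring.closure ((A : Set R) ∪ {u}) :=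
    Subring.subset_closure (Or.inl hx)
  have hu : u ∈ Subring.closure ((A : Set R) ∪ {u}) := Subring.subset_closure (Or.inr rfl)
  exact mul_mem (mul_mem (hA hg) (pow_mem (hA hy) i)) (pow_mem hu j)

theorem non_sheafy_uniform_Z_locally_zero_general
    (k : Type*) [NontriviallyNormedField k] [IsUltrametricDist k]
    (ϖ : k) (hϖ0 : 0 < ‖ϖ‖) (hϖ1 : ‖ϖ‖ < 1)
    (R₀ : Submodule (valuationSubring k) (AddMonoidAlgebra k (ℤ × ℤ × ℤ × ℕ)))
    (hR₀ : R₀ = Submodule.span (valuationSubring k)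
      {x : AddMonoidAlgebra k (ℤ × ℤ × ℤ × ℕ) | ∃ (p q a : ℤ) (e : ℕ),
        (e = 0 → 0 ≤ p ∧ 0 ≤ q) ∧ (e = 1 → 0 ≤ p ∨ 0 ≤ q) ∧
        x = ϖ ^ (max (max (p + q + a) (p + q - a)) (max (p + a) (q - a))) •
          AddMonoidAlgebra.single (p, q, a, e) (1 : k)})
    (Z : AddMonoidAlgebra k (ℤ × ℤ × ℤ × ℕ))
    (hZ : Z = AddMonoidAlgebra.single ((0 : ℤ), (0 : ℤ), (0 : ℤ), (1 : ℕ)) (1 : k))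
    (P Q T : AddMonoidAlgebra k (ℤ × ℤ × ℤ × ℕ))
    (hP : P = AddMonoidAlgebra.single ((1 : ℤ), (0 : ℤ), (0 : ℤ), (0 : ℕ)) (1 : k))
    (hQ : Q = AddMonoidAlgebra.single ((0 : ℤ), (1 : ℤ), (0 : ℤ), (0 : ℕ)) (1 : k))
    (hT : T = AddMonoidAlgebra.single ((0 : ℤ), (0 : ℤ), (1 : ℤ), (0 : ℕ)) (1 : k))
    (A₀ : Subring (AddMonoidAlgebra k (ℤ × ℤ × ℤ × ℕ)))
    (hA₀ : A₀ = Subring.closure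
      ((R₀ : Set (AddMonoidAlgebra k (ℤ × ℤ × ℤ × ℕ))) ∪ {P, Q})) :
    (∀ n : ℕ, (ϖ⁻¹) ^ n • Z ∈ Subring.closure
      ((A₀ : Set (AddMonoidAlgebra k (ℤ × ℤ × ℤ × ℕ))) ∪ {T})) ∧
    (∀ n : ℕ, (ϖ⁻¹) ^ n • Z ∈ Subring.closure
      ((A₀ : Set (AddMonoidAlgebra k (ℤ × ℤ × ℤ × ℕ))) ∪
        {AddMonoidAlgebra.single ((0 : ℤ), (0 : ℤ), (-1 : ℤ), (0 : ℕ)) (1 : k)})) ∧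
    ϖ⁻¹ • Z ∉ A₀ := by
  have hϖn (n : ℕ) : (ϖ⁻¹) ^ n = ϖ ^ (-(n : ℤ)) := by simp [zpow_neg]
  have hPA : P ∈ A₀ := hA₀ ▸ Subring.subset_closure (Or.inr (by simp))
  have hQA : Q ∈ A₀ := hA₀ ▸ Subring.subset_closure (Or.inr (by simp))
  have hgen {p q a d : ℤ} {e : ℕ} (h₀ : e = 0 → 0 ≤ p ∧ 0 ≤ q) (h₁ : e = 1 → 0 ≤ p ∨ 0 ≤ q)
      (hd : max (max (p + q + a) (p + q - a)) (max (p + a) (q - a)) = d) :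
      ϖ ^ d • single (p, q, a, e) (1 : k) ∈ A₀ :=
    hA₀ ▸ Subring.subset_closure
      (Or.inl (hR₀ ▸ Submodule.subset_span ⟨p, q, a, e, h₀, h₁, hd ▸ rfl⟩))
  refine ⟨fun n ↦ ?_, fun n ↦ ?_, fun h ↦ ?_⟩
  · rw [hϖn, hZ, smul_single_eq_smul_single_mul_pow_mul_pow _
      (m' := (0, -(2 * n : ℤ), -(n : ℤ), 1)) (u := (0, 1, 0, 0)) (v := (0, 0, 1, 0))
      (i := 2 * n) (j := n) (by ext <;> simp), ← hQ, ← hT]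
    exact Subring.mul_pow_mul_pow_mem_closure_union_singleton
      (hgen (by simp) (by simp) (by omega)) hQA _ _ _
  · rw [hϖn, hZ, smul_single_eq_smul_single_mul_pow_mul_pow _
      (m' := (-(2 * n : ℤ), 0, (n : ℤ), 1)) (u := (1, 0, 0, 0)) (v := (0, 0, -1, 0))
      (i := 2 * n) (j := n) (by ext <;> simp), ← hP]
    exact Subring.mul_pow_mul_pow_mem_closure_union_singleton
      (hgen (by simp) (by simp) (by omega)) hPA _ _ _
  · subst hA₀ hR₀ hP hQ hZ
    rw [smul_single', mul_one] at h
    have hle := (single_Z_mem_nonSheafySubring_iff hϖ0 hϖ1.le).1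
      (closure_span_nonSheafyGenerators_le hϖ0 hϖ1.le h)
    exact ((one_lt_inv₀ hϖ0).2 hϖ1).not_ge (by simpa using hle)

/-- With `R₀ ⊆ k[P,P⁻¹,Q,Q⁻¹,T,T⁻¹,Z]` as in the non-sheafy uniform
example and `A₀ = R₀[P,Q]`: for all `n ≥ 0`, `ϖ⁻ⁿZ ∈ A₀[T]` and `ϖ⁻ⁿZ ∈ A₀[T⁻¹]`,
but `ϖ⁻¹Z ∉ A₀`. -/
theorem non_sheafy_uniform_Z_locally_zero
    (k : Type*) [NontriviallyNormedField k] [IsUltrametricDist k] [CompleteSpace k]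
    (ϖ : k) (hϖ0 : 0 < ‖ϖ‖) (hϖ1 : ‖ϖ‖ < 1)
    (R₀ : Submodule (valuationSubring k) (AddMonoidAlgebra k (ℤ × ℤ × ℤ × ℕ)))
    (hR₀ : R₀ = Submodule.span (valuationSubring k)
      {x : AddMonoidAlgebra k (ℤ × ℤ × ℤ × ℕ) | ∃ (p q a : ℤ) (e : ℕ),
        (e = 0 → 0 ≤ p ∧ 0 ≤ q) ∧ (e = 1 → 0 ≤ p ∨ 0 ≤ q) ∧
        x = ϖ ^ (max (max (p + q + a) (p + q - a)) (max (p + a) (q - a))) •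
          AddMonoidAlgebra.single (p, q, a, e) (1 : k)})
    (Z : AddMonoidAlgebra k (ℤ × ℤ × ℤ × ℕ))
    (hZ : Z = AddMonoidAlgebra.single ((0 : ℤ), (0 : ℤ), (0 : ℤ), (1 : ℕ)) (1 : k))
    (P Q T : AddMonoidAlgebra k (ℤ × ℤ × ℤ × ℕ))
    (hP : P = AddMonoidAlgebra.single ((1 : ℤ), (0 : ℤ), (0 : ℤ), (0 : ℕ)) (1 : k))
    (hQ : Q = AddMonoidAlgebra.single ((0 : ℤ), (1 : ℤ), (0 : ℤ), (0 : ℕ)) (1 : k))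
    (hT : T = AddMonoidAlgebra.single ((0 : ℤ), (0 : ℤ), (1 : ℤ), (0 : ℕ)) (1 : k))
    (A₀ : Subring (AddMonoidAlgebra k (ℤ × ℤ × ℤ × ℕ)))
    (hA₀ : A₀ = Subring.closure
      ((R₀ : Set (AddMonoidAlgebra k (ℤ × ℤ × ℤ × ℕ))) ∪ {P, Q})) :
    (∀ n : ℕ, (ϖ⁻¹) ^ n • Z ∈ Subring.closure
      ((A₀ : Set (AddMonoidAlgebra k (ℤ × ℤ × ℤ × ℕ))) ∪ {T})) ∧
    (∀ n : ℕ, (ϖ⁻¹) ^ n • Z ∈ Subring.closure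
      ((A₀ : Set (AddMonoidAlgebra k (ℤ × ℤ × ℤ × ℕ))) ∪
        {AddMonoidAlgebra.single ((0 : ℤ), (0 : ℤ), (-1 : ℤ), (0 : ℕ)) (1 : k)})) ∧
    ϖ⁻¹ • Z ∉ A₀ :=
  non_sheafy_uniform_Z_locally_zero_general k ϖ hϖ0 hϖ1 R₀ hR₀ Z hZ P Q T hP hQ hT A₀ hA₀
end

section
/- Let k be a complete non-archimedean field, R = k[T,T⁻¹,Z₁,Z₂,…], and R₀ the free 𝒪_k-submodule generated by ϖᵈTᵃ∏ᵢZᵢ^{eᵢ} where d = |a| if Σeᵢ = 0, d = |a| - 2·min{Σ i·eᵢ, |a|} if Σeᵢ = 1, and d = |a| - 2·Σ i·eᵢ if Σeᵢ ≥ 2. Then R₀ is a subring of R, and for each n ≥ 1: ϖ⁻ⁿZₙ ∈ R₀[T] and ϖ⁻ⁿZₙ ∈ R₀[T⁻¹] but ϖ⁻¹Zₙ ∉ R₀. -/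
open AddMonoidAlgebra

section MonomialLattice

variable {k G : Type*} [NormedField k] [IsUltrametricDist k] [AddMonoid G]

noncomputable def monomialLattice (ϖ : k) (d : G → ℤ) :
    Submodule (valuationSubring k) (AddMonoidAlgebra k G) :=
  Submodule.span _ {x | ∃ m, x = ϖ ^ d m • single m 1}

variable {ϖ : k} {d : G → ℤ}

lemma zpow_smul_single_mem_monomialLattice (m : G) :
    ϖ ^ d m • single m (1 : k) ∈ monomialLattice ϖ d :=
  Submodule.subset_span ⟨m, rfl⟩

lemma one_mem_monomialLattice (h0 : d 0 = 0) :
    (1 : AddMonoidAlgebra k G) ∈ monomialLattice ϖ d := by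
  simpa [h0, one_def] using zpow_smul_single_mem_monomialLattice (ϖ := ϖ) (d := d) 0

lemma norm_coeff_le_of_mem_monomialLattice {x : AddMonoidAlgebra k G}
    (hx : x ∈ monomialLattice ϖ d) (m : G) : ‖x.coeff m‖ ≤ ‖ϖ‖ ^ d m := by
  induction hx using Submodule.span_induction with
  | mem x hx =>
    obtain ⟨m', rfl⟩ := hx
    classical
    rw [coeff_smul_apply, coeff_single, Finsupp.single_apply]
    split_ifs with h
    · simp [h, norm_zpow]
    · simp only [smul_zero, norm_zero]; positivity
  | zero =>
    simp only [coeff_zero, Finsupp.coe_zero, Pi.zero_apply, norm_zero]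
    positivity
  | add x y _ _ hx hy =>
    rw [coeff_add, Finsupp.add_apply]
    exact (IsUltrametricDist.norm_add_le_max _ _).trans (max_le hx hy)
  | smul c x _ hx =>
    rw [Subring.smul_def, coeff_smul_apply, smul_eq_mul, norm_mul]
    exact (mul_le_of_le_one_left (norm_nonneg _) c.2).trans hx

lemma zpow_smul_single_mul_mem_monomialLattice (hϖ0 : ϖ ≠ 0) (hϖ1 : ‖ϖ‖ ≤ 1)
    (hd : ∀ m m', d (m + m') ≤ d m + d m') (m m' : G) :
    (ϖ ^ d m • single m (1 : k)) * (ϖ ^ d m' • single m' (1 : k)) ∈ monomialLattice ϖ d := by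
  obtain ⟨j, hj⟩ := Int.eq_ofNat_of_zero_le (sub_nonneg.mpr (hd m m'))
  have hpow : ϖ ^ d m * ϖ ^ d m' = ϖ ^ j * ϖ ^ d (m + m') := by
    rw [← zpow_natCast, ← hj, ← zpow_add₀ hϖ0, ← zpow_add₀ hϖ0, sub_add_cancel]
  have hj1 : ‖ϖ ^ j‖ ≤ 1 := by rw [norm_pow]; exact pow_le_one₀ (norm_nonneg _) hϖ1
  have key : (ϖ ^ d m • single m (1 : k)) * (ϖ ^ d m' • single m' (1 : k)) =
      (⟨ϖ ^ j, hj1⟩ : valuationSubring k) • (ϖ ^ d (m + m') • single (m + m') (1 : k)) := by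
    rw [smul_mul_smul_comm, single_mul_single, mul_one, hpow, Subring.smul_def, smul_smul]
  rw [key]
  exact Submodule.smul_mem _ _ (zpow_smul_single_mem_monomialLattice _)

lemma mul_mem_monomialLattice (hϖ0 : ϖ ≠ 0) (hϖ1 : ‖ϖ‖ ≤ 1)
    (hd : ∀ m m', d (m + m') ≤ d m + d m') {x y : AddMonoidAlgebra k G}
    (hx : x ∈ monomialLattice ϖ d) (hy : y ∈ monomialLattice ϖ d) :
    x * y ∈ monomialLattice ϖ d := by
  have := Submodule.mul_mem_mul hx hy
  rw [monomialLattice, Submodule.span_mul_span] at this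
  refine Submodule.span_le.mpr ?_ this
  rintro _ ⟨_, ⟨m, rfl⟩, _, ⟨m', rfl⟩, rfl⟩
  exact zpow_smul_single_mul_mem_monomialLattice hϖ0 hϖ1 hd m m'

end MonomialLattice

def latticeExponent (a : ℤ) (s : ℕ) (w : ℤ) : ℤ :=
  if s = 0 then |a| else if s = 1 then |a| - 2 * min w |a| else |a| - 2 * w

/- The only delicate case is `s + t = 1`; there it comes down to `x ↦ x - 2 min w x` being
1-Lipschitz. -/
lemma latticeExponent_add_le (a b : ℤ) {s t : ℕ} {v w : ℤ} (hv : 0 ≤ v) (hw : 0 ≤ w) :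
    latticeExponent (a + b) (s + t) (v + w) ≤ latticeExponent a s v + latticeExponent b t w := by
  have := abs_add_le a b
  have : |a| ≤ |a + b| + |b| := by simpa using abs_add_le (a + b) (-b)
  have : |b| ≤ |a + b| + |a| := by simpa using abs_add_le (a + b) (-a)
  unfold latticeExponent
  split_ifs <;> omega

open Finsupp in
noncomputable def glueExponent (m : ℤ × (ℕ+ →₀ ℕ)) : ℤ :=
  latticeExponent m.1 (degree m.2) (weight (fun i : ℕ+ => (i : ℤ)) m.2)

lemma glueExponent_mk (a : ℤ) (e : ℕ+ →₀ ℕ) :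
    glueExponent (a, e) = if e.sum (fun _ m => m) = 0 then |a|
        else if e.sum (fun _ m => m) = 1 then
          |a| - 2 * min (e.sum fun i m => (i : ℤ) * m) |a|
        else |a| - 2 * e.sum fun i m => (i : ℤ) * m := by
  simp only [glueExponent, latticeExponent, Finsupp.weight_apply, nsmul_eq_mul, mul_comm]
  rfl

lemma glueExponent_add_le (m m' : ℤ × (ℕ+ →₀ ℕ)) :
    glueExponent (m + m') ≤ glueExponent m + glueExponent m' := by
  have weight_nonneg (e : ℕ+ →₀ ℕ) : 0 ≤ Finsupp.weight (fun i : ℕ+ => (i : ℤ)) e := by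
    rw [Finsupp.weight_apply]; exact Finset.sum_nonneg fun _ _ => by positivity
  simp only [glueExponent, Prod.fst_add, Prod.snd_add, map_add]
  exact latticeExponent_add_le _ _ (weight_nonneg _) (weight_nonneg _)

lemma glueExponent_zero : glueExponent 0 = 0 := by
  simp [glueExponent, latticeExponent]

lemma glueExponent_single (a : ℤ) (n : ℕ+) :
    glueExponent (a, Finsupp.single n 1) = |a| - 2 * min (n : ℤ) |a| := by
  simp [glueExponent, latticeExponent, Finsupp.weight_apply]

section GlueingExample

variable {k : Type*} [NormedField k] [IsUltrametricDist k] {ϖ : k}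

lemma inv_pow_smul_single_mem_closure_union (n : ℕ+) {u : ℤ} (hu : |u| = 1) :
    (ϖ⁻¹) ^ (n : ℕ) • single ((0 : ℤ), Finsupp.single n 1) (1 : k) ∈
      Subring.closure ((monomialLattice ϖ glueExponent : Set _) ∪ {single (u, 0) 1}) := by
  have hexp : glueExponent (-(u * n), Finsupp.single n 1) = -(n : ℤ) := by
    rw [glueExponent_single, abs_neg, abs_mul, hu, one_mul, Nat.abs_cast, min_self]
    ring
  have key : (ϖ⁻¹) ^ (n : ℕ) • single ((0 : ℤ), Finsupp.single n 1) (1 : k) =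
      (ϖ ^ glueExponent (-(u * n), Finsupp.single n 1) •
          single (-(u * n), Finsupp.single n 1) 1) * single (u, 0) 1 ^ (n : ℕ) := by
    rw [hexp, smul_mul_assoc, single_pow, single_mul_single, zpow_neg, zpow_natCast, inv_pow]
    simp [mul_comm]
  rw [key]
  exact Subring.mul_mem _ (Subring.subset_closure (.inl (zpow_smul_single_mem_monomialLattice _)))
    (Subring.pow_mem _ (Subring.subset_closure (.inr rfl)) _)

lemma inv_smul_single_notMem_monomialLattice (hϖ0 : 0 < ‖ϖ‖) (hϖ1 : ‖ϖ‖ < 1) (n : ℕ+) :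
    ϖ⁻¹ • single ((0 : ℤ), Finsupp.single n 1) (1 : k) ∉ monomialLattice ϖ glueExponent := by
  intro h
  have := norm_coeff_le_of_mem_monomialLattice h ((0 : ℤ), Finsupp.single n 1)
  rw [glueExponent_single, abs_zero, min_eq_right (by positivity)] at this
  simp only [coeff_smul_apply, coeff_single, Finsupp.single_eq_same, smul_eq_mul, mul_one,
    norm_inv] at this
  exact (one_lt_inv₀ hϖ0).mpr hϖ1 |>.not_ge (by simpa using this)

end GlueingExample

theorem glueing_fails_example_general
    (k : Type*) [NontriviallyNormedField k] [IsUltrametricDist k]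
    (ϖ : k) (hϖ0 : 0 < ‖ϖ‖) (hϖ1 : ‖ϖ‖ < 1)
    (d : ℤ → (ℕ+ →₀ ℕ) → ℤ)
    (hd : ∀ (a : ℤ) (e : ℕ+ →₀ ℕ),
      d a e = if e.sum (fun _ m => m) = 0 then |a|
        else if e.sum (fun _ m => m) = 1 then
          |a| - 2 * min (e.sum fun i m => (i : ℤ) * m) |a|
        else |a| - 2 * e.sum fun i m => (i : ℤ) * m)
    (R₀ : Submodule (valuationSubring k) (AddMonoidAlgebra k (ℤ × (ℕ+ →₀ ℕ))))
    (hR₀ : R₀ = Submodule.span (valuationSubring k)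
      {x : AddMonoidAlgebra k (ℤ × (ℕ+ →₀ ℕ)) | ∃ (a : ℤ) (e : ℕ+ →₀ ℕ),
        x = ϖ ^ d a e • AddMonoidAlgebra.single (a, e) (1 : k)})
    (Z : ℕ+ → AddMonoidAlgebra k (ℤ × (ℕ+ →₀ ℕ)))
    (hZ : ∀ n : ℕ+, Z n = AddMonoidAlgebra.single ((0 : ℤ), Finsupp.single n 1) (1 : k))
    (T Tinv : AddMonoidAlgebra k (ℤ × (ℕ+ →₀ ℕ)))
    (hT : T = AddMonoidAlgebra.single ((1 : ℤ), (0 : ℕ+ →₀ ℕ)) (1 : k))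
    (hTinv : Tinv = AddMonoidAlgebra.single ((-1 : ℤ), (0 : ℕ+ →₀ ℕ)) (1 : k)) :
    (1 : AddMonoidAlgebra k (ℤ × (ℕ+ →₀ ℕ))) ∈ R₀ ∧
    (∀ x ∈ R₀, ∀ y ∈ R₀, x * y ∈ R₀) ∧
    ∀ n : ℕ+,
      (ϖ⁻¹) ^ (n : ℕ) • Z n ∈ Subring.closure
        ((R₀ : Set (AddMonoidAlgebra k (ℤ × (ℕ+ →₀ ℕ)))) ∪ {T}) ∧
      (ϖ⁻¹) ^ (n : ℕ) • Z n ∈ Subring.closure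
        ((R₀ : Set (AddMonoidAlgebra k (ℤ × (ℕ+ →₀ ℕ)))) ∪ {Tinv}) ∧
      ϖ⁻¹ • Z n ∉ R₀ := by
  have hϖ : ϖ ≠ 0 := norm_pos_iff.mp hϖ0
  obtain rfl : d = fun a e => glueExponent (a, e) :=
    funext₂ fun a e => (hd a e).trans (glueExponent_mk a e).symm
  obtain rfl : R₀ = monomialLattice ϖ glueExponent := by
    simp only [hR₀, monomialLattice, Prod.exists]
  obtain rfl : Z = _ := funext hZ
  subst hT hTinv
  refine ⟨one_mem_monomialLattice glueExponent_zero,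
    fun x hx y hy => mul_mem_monomialLattice hϖ hϖ1.le glueExponent_add_le hx hy, fun n => ?_⟩
  exact ⟨inv_pow_smul_single_mem_closure_union n abs_one,
    inv_pow_smul_single_mem_closure_union n (by norm_num),
    inv_smul_single_notMem_monomialLattice hϖ0 hϖ1 n⟩

/-- Let `R = k[T,T⁻¹,Z₁,Z₂,…]` (modelled as the monoid algebra on
`ℤ × (ℕ+ →₀ ℕ)`) and `R₀` the free `𝒪_k`-submodule generated by `ϖᵈTᵃ∏ᵢZᵢ^{eᵢ}` where
`d = |a|` if `Σeᵢ = 0`, `d = |a| - 2·min{Σ i·eᵢ, |a|}` if `Σeᵢ = 1`, and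
`d = |a| - 2·Σ i·eᵢ` if `Σeᵢ ≥ 2`. Then `R₀` is a subring of `R`, and for each `n ≥ 1`,
`ϖ⁻ⁿZₙ ∈ R₀[T]` and `ϖ⁻ⁿZₙ ∈ R₀[T⁻¹]` but `ϖ⁻¹Zₙ ∉ R₀`. -/
theorem glueing_fails_example
    (k : Type*) [NontriviallyNormedField k] [IsUltrametricDist k] [CompleteSpace k]
    (ϖ : k) (hϖ0 : 0 < ‖ϖ‖) (hϖ1 : ‖ϖ‖ < 1)
    (d : ℤ → (ℕ+ →₀ ℕ) → ℤ)
    (hd : ∀ (a : ℤ) (e : ℕ+ →₀ ℕ),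
      d a e = if e.sum (fun _ m => m) = 0 then |a|
        else if e.sum (fun _ m => m) = 1 then
          |a| - 2 * min (e.sum fun i m => (i : ℤ) * m) |a|
        else |a| - 2 * e.sum fun i m => (i : ℤ) * m)
    (R₀ : Submodule (valuationSubring k) (AddMonoidAlgebra k (ℤ × (ℕ+ →₀ ℕ))))
    (hR₀ : R₀ = Submodule.span (valuationSubring k)
      {x : AddMonoidAlgebra k (ℤ × (ℕ+ →₀ ℕ)) | ∃ (a : ℤ) (e : ℕ+ →₀ ℕ),
        x = ϖ ^ d a e • AddMonoidAlgebra.single (a, e) (1 : k)})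
    (Z : ℕ+ → AddMonoidAlgebra k (ℤ × (ℕ+ →₀ ℕ)))
    (hZ : ∀ n : ℕ+, Z n = AddMonoidAlgebra.single ((0 : ℤ), Finsupp.single n 1) (1 : k))
    (T Tinv : AddMonoidAlgebra k (ℤ × (ℕ+ →₀ ℕ)))
    (hT : T = AddMonoidAlgebra.single ((1 : ℤ), (0 : ℕ+ →₀ ℕ)) (1 : k))
    (hTinv : Tinv = AddMonoidAlgebra.single ((-1 : ℤ), (0 : ℕ+ →₀ ℕ)) (1 : k)) :
    (1 : AddMonoidAlgebra k (ℤ × (ℕ+ →₀ ℕ))) ∈ R₀ ∧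
    (∀ x ∈ R₀, ∀ y ∈ R₀, x * y ∈ R₀) ∧
    ∀ n : ℕ+,
      (ϖ⁻¹) ^ (n : ℕ) • Z n ∈ Subring.closure
        ((R₀ : Set (AddMonoidAlgebra k (ℤ × (ℕ+ →₀ ℕ)))) ∪ {T}) ∧
      (ϖ⁻¹) ^ (n : ℕ) • Z n ∈ Subring.closure
        ((R₀ : Set (AddMonoidAlgebra k (ℤ × (ℕ+ →₀ ℕ)))) ∪ {Tinv}) ∧
      ϖ⁻¹ • Z n ∉ R₀ :=
  glueing_fails_example_general k ϖ hϖ0 hϖ1 d hd R₀ hR₀ Z hZ T Tinv hT hTinv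
end
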